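/- arXiv:2501.09199 — 8 statements merged into one kernel-verified Lean document; each statement's English description precedes it below -/
import Mathlib

section
/- For every t ∈ [0,1), with s = √(1−t²), one has ∫_{−s}^{s} (1/π)·√(1−t²−x²)/(1−x²) dx = 1 − t; that is, the measure μ_t has total mass 1 − t. -/
open Real Set MeasureTheory intervalIntegral

/-- Integrability of `√(1-x²)/(1-x²)` on `[-1,1]` (improper at the endpoints). -/
lemma muT_aux_integrable :
    IntervalIntegrable (fun x : ℝ => Real.sqrt (1 - x ^ 2) / (1 - x ^ 2))
      volume (-1) 1 := by
  have hr : (-1 : ℝ) < -(1/2) := by norm_num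
  have hb1 : IntervalIntegrable (fun x : ℝ => (1 - x) ^ (-(1/2) : ℝ)) volume (-1) 1 := by
    have h := (intervalIntegral.intervalIntegrable_rpow' (a := 0) (b := 2) hr).comp_sub_left 1
    norm_num at h
    exact h.symm
  have hb2 : IntervalIntegrable (fun x : ℝ => (1 + x) ^ (-(1/2) : ℝ)) volume (-1) 1 := by
    have h := (intervalIntegral.intervalIntegrable_rpow' (a := 0) (b := 2) hr).comp_add_left 1
    norm_num at h
    simpa [add_comm] using h
  have hbound := hb1.add hb2
  rw [intervalIntegrable_iff_integrableOn_Ioc_of_le (by norm_num)] at hbound ⊢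
  apply MeasureTheory.Integrable.mono hbound
  · apply Measurable.aestronglyMeasurable
    fun_prop
  · rw [ae_restrict_iff' measurableSet_Ioc]
    filter_upwards with x hx
    obtain ⟨hx1, hx2⟩ := hx
    have h1 : (0:ℝ) ≤ (1 - x) ^ (-(1/2) : ℝ) := Real.rpow_nonneg (by linarith) _
    have h2 : (0:ℝ) ≤ (1 + x) ^ (-(1/2) : ℝ) := Real.rpow_nonneg (by linarith) _
    rcases eq_or_lt_of_le hx2 with h | h
    · subst h
      simp only [one_pow, sub_self, Real.sqrt_zero, div_zero, norm_zero]
      rw [Real.norm_eq_abs, abs_of_nonneg (by linarith)]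
      linarith
    · have hx2' : (0:ℝ) < 1 - x := by linarith
      have hx1' : (0:ℝ) < 1 + x := by linarith
      have hxx : (0:ℝ) < 1 - x ^ 2 := by nlinarith
      have key : Real.sqrt (1 - x ^ 2) / (1 - x ^ 2) = 1 / Real.sqrt (1 - x ^ 2) :=
        Real.sqrt_div_self'
      have hfac : (1 : ℝ) - x ^ 2 = (1 - x) * (1 + x) := by ring
      have hsq : Real.sqrt (1 - x ^ 2) = Real.sqrt (1 - x) * Real.sqrt (1 + x) := by
        rw [hfac, Real.sqrt_mul (by linarith)]
      have h1' : (1 - x) ^ (-(1/2) : ℝ) = 1 / Real.sqrt (1 - x) := by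
        rw [Real.rpow_neg hx2'.le, ← Real.sqrt_eq_rpow, one_div]
      have h2' : (1 + x) ^ (-(1/2) : ℝ) = 1 / Real.sqrt (1 + x) := by
        rw [Real.rpow_neg hx1'.le, ← Real.sqrt_eq_rpow, one_div]
      rw [Real.norm_eq_abs, Real.norm_eq_abs, key, hsq,
        abs_of_nonneg (by positivity), abs_of_nonneg (by positivity), h1', h2']
      have hs1 : (0:ℝ) < Real.sqrt (1 - x) := Real.sqrt_pos.mpr hx2'
      have hs2 : (0:ℝ) < Real.sqrt (1 + x) := Real.sqrt_pos.mpr hx1'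
      rcases le_or_gt 0 x with hx0 | hx0
      · have : (1:ℝ) ≤ Real.sqrt (1 + x) := by
          nlinarith [Real.sq_sqrt hx1'.le, hs2]
        have : 1 / (Real.sqrt (1 - x) * Real.sqrt (1 + x)) ≤ 1 / Real.sqrt (1 - x) := by
          apply one_div_le_one_div_of_le hs1
          nlinarith
        have hpos : (0:ℝ) ≤ 1 / Real.sqrt (1 + x) := by positivity
        linarith
      · have : (1:ℝ) ≤ Real.sqrt (1 - x) := by
          nlinarith [Real.sq_sqrt hx2'.le, hs1]
        have : 1 / (Real.sqrt (1 - x) * Real.sqrt (1 + x)) ≤ 1 / Real.sqrt (1 + x) := by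
          apply one_div_le_one_div_of_le hs2
          nlinarith
        have hpos : (0:ℝ) ≤ 1 / Real.sqrt (1 - x) := by positivity
        linarith

set_option maxHeartbeats 1000000 in
/-- **Total mass of `μ_t`.** For `t ∈ [0,1)` and `s = √(1-t²)`, the density
`(1/π)·√(1-t²-x²)/(1-x²)` of `μ_t` integrates over `[-s,s]` to `1-t`. -/
theorem muT_total_mass (t : ℝ) (ht : t ∈ Set.Ico (0 : ℝ) 1)
    (s : ℝ) (hs : s = Real.sqrt (1 - t ^ 2)) :
    ∫ x in (-s)..s, 1 / Real.pi * Real.sqrt (1 - t ^ 2 - x ^ 2) / (1 - x ^ 2) = 1 - t := by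
  obtain ⟨ht0, ht1⟩ := ht
  have hπ : (0:ℝ) < π := Real.pi_pos
  have ht2 : (0:ℝ) < 1 - t ^ 2 := by nlinarith
  have hs0 : 0 < s := hs ▸ Real.sqrt_pos.mpr ht2
  have hs2 : s ^ 2 = 1 - t ^ 2 := by rw [hs, Real.sq_sqrt ht2.le]
  have key : ∫ x in (-s)..s, Real.sqrt (s ^ 2 - x ^ 2) / (1 - x ^ 2) = π * (1 - t) := by
    rcases eq_or_lt_of_le ht0 with h0 | h0
    · -- t = 0
      have ht' : t = 0 := h0.symm
      subst ht'
      have hs1 : s = 1 := by rw [hs]; norm_num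
      subst hs1
      have hderiv : ∀ x ∈ Set.Ioo (-1:ℝ) 1,
          HasDerivAt Real.arcsin (Real.sqrt ((1:ℝ) ^ 2 - x ^ 2) / (1 - x ^ 2)) x := by
        intro x hx
        have hx1 : x ≠ -1 := by intro h; rw [h] at hx; exact absurd hx.1 (lt_irrefl _)
        have hx2 : x ≠ 1 := by intro h; rw [h] at hx; exact absurd hx.2 (lt_irrefl _)
        have h := Real.hasDerivAt_arcsin hx1 hx2
        convert h using 1
        rw [one_pow, ← Real.sqrt_div_self']
      have := intervalIntegral.integral_eq_sub_of_hasDerivAt_of_le (by norm_num)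
        Real.continuous_arcsin.continuousOn hderiv
        (by simpa using muT_aux_integrable)
      rw [this, Real.arcsin_one, Real.arcsin_neg_one]
      ring
    · -- 0 < t
      set F : ℝ → ℝ := fun x =>
        Real.arcsin (x / s) - t * Real.arcsin (t * x / (s * Real.sqrt (1 - x ^ 2)))
        with hF
      have hslt1 : s < 1 := by nlinarith
      have hcont : ContinuousOn F (Set.Icc (-s) s) := by
        apply ContinuousOn.sub
        · exact Real.continuous_arcsin.comp_continuousOn
            (continuousOn_id.div_const s)
        · apply ContinuousOn.mul continuousOn_const
          apply Real.continuous_arcsin.comp_continuousOn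
          apply ContinuousOn.div
          · exact (continuous_const.mul continuous_id).continuousOn
          · exact (continuous_const.mul (Real.continuous_sqrt.comp
              (continuous_const.sub (continuous_pow 2)))).continuousOn
          · intro x hx
            have hx2 : x ^ 2 ≤ s ^ 2 := sq_le_sq' hx.1 hx.2
            have h1x : (0:ℝ) < 1 - x ^ 2 := by nlinarith
            have : (0:ℝ) < Real.sqrt (1 - x ^ 2) := Real.sqrt_pos.mpr h1x
            positivity
      have hderiv : ∀ x ∈ Set.Ioo (-s) s,
          HasDerivAt F (Real.sqrt (s ^ 2 - x ^ 2) / (1 - x ^ 2)) x := by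
        intro x hx
        have hx2 : x ^ 2 < s ^ 2 := sq_lt_sq' hx.1 hx.2
        have h1x : (0:ℝ) < 1 - x ^ 2 := by nlinarith
        have hsx : (0:ℝ) < s ^ 2 - x ^ 2 := by nlinarith
        set a := Real.sqrt (s ^ 2 - x ^ 2) with ha
        set b := Real.sqrt (1 - x ^ 2) with hb
        have ha0 : 0 < a := Real.sqrt_pos.mpr hsx
        have hb0 : 0 < b := Real.sqrt_pos.mpr h1x
        have ha2 : a ^ 2 = s ^ 2 - x ^ 2 := Real.sq_sqrt hsx.le
        have hb2 : b ^ 2 = 1 - x ^ 2 := Real.sq_sqrt h1x.le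
        -- first summand
        have d1 : HasDerivAt (fun y => Real.arcsin (y / s)) (1 / a) x := by
          have hne1 : x / s ≠ -1 := by
            rw [ne_eq, div_eq_iff hs0.ne']
            intro h; nlinarith
          have hne2 : x / s ≠ 1 := by
            rw [ne_eq, div_eq_iff hs0.ne']
            intro h; nlinarith
          have h := (Real.hasDerivAt_arcsin hne1 hne2).comp x
            ((hasDerivAt_id x).div_const s)
          refine h.congr_deriv ?_
          symm
          have h1 : (1:ℝ) - (x / s) ^ 2 = (s ^ 2 - x ^ 2) / s ^ 2 := by
            field_simp
          rw [h1, Real.sqrt_div hsx.le, Real.sqrt_sq hs0.le, ← ha]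
          field_simp
        -- derivative of the inner function of the second summand
        have dsq : HasDerivAt (fun y : ℝ => Real.sqrt (1 - y ^ 2)) (-x / b) x := by
          have hpoly : HasDerivAt (fun y : ℝ => 1 - y ^ 2) (-(2 * x)) x := by
            have := ((hasDerivAt_pow 2 x).const_sub 1)
            simpa using this
          have h := (Real.hasDerivAt_sqrt h1x.ne').comp x hpoly
          refine h.congr_deriv ?_
          symm
          rw [← hb]
          field_simp
        have dv : HasDerivAt (fun y => t * y / (s * Real.sqrt (1 - y ^ 2)))
            (t / (s * (1 - x ^ 2) * b)) x := by
          have hnum : HasDerivAt (fun y : ℝ => t * y) t x := by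
            simpa using (hasDerivAt_id x).const_mul t
          have hden : HasDerivAt (fun y : ℝ => s * Real.sqrt (1 - y ^ 2))
              (s * (-x / b)) x := dsq.const_mul s
          have hdne : s * Real.sqrt (1 - x ^ 2) ≠ 0 := by
            rw [← hb]; positivity
          have h := hnum.div hden hdne
          refine h.congr_deriv ?_
          symm
          rw [← hb]
          rw [div_eq_div_iff (by positivity) (by positivity)]
          field_simp
          linear_combination x^2 * hb2
        have hv2 : (t * x / (s * b)) ^ 2 < 1 := by
          rw [div_pow, div_lt_one (by positivity)]
          have : (s * b) ^ 2 = s ^ 2 * (1 - x ^ 2) := by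
            rw [mul_pow, hb2]
          rw [this]
          nlinarith
        have d2 : HasDerivAt (fun y => Real.arcsin (t * y / (s * Real.sqrt (1 - y ^ 2))))
            (t / ((1 - x ^ 2) * a)) x := by
          have hne1 : t * x / (s * b) ≠ -1 := by
            intro h
            rw [h] at hv2; norm_num at hv2
          have hne2 : t * x / (s * b) ≠ 1 := by
            intro h
            rw [h] at hv2; norm_num at hv2
          have harcsin := Real.hasDerivAt_arcsin hne1 hne2
          have h := harcsin.comp x (by simpa [← hb] using dv)
          have hb' : Real.sqrt (1 - x ^ 2) = b := hb.symm
          refine h.congr_deriv ?_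
          symm
          have h1 : (1:ℝ) - (t * x / (s * b)) ^ 2 = (s ^ 2 - x ^ 2) / (s ^ 2 * b ^ 2) := by
            rw [hb2]
            field_simp
            linear_combination (x^2*t^2) * hb2 - (x^2*b^2) * hs2
          rw [h1, Real.sqrt_div hsx.le, ← ha, Real.sqrt_mul (sq_nonneg s),
            Real.sqrt_sq hs0.le, Real.sqrt_sq hb0.le, one_div_div]
          field_simp
        have hFd := d1.sub ((d2.const_mul t))
        refine hFd.congr_deriv ?_
        symm
        have ha2' : a ^ 2 = 1 - x ^ 2 - t ^ 2 := by rw [ha2, hs2]; ring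
        field_simp
        linear_combination ha2'
      have hint : IntervalIntegrable (fun x => Real.sqrt (s ^ 2 - x ^ 2) / (1 - x ^ 2))
          volume (-s) s := by
        apply ContinuousOn.intervalIntegrable
        apply ContinuousOn.div
        · exact (Real.continuous_sqrt.comp (continuous_const.sub (continuous_pow 2))).continuousOn
        · exact (continuous_const.sub (continuous_pow 2)).continuousOn
        · intro x hx
          rw [Set.uIcc_of_le (by linarith)] at hx
          have hx2 : x ^ 2 ≤ s ^ 2 := sq_le_sq' hx.1 hx.2
          have : (0:ℝ) < 1 - x ^ 2 := by nlinarith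
          exact this.ne'
      have heval := intervalIntegral.integral_eq_sub_of_hasDerivAt_of_le
        (by linarith) hcont hderiv hint
      rw [heval]
      simp only [hF]
      have hsqs : Real.sqrt (1 - s ^ 2) = t := by
        rw [hs2]
        simpa using Real.sqrt_sq ht0
      have hss : s / s = 1 := div_self hs0.ne'
      have hns : -s / s = -1 := by rw [neg_div, hss]
      have hinner : t * s / (s * Real.sqrt (1 - s ^ 2)) = 1 := by
        rw [hsqs]
        field_simp
      have hinner' : t * -s / (s * Real.sqrt (1 - (-s) ^ 2)) = -1 := by
        rw [neg_sq, hsqs]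
        field_simp
      rw [hss, hns, hinner, hinner', Real.arcsin_one, Real.arcsin_neg_one]
      ring
  have hrw : ∀ x : ℝ, 1 / π * Real.sqrt (1 - t ^ 2 - x ^ 2) / (1 - x ^ 2)
      = 1 / π * (Real.sqrt (s ^ 2 - x ^ 2) / (1 - x ^ 2)) := by
    intro x
    rw [hs2, mul_div_assoc]
  simp_rw [hrw]
  rw [intervalIntegral.integral_const_mul, key]
  field_simp
end

section
/- For every z ∈ ℂ \ [−1,1], the logarithmic potential of the arcsine measure satisfies ∫_{−1}^{1} log(1/|z−y|)·(1/(π√(1−y²))) dy = log 2 − log|z + √(z²−1)|, where √(z²−1) denotes the branch of the square root on ℂ \ [−1,1] that is positive for z > 1 (so that |z + √(z²−1)| > 1). -/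
/-!
The substitution `y = cos θ` turns the arcsine average into the average of `log ‖z - Re ζ‖` over
the unit circle. For `Φ = z + w` one has `Φ² + 1 = 2zΦ`, hence `2Φ (z - Re ζ) = (ζ - Φ)(ζ⁻¹ - Φ)`
when `‖ζ‖ = 1`. Since `‖Φ‖ > 1`, the function `log ‖· - Φ‖` is harmonic on the closed unit disc, so
both factors contribute the circle average `log ‖Φ‖` (the second after `ζ ↦ ζ⁻¹`), leaving
`log ‖Φ‖ - log 2`.
-/

open MeasureTheory Real Set

section Substitution

variable {E : Type*} [NormedAddCommGroup E] [NormedSpace ℝ E]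

theorem Real.integral_inv_sqrt_one_sub_sq_smul_eq_integral_comp_cos (g : ℝ → E) :
    ∫ y in (-1 : ℝ)..1, (√(1 - y ^ 2))⁻¹ • g y = ∫ θ in 0..π, g (cos θ) := by
  have himage : cos '' Ioo 0 π = Ioo (-1) 1 := cosPartialHomeomorph.image_source_eq_target
  rw [intervalIntegral.integral_of_le (by norm_num), intervalIntegral.integral_of_le pi_pos.le,
    integral_Ioc_eq_integral_Ioo, integral_Ioc_eq_integral_Ioo, ← himage,
    integral_image_eq_integral_abs_deriv_smul measurableSet_Ioo
      (fun θ _ => (hasDerivAt_cos θ).hasDerivWithinAt) (injOn_cos.mono Ioo_subset_Icc_self)]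
  refine setIntegral_congr_fun measurableSet_Ioo fun θ hθ => ?_
  have hsin : 0 < sin θ := sin_pos_of_pos_of_lt_pi hθ.1 hθ.2
  simp only [abs_neg, abs_of_pos hsin,
    ← sin_eq_sqrt_one_sub_cos_sq hθ.1.le hθ.2.le, smul_smul, mul_inv_cancel₀ hsin.ne', one_smul]

theorem Real.integral_comp_cos_zero_two_pi (f : ℝ → E) :
    ∫ θ in 0..2 * π, f (cos θ) = (2 : ℝ) • ∫ θ in 0..π, f (cos θ) := by
  have hreflect : ∀ θ, f (cos (2 * π - θ)) = f (cos θ) := fun θ => by rw [cos_two_pi_sub]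
  by_cases hf : IntervalIntegrable (fun θ => f (cos θ)) volume 0 π
  · have hf' : IntervalIntegrable (fun θ => f (cos θ)) volume π (2 * π) := by
      have h := (hf.comp_sub_left (2 * π)).symm
      simp only [hreflect, sub_zero, show 2 * π - π = π by ring] at h
      exact h
    have hsecond : ∫ θ in π..2 * π, f (cos θ) = ∫ θ in 0..π, f (cos θ) := by
      have h := intervalIntegral.integral_comp_sub_left (fun θ => f (cos θ)) (2 * π)
        (a := 0) (b := π)
      simp only [hreflect, sub_zero, show 2 * π - π = π by ring] at h
      exact h.symm
    rw [← intervalIntegral.integral_add_adjacent_intervals hf hf', hsecond, two_smul]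
  · have hf' : ¬IntervalIntegrable (fun θ => f (cos θ)) volume 0 (2 * π) := fun h =>
      hf (h.mono_set (uIcc_subset_uIcc_left (by simp [uIcc_of_le, two_mul, pi_pos.le])))
    rw [intervalIntegral.integral_undef hf, intervalIntegral.integral_undef hf', smul_zero]

end Substitution

theorem Complex.re_eq_add_inv_div_two {ζ : ℂ} (hζ : ‖ζ‖ = 1) : (ζ.re : ℂ) = (ζ + ζ⁻¹) / 2 := by
  rw [RCLike.inv_eq_conj hζ, Complex.add_conj]
  push_cast
  ring

theorem log_norm_sub_re_of_norm_eq_one {z Φ ζ : ℂ} (hΦ : Φ ^ 2 + 1 = 2 * z * Φ) (hΦ1 : 1 < ‖Φ‖)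
    (hζ : ‖ζ‖ = 1) :
    log ‖z - ζ.re‖ = log ‖ζ - Φ‖ + log ‖ζ⁻¹ - Φ‖ - log (2 * ‖Φ‖) := by
  have hζ0 : ζ ≠ 0 := norm_ne_zero_iff.mp (by simp [hζ])
  have hne : ∀ {u : ℂ}, ‖u‖ = 1 → ‖u - Φ‖ ≠ 0 := fun hu h => by
    rw [norm_eq_zero, sub_eq_zero] at h
    rw [h] at hu
    linarith
  have hζinv : ‖ζ⁻¹‖ = 1 := by simp [hζ]
  have hfactor : (ζ - Φ) * (ζ⁻¹ - Φ) = 2 * Φ * (z - ζ.re) := by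
    rw [Complex.re_eq_add_inv_div_two hζ]
    field_simp
    linear_combination ζ * hΦ
  have hnorm : ‖z - ζ.re‖ = ‖ζ - Φ‖ * ‖ζ⁻¹ - Φ‖ / (2 * ‖Φ‖) := by
    rw [← norm_mul, hfactor, norm_mul, norm_mul, Complex.norm_two]
    field_simp
  rw [hnorm, log_div (mul_ne_zero (hne hζ) (hne hζinv)) (by positivity),
    log_mul (hne hζ) (hne hζinv)]

theorem circleAverage_log_norm_sub_re {z Φ : ℂ} (hΦ : Φ ^ 2 + 1 = 2 * z * Φ) (hΦ1 : 1 < ‖Φ‖) :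
    circleAverage (fun ζ => log ‖z - ζ.re‖) 0 1 = log ‖Φ‖ - log 2 := by
  have hinv : CircleIntegrable (fun ζ => log ‖ζ⁻¹ - Φ‖) 0 1 :=
    MeromorphicOn.circleIntegrable_log_norm fun _ _ => by fun_prop
  rw [circleAverage_congr_sphere (f₂ := fun ζ => log ‖ζ - Φ‖ + log ‖ζ⁻¹ - Φ‖ - log (2 * ‖Φ‖))
      fun ζ hζ => log_norm_sub_re_of_norm_eq_one hΦ hΦ1 (by simpa using hζ),
    circleAverage_fun_sub (f₁ := fun ζ => log ‖ζ - Φ‖ + log ‖ζ⁻¹ - Φ‖)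
      ((circleIntegrable_log_norm_sub_const 1).add hinv)
      (circleIntegrable_const _ _ _),
    circleAverage_fun_add (circleIntegrable_log_norm_sub_const 1) hinv,
    circleAverage_zero_one_congr_inv (f := fun ζ => log ‖ζ - Φ‖),
    circleAverage_log_norm_sub_const₂ hΦ1, circleAverage_const,
    log_mul two_ne_zero (by positivity)]
  ring

theorem arcsine_potential_outside_general (z : ℂ)
    (w : ℂ) (hw : w ^ 2 = z ^ 2 - 1) (hbranch : 1 < ‖z + w‖) :
    ∫ y in (-1 : ℝ)..1,
        Real.log (1 / ‖z - (y : ℂ)‖) * (1 / (Real.pi * Real.sqrt (1 - y ^ 2)))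
      = Real.log 2 - Real.log ‖z + w‖ := by
  have hΦ : (z + w) ^ 2 + 1 = 2 * z * (z + w) := by linear_combination hw
  calc ∫ y in (-1 : ℝ)..1, log (1 / ‖z - y‖) * (1 / (π * √(1 - y ^ 2)))
      = -π⁻¹ * ∫ y in (-1 : ℝ)..1, (√(1 - y ^ 2))⁻¹ • log ‖z - y‖ := by
        rw [← intervalIntegral.integral_const_mul]
        congr 1 with y
        rw [one_div, log_inv, smul_eq_mul]
        field_simp
    _ = -((2 * π)⁻¹ • ∫ θ in 0..2 * π, log ‖z - cos θ‖) := by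
        rw [integral_inv_sqrt_one_sub_sq_smul_eq_integral_comp_cos,
          integral_comp_cos_zero_two_pi (fun y : ℝ => log ‖z - y‖), smul_smul,
          smul_eq_mul]
        field_simp
    _ = -circleAverage (fun ζ => log ‖z - ζ.re‖) 0 1 := by
        simp only [circleAverage_def, circleMap_zero, Complex.ofReal_one, one_mul,
          Complex.exp_ofReal_mul_I_re]
    _ = log 2 - log ‖z + w‖ := by
        rw [circleAverage_log_norm_sub_re hΦ hbranch]
        ring

/-- **Logarithmic potential of the arcsine measure off `[-1,1]`.** For `z ∈ ℂ \ [-1,1]`,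
`U^{μ₀}(z) = log 2 − log|Φ(z)|`, where `Φ(z) = z + √(z²−1)` and the branch of the square
root (here `w`, with `w² = z²−1`) is the one for which `|z + w| > 1`. -/
theorem arcsine_potential_outside (z : ℂ) (hz : z ∉ Complex.ofReal '' Set.Icc (-1 : ℝ) 1)
    (w : ℂ) (hw : w ^ 2 = z ^ 2 - 1) (hbranch : 1 < ‖z + w‖) :
    ∫ y in (-1 : ℝ)..1,
        Real.log (1 / ‖z - (y : ℂ)‖) * (1 / (Real.pi * Real.sqrt (1 - y ^ 2)))
      = Real.log 2 - Real.log ‖z + w‖ :=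
  arcsine_potential_outside_general z w hw hbranch
end

section
/- For every x ∈ [−1,1], the logarithmic potential of the arcsine measure is constant: ∫_{−1}^{1} log(1/|x−y|)·(1/(π√(1−y²))) dy = log 2. -/
open Real MeasureTheory Set intervalIntegral

namespace ArcsinePotentialAux

noncomputable def f : ℝ → ℝ := fun θ => Real.log |Real.sin θ|

lemma f_meas : Measurable f :=
  Real.measurable_log.comp Real.continuous_sin.measurable.abs

lemma f_even (x : ℝ) : f (-x) = f x := by simp [f, Real.sin_neg]

lemma f_periodic : Function.Periodic f π := fun x => by
  simp [f, Real.sin_add_pi]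

lemma f_pi_sub (x : ℝ) : f (π - x) = f x := by simp [f, Real.sin_pi_sub]

/-- `log` is interval integrable on `[0,1]`. -/
lemma intervalIntegrable_log01 : IntervalIntegrable Real.log volume 0 1 := by
  have hg : IntervalIntegrable (fun x : ℝ => 2 * x ^ (-(1/2) : ℝ)) volume 0 1 :=
    (intervalIntegral.intervalIntegrable_rpow' (by norm_num)).const_mul 2
  apply hg.mono_fun' (Real.measurable_log.aestronglyMeasurable.restrict)
  filter_upwards [ae_restrict_mem measurableSet_uIoc] with t ht
  rw [Set.uIoc_of_le (by norm_num : (0:ℝ) ≤ 1)] at ht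
  have ht0 : 0 < t := ht.1
  set y : ℝ := t ^ (-(1/2) : ℝ) with hy
  have hypos : 0 < y := Real.rpow_pos_of_pos ht0 _
  have hlogy : Real.log y = -(1/2) * Real.log t := Real.log_rpow ht0 _
  have h1 : Real.log y ≤ y - 1 := Real.log_le_sub_one_of_pos hypos
  have h2 : Real.log t ≤ 0 := Real.log_nonpos ht0.le ht.2
  have h3 : ‖Real.log t‖ = -Real.log t := by rw [Real.norm_eq_abs, abs_of_nonpos h2]
  rw [h3]
  nlinarith [hypos.le]

/-- `f` is interval integrable on `[0, π/2]`. -/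
lemma f_int_half : IntervalIntegrable f volume 0 (π / 2) := by
  have hππ : (1:ℝ) ≤ π / 2 := by nlinarith [Real.pi_gt_three]
  have hlog : IntervalIntegrable Real.log volume 0 (π / 2) :=
    intervalIntegrable_log01.trans
      (intervalIntegrable_log (Set.notMem_uIcc_of_lt one_pos (by linarith)))
  have hg : IntervalIntegrable (fun θ : ℝ => Real.log (π / 2) + |Real.log θ|) volume 0 (π / 2) :=
    (_root_.intervalIntegrable_const).add hlog.abs
  apply hg.mono_fun' (f_meas.aestronglyMeasurable.restrict)
  filter_upwards [ae_restrict_mem measurableSet_uIoc] with θ hθ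
  rw [Set.uIoc_of_le (by positivity : (0:ℝ) ≤ π / 2)] at hθ
  have hθ0 : 0 < θ := hθ.1
  have hsin : 2 / π * θ ≤ Real.sin θ := Real.mul_le_sin hθ0.le hθ.2
  have hspos : 0 < Real.sin θ := lt_of_lt_of_le (by positivity) hsin
  have h1 : Real.log (2 / π * θ) ≤ Real.log (Real.sin θ) :=
    Real.log_le_log (by positivity) hsin
  have h2 : Real.log (Real.sin θ) ≤ 0 := Real.log_nonpos hspos.le (Real.sin_le_one θ)
  have h3 : Real.log (2 / π * θ) = Real.log 2 - Real.log π + Real.log θ := by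
    rw [Real.log_mul (by positivity) hθ0.ne', Real.log_div two_ne_zero Real.pi_ne_zero]
  have h4 : Real.log (π / 2) = Real.log π - Real.log 2 :=
    Real.log_div Real.pi_ne_zero two_ne_zero
  have h5 : ‖f θ‖ = -Real.log (Real.sin θ) := by
    rw [Real.norm_eq_abs, f, abs_of_pos hspos, abs_of_nonpos h2]
  rw [h5]
  linarith [neg_abs_le (Real.log θ)]

lemma f_int_0pi : IntervalIntegrable f volume 0 π := by
  refine f_int_half.trans ?_
  have h := f_int_half.comp_sub_left π
  have heq : (fun x => f (π - x)) = f := funext f_pi_sub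
  rw [heq, sub_zero, show π - π/2 = π/2 by ring] at h
  exact h.symm

lemma f_int_full : IntervalIntegrable f volume (-π) π := by
  refine IntervalIntegrable.trans (b := 0) ?_ f_int_0pi
  have h := (IntervalIntegrable.iff_comp_neg).mp f_int_0pi
  have heq : (fun x : ℝ => f (-x)) = f := funext f_even
  rw [heq, neg_zero] at h
  exact h.symm

lemma f_int (a b : ℝ) (ha : a ∈ Icc (-π) π) (hb : b ∈ Icc (-π) π) :
    IntervalIntegrable f volume a b := by
  apply f_int_full.mono_set
  rw [Set.uIcc_of_le (by linarith [Real.pi_pos] : -π ≤ π)]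
  exact Set.uIcc_subset_Icc ha hb

lemma countable_sin_zero : Set.Countable {x : ℝ | Real.sin x = 0} := by
  apply Set.Countable.mono _ (Set.countable_range (fun n : ℤ => (n : ℝ) * π))
  intro x hx
  obtain ⟨n, hn⟩ := Real.sin_eq_zero_iff.mp hx
  exact ⟨n, hn⟩

lemma ae_sin_ne (g : ℝ → ℝ) (hg : Function.Injective g) :
    ∀ᵐ θ : ℝ ∂volume, Real.sin (g θ) ≠ 0 := by
  have h : volume (g ⁻¹' {x : ℝ | Real.sin x = 0}) = 0 :=
    Set.Countable.measure_zero (countable_sin_zero.preimage hg) _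
  filter_upwards [measure_eq_zero_iff_ae_notMem.mp h] with θ hθ
  exact hθ

/-- `∫_0^π log |sin θ| dθ = -π log 2`. -/
lemma integral_log_sin : ∫ θ in (0:ℝ)..π, f θ = -(π * Real.log 2) := by
  have hπ := Real.pi_pos
  -- second half equals first half
  have hsecond : ∫ θ in (π/2:ℝ)..π, f θ = ∫ θ in (0:ℝ)..(π/2), f θ := by
    have h1 : ∫ θ in (π/2:ℝ)..π, f θ = ∫ θ in (π/2:ℝ)..π, f (π - θ) := by
      apply intervalIntegral.integral_congr
      intro θ _
      exact (f_pi_sub θ).symm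
    rw [h1, intervalIntegral.integral_comp_sub_left f π, show π - π = (0:ℝ) by ring,
      show π - π/2 = π/2 by ring]
  have hK : ∫ θ in (0:ℝ)..π, f θ
      = (∫ θ in (0:ℝ)..(π/2), f θ) + ∫ θ in (0:ℝ)..(π/2), f θ := by
    rw [← intervalIntegral.integral_add_adjacent_intervals
      (f_int 0 (π/2) (by constructor <;> linarith) (by constructor <;> linarith))
      (f_int (π/2) π (by constructor <;> linarith) (by constructor <;> linarith)), hsecond]
  -- cos integral equals sin integral
  have hcosint : IntervalIntegrable (fun θ => Real.log |Real.cos θ|) volume 0 (π/2) := by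
    have h := f_int_half.comp_sub_left (π/2)
    have heq : (fun x => f (π/2 - x)) = fun θ => Real.log |Real.cos θ| := by
      funext x; simp [f, Real.sin_pi_div_two_sub]
    rw [heq, sub_zero, sub_self] at h
    exact h.symm
  have hcos : ∫ θ in (0:ℝ)..(π/2), Real.log |Real.cos θ| = ∫ θ in (0:ℝ)..(π/2), f θ := by
    have h1 : ∫ θ in (0:ℝ)..(π/2), Real.log |Real.cos θ|
        = ∫ θ in (0:ℝ)..(π/2), f (π/2 - θ) := by
      apply intervalIntegral.integral_congr
      intro θ _
      simp [f, Real.sin_pi_div_two_sub]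
    rw [h1, intervalIntegral.integral_comp_sub_left f (π/2), sub_zero, sub_self]
  -- doubling
  have hdouble : ∫ θ in (0:ℝ)..(π/2), f (2 * θ) = 2⁻¹ * ∫ θ in (0:ℝ)..π, f θ := by
    have h := intervalIntegral.integral_comp_mul_left f (c := (2:ℝ)) two_ne_zero
      (a := 0) (b := π/2)
    rw [h, smul_eq_mul, mul_zero, show (2:ℝ) * (π/2) = π by ring]
  have hsplit : ∫ θ in (0:ℝ)..(π/2), f (2 * θ)
      = ∫ θ in (0:ℝ)..(π/2), (Real.log 2 + f θ + Real.log |Real.cos θ|) := by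
    apply intervalIntegral.integral_congr_ae
    have h1 := ae_sin_ne id Function.injective_id
    have h2 := ae_sin_ne (fun x : ℝ => π/2 - x) (fun a b h => by dsimp at h; linarith)
    filter_upwards [h1, h2] with θ hs hc _
    have hcosθ : Real.cos θ ≠ 0 := by
      rwa [← Real.sin_pi_div_two_sub]
    have hs' : Real.sin θ ≠ 0 := hs
    have habs : |Real.sin (2*θ)| = 2 * |Real.sin θ| * |Real.cos θ| := by
      rw [Real.sin_two_mul, abs_mul, abs_mul, abs_two]
    rw [f, f, habs, Real.log_mul (by positivity) (abs_ne_zero.mpr hcosθ),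
      Real.log_mul two_ne_zero (abs_ne_zero.mpr hs')]
  have hsum : ∫ θ in (0:ℝ)..(π/2), (Real.log 2 + f θ + Real.log |Real.cos θ|)
      = (π/2) * Real.log 2 + (∫ θ in (0:ℝ)..(π/2), f θ)
        + ∫ θ in (0:ℝ)..(π/2), Real.log |Real.cos θ| := by
    rw [intervalIntegral.integral_add ((_root_.intervalIntegrable_const).add f_int_half) hcosint,
      intervalIntegral.integral_add (_root_.intervalIntegrable_const) f_int_half,
      intervalIntegral.integral_const, smul_eq_mul, sub_zero]
  have := hdouble
  rw [hsplit, hsum, hcos, hK] at this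
  linarith [this]

/-- Key: `∫_0^π log |cos α - cos θ| dθ = -π log 2` for `α ∈ [0, π]`. -/
lemma key (α : ℝ) (hα : α ∈ Icc 0 π) :
    ∫ θ in (0:ℝ)..π, Real.log |Real.cos α - Real.cos θ| = -(π * Real.log 2) := by
  have hπ := Real.pi_pos
  obtain ⟨hα0, hαπ⟩ := hα
  -- pointwise a.e. splitting
  have hsplit : ∫ θ in (0:ℝ)..π, Real.log |Real.cos α - Real.cos θ|
      = ∫ θ in (0:ℝ)..π, (Real.log 2 + f ((θ + α)/2) + f ((θ - α)/2)) := by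
    apply intervalIntegral.integral_congr_ae
    have h1 := ae_sin_ne (fun θ : ℝ => (θ + α)/2) (fun a b h => by dsimp at h; linarith)
    have h2 := ae_sin_ne (fun θ : ℝ => (θ - α)/2) (fun a b h => by dsimp at h; linarith)
    filter_upwards [h1, h2] with θ hs1 hs2 _
    have hid : Real.cos α - Real.cos θ
        = -2 * Real.sin ((α + θ)/2) * Real.sin ((α - θ)/2) := Real.cos_sub_cos α θ
    have habs : |Real.cos α - Real.cos θ| = 2 * |Real.sin ((θ + α)/2)| * |Real.sin ((θ - α)/2)| := by
      rw [hid]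
      rw [show (α - θ)/2 = -((θ - α)/2) by ring, Real.sin_neg,
        show (α + θ)/2 = (θ + α)/2 by ring]
      rw [abs_mul, abs_mul, abs_neg, abs_two, abs_neg]
    rw [habs, Real.log_mul (by positivity) (abs_ne_zero.mpr hs2),
      Real.log_mul two_ne_zero (abs_ne_zero.mpr hs1)]
    rfl
  -- integrability of the pieces
  have hint1 : IntervalIntegrable (fun θ => f ((θ + α)/2)) volume 0 π := by
    have h := ((f_int (α/2) ((π + α)/2) (by constructor <;> linarith)
      (by constructor <;> linarith)).comp_mul_right (c := 1/2)).comp_add_right α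
    have he : (fun x : ℝ => f ((x + α) * (1/2))) = fun θ => f ((θ + α)/2) := by
      funext x; ring_nf
    rw [he] at h
    have e1 : α / 2 / (1/2) - α = 0 := by ring
    have e2 : (π + α) / 2 / (1/2) - α = π := by ring
    rw [e1, e2] at h
    exact h
  have hint2 : IntervalIntegrable (fun θ => f ((θ - α)/2)) volume 0 π := by
    have h := ((f_int (-α/2) ((π - α)/2) (by constructor <;> linarith)
      (by constructor <;> linarith)).comp_mul_right (c := 1/2)).comp_sub_right α
    have he : (fun x : ℝ => f ((x - α) * (1/2))) = fun θ => f ((θ - α)/2) := by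
      funext x; ring_nf
    rw [he] at h
    have e1 : -α / 2 / (1/2) + α = 0 := by ring
    have e2 : (π - α) / 2 / (1/2) + α = π := by ring
    rw [e1, e2] at h
    exact h
  -- compute the two shifted integrals
  have hI1 : ∫ θ in (0:ℝ)..π, f ((θ + α)/2) = 2 * ∫ u in (α/2)..((π + α)/2), f u := by
    have h1 : ∫ θ in (0:ℝ)..π, f ((θ + α)/2)
        = ∫ y in (0 + α)..(π + α), f (y/2) :=
      intervalIntegral.integral_comp_add_right (fun y => f (y/2)) α
    rw [h1, intervalIntegral.integral_comp_div f (c := (2:ℝ)) two_ne_zero, smul_eq_mul,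
      zero_add]
  have hI2 : ∫ θ in (0:ℝ)..π, f ((θ - α)/2) = 2 * ∫ u in (-(α/2))..((π - α)/2), f u := by
    have h1 : ∫ θ in (0:ℝ)..π, f ((θ - α)/2)
        = ∫ y in (0 - α)..(π - α), f (y/2) :=
      intervalIntegral.integral_comp_sub_right (fun y => f (y/2)) α
    rw [h1, intervalIntegral.integral_comp_div f (c := (2:ℝ)) two_ne_zero, smul_eq_mul,
      zero_sub, neg_div]
  -- reflect the second integral
  have hI2' : ∫ u in (-(α/2))..((π - α)/2), f u = ∫ u in ((α - π)/2)..(α/2), f u := by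
    have h1 : ∫ u in (-(α/2))..((π - α)/2), f u
        = ∫ u in (-(α/2))..((π - α)/2), f (-u) := by
      apply intervalIntegral.integral_congr
      intro u _
      exact (f_even u).symm
    rw [h1, intervalIntegral.integral_comp_neg f, neg_neg,
      show -((π - α)/2) = (α - π)/2 by ring]
  -- glue and use periodicity
  have hglue : (∫ u in ((α - π)/2)..(α/2), f u) + ∫ u in (α/2)..((π + α)/2), f u
      = ∫ u in ((α - π)/2)..((π + α)/2), f u :=
    intervalIntegral.integral_add_adjacent_intervals
      (f_int _ _ (by constructor <;> linarith) (by constructor <;> linarith))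
      (f_int _ _ (by constructor <;> linarith) (by constructor <;> linarith))
  have hper : ∫ u in ((α - π)/2)..((π + α)/2), f u = ∫ u in (0:ℝ)..π, f u := by
    have h := f_periodic.intervalIntegral_add_eq ((α - π)/2) 0
    rw [show (α - π)/2 + π = (π + α)/2 by ring, zero_add] at h
    exact h
  -- put everything together
  have hconst : ∫ θ in (0:ℝ)..π, (Real.log 2 : ℝ) = π * Real.log 2 := by
    rw [intervalIntegral.integral_const, smul_eq_mul, sub_zero]
  have hsum : ∫ θ in (0:ℝ)..π, (Real.log 2 + f ((θ + α)/2) + f ((θ - α)/2))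
      = π * Real.log 2 + (∫ θ in (0:ℝ)..π, f ((θ + α)/2))
        + ∫ θ in (0:ℝ)..π, f ((θ - α)/2) := by
    rw [intervalIntegral.integral_add ((_root_.intervalIntegrable_const).add hint1) hint2,
      intervalIntegral.integral_add (_root_.intervalIntegrable_const) hint1, hconst]
  rw [hsplit, hsum, hI1, hI2, hI2']
  have hKval : ∫ u in (0:ℝ)..π, f u = -(π * Real.log 2) := integral_log_sin
  have : (∫ u in ((α - π)/2)..(α/2), f u) + ∫ u in (α/2)..((π + α)/2), f u
      = -(π * Real.log 2) := by rw [hglue, hper, hKval]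
  linarith [this]

lemma image_cos : Real.cos '' (Ioo 0 π) = Ioo (-1 : ℝ) 1 := by
  have hπ := Real.pi_pos
  ext y
  constructor
  · rintro ⟨θ, hθ, rfl⟩
    have h1 : Real.cos π < Real.cos θ :=
      Real.strictAntiOn_cos ⟨hθ.1.le, hθ.2.le⟩ ⟨hπ.le, le_rfl⟩ hθ.2
    have h2 : Real.cos θ < Real.cos 0 :=
      Real.strictAntiOn_cos ⟨le_rfl, hπ.le⟩ ⟨hθ.1.le, hθ.2.le⟩ hθ.1
    rw [Real.cos_pi] at h1
    rw [Real.cos_zero] at h2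
    exact ⟨h1, h2⟩
  · intro hy
    refine ⟨Real.arccos y, ⟨Real.arccos_pos.mpr hy.2, ?_⟩, Real.cos_arccos hy.1.le hy.2.le⟩
    refine lt_of_le_of_ne (Real.arccos_le_pi y) (fun h => ?_)
    have := Real.cos_arccos hy.1.le hy.2.le
    rw [h, Real.cos_pi] at this
    linarith [hy.1]

end ArcsinePotentialAux

open ArcsinePotentialAux in
/-- **Logarithmic potential of the arcsine measure on `[-1,1]`.** For every `x ∈ [-1,1]`,
`∫_{-1}^{1} log(1/|x−y|)·(1/(π√(1−y²))) dy = log 2`. -/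
theorem arcsine_potential_on_interval (x : ℝ) (hx : x ∈ Set.Icc (-1 : ℝ) 1) :
    ∫ y in (-1 : ℝ)..1, Real.log (1 / |x - y|) * (1 / (Real.pi * Real.sqrt (1 - y ^ 2)))
      = Real.log 2 := by
  have hπ := Real.pi_pos
  set α := Real.arccos x with hαdef
  have hαmem : α ∈ Set.Icc 0 π := ⟨Real.arccos_nonneg x, Real.arccos_le_pi x⟩
  have hcosα : Real.cos α = x := Real.cos_arccos hx.1 hx.2
  -- change of variables y = cos θ
  have hderiv : ∀ θ ∈ Set.Ioo (0:ℝ) π,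
      HasDerivWithinAt Real.cos (-Real.sin θ) (Set.Ioo 0 π) θ :=
    fun θ _ => (Real.hasDerivAt_cos θ).hasDerivWithinAt
  have hinj : Set.InjOn Real.cos (Set.Ioo 0 π) :=
    Real.injOn_cos.mono Set.Ioo_subset_Icc_self
  have hcv := MeasureTheory.integral_image_eq_integral_abs_deriv_smul measurableSet_Ioo hderiv
    hinj (fun y => Real.log (1 / |x - y|) * (1 / (Real.pi * Real.sqrt (1 - y ^ 2))))
  rw [image_cos] at hcv
  rw [intervalIntegral.integral_of_le (by norm_num : (-1:ℝ) ≤ 1),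
    MeasureTheory.integral_Ioc_eq_integral_Ioo, hcv]
  -- simplify the transformed integrand
  have heq : Set.EqOn
      (fun θ => |(-Real.sin θ)| •
        (Real.log (1 / |x - Real.cos θ|) * (1 / (Real.pi * Real.sqrt (1 - Real.cos θ ^ 2)))))
      (fun θ => π⁻¹ * Real.log (1 / |x - Real.cos θ|)) (Set.Ioo 0 π) := by
    intro θ hθ
    have hs : 0 < Real.sin θ := Real.sin_pos_of_pos_of_lt_pi hθ.1 hθ.2
    have h1 : 1 - Real.cos θ ^ 2 = Real.sin θ ^ 2 := by
      have := Real.sin_sq_add_cos_sq θ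
      linarith
    have h2 : Real.sqrt (1 - Real.cos θ ^ 2) = Real.sin θ := by
      rw [h1, Real.sqrt_sq hs.le]
    simp only [abs_neg, abs_of_pos hs, smul_eq_mul, h2]
    field_simp
  rw [MeasureTheory.setIntegral_congr_fun measurableSet_Ioo heq]
  rw [MeasureTheory.integral_const_mul]
  have hIoo : ∫ θ in Set.Ioo (0:ℝ) π, Real.log (1 / |x - Real.cos θ|)
      = ∫ θ in (0:ℝ)..π, Real.log (1 / |x - Real.cos θ|) := by
    rw [intervalIntegral.integral_of_le hπ.le, MeasureTheory.integral_Ioc_eq_integral_Ioo]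
  rw [hIoo]
  have hlog : ∫ θ in (0:ℝ)..π, Real.log (1 / |x - Real.cos θ|)
      = -∫ θ in (0:ℝ)..π, Real.log |Real.cos α - Real.cos θ| := by
    rw [← intervalIntegral.integral_neg]
    apply intervalIntegral.integral_congr
    intro θ _
    show Real.log (1 / |x - Real.cos θ|) = -Real.log |Real.cos α - Real.cos θ|
    rw [one_div, Real.log_inv, ← hcosα]
  rw [hlog, key α hαmem]
  field_simp
end

section
/- Fix t ∈ [0,1) and set s = √(1−t²). For every x ∈ [−s,s], ∫_{−s}^{s} log(1/|x−y|)·(1/π)·√(1−t²−y²)/(1−y²) dy + (t/2)·log(1/|x²−1|) = log 2 − ((1+t)/2)·log(1+t) − ((1−t)/2)·log(1−t). In other words, the weighted potential U^{μ_t} + φ_t equals the constant m_t on the support [−s,s] of μ_t. -/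
set_option maxHeartbeats 1000000

open Real MeasureTheory Set intervalIntegral Finset
open scoped ENNReal NNReal Interval


lemma II_log01 : IntervalIntegrable Real.log volume 0 1 := by
  rw [intervalIntegrable_iff_integrableOn_Ioc_of_le (by norm_num)]
  have h : IntegrableOn (fun x : ℝ => -Real.log x) (Set.Ioc (0:ℝ) 1) := by
    apply intervalIntegral.integrableOn_deriv_of_nonneg
      (g := fun x : ℝ => x - x * Real.log x)
    · exact (continuous_id.sub Real.continuous_mul_log).continuousOn
    · intro x hx
      have h := (hasDerivAt_id x).sub (Real.hasDerivAt_mul_log (ne_of_gt hx.1))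
      exact h.congr_deriv (by ring)
    · intro x hx
      have := Real.log_neg hx.1 hx.2
      linarith
  have h2 : IntegrableOn (fun x : ℝ => -(-Real.log x)) (Set.Ioc (0:ℝ) 1) := h.neg
  simpa only [neg_neg] using h2

lemma II_log (a b : ℝ) : IntervalIntegrable Real.log volume a b := by
  have key : ∀ c : ℝ, 0 ≤ c → IntervalIntegrable Real.log volume 0 c := by
    intro c hc
    rcases le_or_gt c 1 with h1 | h1
    · refine II_log01.mono_set ?_
      rw [Set.uIcc_of_le hc, Set.uIcc_of_le zero_le_one]
      exact Set.Icc_subset_Icc le_rfl h1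
    · refine II_log01.trans ?_
      apply ContinuousOn.intervalIntegrable
      apply Real.continuousOn_log.mono
      intro x hx
      simp only [Set.mem_compl_iff, Set.mem_singleton_iff]
      rw [Set.uIcc_of_le (le_of_lt h1)] at hx
      intro h; rw [h] at hx; exact absurd hx.1 (by norm_num)
  have keyneg : ∀ c : ℝ, 0 ≤ c → IntervalIntegrable Real.log volume (-c) 0 := by
    intro c hc
    have h1 := (IntervalIntegrable.iff_comp_neg).mp (key c hc)
    have heq : (fun x : ℝ => Real.log (-x)) = Real.log := by
      funext x; rw [Real.log_neg_eq_log]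
    simp only [neg_zero, heq] at h1
    exact h1.symm
  have main : ∀ c : ℝ, IntervalIntegrable Real.log volume 0 c := by
    intro c
    rcases le_or_gt 0 c with h | h
    · exact key c h
    · have := (keyneg (-c) (by linarith)).symm
      simpa using this
  exact ((main a).symm.trans (main b))

lemma II_log_abs (a b : ℝ) : IntervalIntegrable (fun x : ℝ => Real.log |x|) volume a b := by
  have heq : (fun x : ℝ => Real.log |x|) = Real.log := by funext x; rw [Real.log_abs]
  rw [heq]; exact II_log a b

lemma II_logsin_half : IntervalIntegrable (fun u : ℝ => Real.log |Real.sin u|) volume 0 (π/2) := by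
  have hle : (0:ℝ) ≤ π/2 := by positivity
  rw [intervalIntegrable_iff_integrableOn_Ioc_of_le hle]
  have hmeas : AEStronglyMeasurable (fun u : ℝ => Real.log |Real.sin u|)
      (volume.restrict (Ioc 0 (π/2))) :=
    (Real.measurable_log.comp (measurable_abs.comp Real.measurable_sin)).aestronglyMeasurable
  apply Integrable.mono' (g := fun u : ℝ => Real.log (π/2) - Real.log u) ?_ hmeas ?_
  · apply Integrable.sub
    · exact integrableOn_const (by simp [Real.pi_pos])
    · exact (intervalIntegrable_iff_integrableOn_Ioc_of_le hle).mp (II_log 0 (π/2))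
  · rw [ae_restrict_iff' measurableSet_Ioc]
    filter_upwards with u hu
    have hu0 : 0 < u := hu.1
    have hu2 : u ≤ π/2 := hu.2
    have hsinpos : 0 < Real.sin u := Real.sin_pos_of_pos_of_lt_pi hu0 (by linarith [Real.pi_pos])
    have hsin1 : Real.sin u ≤ 1 := Real.sin_le_one u
    have hlow : 2/π * u ≤ Real.sin u := Real.mul_le_sin hu0.le hu2
    have hlowpos : 0 < 2/π * u := by positivity
    rw [abs_of_pos hsinpos]
    rw [Real.norm_eq_abs, abs_of_nonpos (Real.log_nonpos hsinpos.le hsin1)]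
    have h1 : Real.log (2/π * u) ≤ Real.log (Real.sin u) := Real.log_le_log hlowpos hlow
    have h2 : Real.log (2/π * u) = -(Real.log (π/2)) + Real.log u := by
      rw [Real.log_mul (by positivity) (ne_of_gt hu0)]
      congr 1
      rw [← Real.log_inv]
      norm_num
    linarith

lemma II_logsin_window {a b : ℝ} (ha : -(π/2) ≤ a) (hb : b ≤ π) (hab : a ≤ b) :
    IntervalIntegrable (fun u : ℝ => Real.log |Real.sin u|) volume a b := by
  set f := fun u : ℝ => Real.log |Real.sin u| with hf
  have h2 : IntervalIntegrable f volume 0 (π/2) := II_logsin_half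
  have h1 : IntervalIntegrable f volume (-(π/2)) 0 := by
    have := (IntervalIntegrable.iff_comp_neg).mp h2
    have heq : (fun x : ℝ => f (-x)) = f := by
      funext x; simp only [hf, Real.sin_neg, abs_neg]
    rw [heq] at this
    simpa using this.symm
  have h3 : IntervalIntegrable f volume (π/2) π := by
    have := h2.comp_sub_left π
    have heq : (fun x : ℝ => f (π - x)) = f := by
      funext x; simp only [hf, Real.sin_pi_sub]
    rw [heq] at this
    have e : π - π/2 = π/2 := by ring
    have := this.symm
    rw [e] at this
    simpa using this
  have hfull : IntervalIntegrable f volume (-(π/2)) π := (h1.trans h2).trans h3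
  apply hfull.mono_set
  rw [Set.uIcc_of_le hab, Set.uIcc_of_le (by linarith [Real.pi_pos] : -(π/2) ≤ π)]
  exact Set.Icc_subset_Icc ha hb

lemma II_k_plus {φ : ℝ} (hφ : φ ∈ Icc 0 π) :
    IntervalIntegrable (fun θ : ℝ => Real.log |Real.sin ((θ + φ)/2)|) volume 0 π := by
  have base : IntervalIntegrable (fun u : ℝ => Real.log |Real.sin u|) volume (φ/2) ((π+φ)/2) :=
    II_logsin_window (by linarith [hφ.1, Real.pi_pos]) (by linarith [hφ.2, Real.pi_pos])
      (by linarith [Real.pi_pos])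
  have h1 := base.comp_add_right (φ/2)
  have h2 := h1.comp_mul_left (c := 1/2)
  have heq : (fun x : ℝ => Real.log |Real.sin (1/2 * x + φ/2)|) = fun θ : ℝ =>
      Real.log |Real.sin ((θ + φ)/2)| := by
    funext x; ring_nf
  rw [heq] at h2
  have e1 : (φ/2 - φ/2) / (1/2 : ℝ) = 0 := by ring
  have e2 : ((π+φ)/2 - φ/2) / (1/2 : ℝ) = π := by ring
  rwa [e1, e2] at h2

lemma II_k_minus {φ : ℝ} (hφ : φ ∈ Icc 0 π) :
    IntervalIntegrable (fun θ : ℝ => Real.log |Real.sin ((θ - φ)/2)|) volume 0 π := by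
  have base : IntervalIntegrable (fun u : ℝ => Real.log |Real.sin u|) volume (-(φ/2)) ((π-φ)/2) :=
    II_logsin_window (by linarith [hφ.2, Real.pi_pos]) (by linarith [hφ.1, Real.pi_pos])
      (by linarith [hφ.1, hφ.2, Real.pi_pos])
  have h1 := base.comp_add_right (-(φ/2))
  have h2 := h1.comp_mul_left (c := 1/2)
  have heq : (fun x : ℝ => Real.log |Real.sin (1/2 * x + -(φ/2))|) = fun θ : ℝ =>
      Real.log |Real.sin ((θ - φ)/2)| := by
    funext x; ring_nf
  rw [heq] at h2
  have e1 : (-(φ/2) - -(φ/2)) / (1/2 : ℝ) = 0 := by ring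
  have e2 : ((π-φ)/2 - -(φ/2)) / (1/2 : ℝ) = π := by ring
  rwa [e1, e2] at h2

lemma kernel_split {φ θ : ℝ} (hφ : φ ∈ Icc 0 π) (hθ : θ ∈ Ioc 0 π)
    (h1 : θ ≠ φ) (h2 : θ ≠ 2*π - φ) :
    Real.log |Real.cos φ - Real.cos θ|
      = Real.log 2 + Real.log |Real.sin ((θ + φ)/2)| + Real.log |Real.sin ((θ - φ)/2)| := by
  have hs2 : Real.sin ((θ - φ)/2) ≠ 0 := by
    intro h
    have hb1 : -π < (θ - φ)/2 := by
      have := hθ.1; have := hφ.2; have := Real.pi_pos; linarith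
    have hb2 : (θ - φ)/2 < π := by
      have := hθ.2; have := hφ.1; have := Real.pi_pos; linarith
    have := (Real.sin_eq_zero_iff_of_lt_of_lt hb1 hb2).mp h
    apply h1; linarith
  have hs1 : Real.sin ((θ + φ)/2) ≠ 0 := by
    intro h
    have hb0 : 0 < (θ + φ)/2 := by have := hθ.1; have := hφ.1; linarith
    have hb2 : (θ + φ)/2 ≤ π := by have := hθ.2; have := hφ.2; linarith
    rcases lt_or_eq_of_le hb2 with hlt | heqq
    · exact absurd h (ne_of_gt (Real.sin_pos_of_pos_of_lt_pi hb0 hlt))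
    · apply h2; linarith
  have key : Real.cos φ - Real.cos θ = 2 * Real.sin ((θ + φ)/2) * Real.sin ((θ - φ)/2) := by
    rw [Real.cos_sub_cos]
    have e1 : (φ + θ)/2 = (θ + φ)/2 := by ring
    have e2 : (φ - θ)/2 = -((θ - φ)/2) := by ring
    rw [e1, e2, Real.sin_neg]; ring
  rw [key]
  rw [abs_mul, abs_mul]
  rw [Real.log_mul (by positivity) (abs_ne_zero.mpr hs2),
      Real.log_mul (by norm_num) (abs_ne_zero.mpr hs1), abs_two]

lemma kernel_ae (a : ℝ) (ha : a ∈ Icc (-1:ℝ) 1) :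
    ∀ᵐ θ ∂volume, θ ∈ Ι (0:ℝ) π →
      Real.log |a - Real.cos θ|
        = Real.log 2 + Real.log |Real.sin ((θ + Real.arccos a)/2)|
          + Real.log |Real.sin ((θ - Real.arccos a)/2)| := by
  set φ := Real.arccos a with hφdef
  have hφ : φ ∈ Icc 0 π := ⟨Real.arccos_nonneg a, Real.arccos_le_pi a⟩
  have hnull : ∀ᵐ θ : ℝ ∂volume, θ ∉ ({φ, 2*π - φ} : Set ℝ) := by
    have hcnt : ({φ, 2*π - φ} : Set ℝ).Countable := (Set.countable_singleton _).insert _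
    exact hcnt.ae_notMem volume
  filter_upwards [hnull] with θ hθnotin hθ
  have hθ' : θ ∈ Ioc 0 π := by
    rwa [Set.uIoc_of_le (le_of_lt Real.pi_pos)] at hθ
  have h1 : θ ≠ φ := fun h => hθnotin (by simp [h])
  have h2 : θ ≠ 2*π - φ := fun h => hθnotin (by simp [h])
  have := kernel_split hφ hθ' h1 h2
  rwa [Real.cos_arccos ha.1 ha.2] at this

lemma II_kernel (a : ℝ) (ha : a ∈ Icc (-1:ℝ) 1) :
    IntervalIntegrable (fun θ : ℝ => Real.log |a - Real.cos θ|) volume 0 π := by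
  set φ := Real.arccos a with hφdef
  have hφ : φ ∈ Icc 0 π := ⟨Real.arccos_nonneg a, Real.arccos_le_pi a⟩
  have hG : IntervalIntegrable (fun θ : ℝ => Real.log 2 + Real.log |Real.sin ((θ + φ)/2)|
      + Real.log |Real.sin ((θ - φ)/2)|) volume 0 π :=
    ((intervalIntegrable_const.add (II_k_plus hφ)).add (II_k_minus hφ))
  rw [intervalIntegrable_iff] at hG ⊢
  apply hG.congr
  have h := kernel_ae a ha
  rw [Filter.EventuallyEq, ae_restrict_iff' measurableSet_uIoc]
  filter_upwards [h] with θ hθ hmem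
  exact (hθ hmem).symm

lemma integral_logsin_halfpi :
    ∫ u in (0:ℝ)..(π/2), Real.log |Real.sin u| = -(π/2) * Real.log 2 := by
  have pi_pos := Real.pi_pos
  set f := fun u : ℝ => Real.log |Real.sin u| with hfdef
  have J1 : IntervalIntegrable f volume 0 (π/2) :=
    II_logsin_window (by linarith) (by linarith) (by linarith)
  have J2 : IntervalIntegrable f volume (π/2) π :=
    II_logsin_window (by linarith) le_rfl (by linarith)
  set I := ∫ u in (0:ℝ)..(π/2), f u with hIdef
  have hrefl : ∫ u in (π/2:ℝ)..π, f u = I := by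
    have h := intervalIntegral.integral_comp_sub_left (a := 0) (b := π/2) f π
    have heq : ∀ x, f (π - x) = f x := by
      intro x; simp only [hfdef, Real.sin_pi_sub]
    simp only [heq] at h
    have e1 : π - π/2 = π/2 := by ring
    have e2 : π - 0 = π := by ring
    rw [e1, e2] at h
    rw [← h]
  have hdouble : ∫ u in (0:ℝ)..π, f u = I + I := by
    rw [← intervalIntegral.integral_add_adjacent_intervals J1 J2, hrefl]
  have hcomp : ∫ u in (0:ℝ)..(π/2), f (2*u) = I := by
    have h := intervalIntegral.integral_comp_mul_left (a := 0) (b := π/2) f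
      (show (2:ℝ) ≠ 0 by norm_num)
    rw [h]
    have e1 : (2:ℝ) * 0 = 0 := by ring
    have e2 : (2:ℝ) * (π/2) = π := by ring
    rw [e1, e2, hdouble]
    simp; ring
  have hcos : IntervalIntegrable (fun u : ℝ => Real.log |Real.cos u|) volume 0 (π/2) := by
    have h := J1.comp_sub_left (π/2)
    have heq : (fun x : ℝ => f (π/2 - x)) = fun u : ℝ => Real.log |Real.cos u| := by
      funext x; simp only [hfdef, Real.sin_pi_div_two_sub]
    rw [heq] at h
    have := h.symm
    simpa using this
  have hcosval : ∫ u in (0:ℝ)..(π/2), Real.log |Real.cos u| = I := by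
    have h := intervalIntegral.integral_comp_sub_left (a := 0) (b := π/2) f (π/2)
    have heq : ∀ x, f (π/2 - x) = Real.log |Real.cos x| := by
      intro x; simp only [hfdef, Real.sin_pi_div_two_sub]
    simp only [heq] at h
    rw [h]
    norm_num
    exact hIdef.symm
  have hsplit : ∫ u in (0:ℝ)..(π/2), f (2*u)
      = ∫ u in (0:ℝ)..(π/2), (Real.log 2 + f u + Real.log |Real.cos u|) := by
    apply intervalIntegral.integral_congr_ae
    have hnull : ∀ᵐ u : ℝ ∂volume, u ≠ π/2 :=
      (Set.countable_singleton (π/2)).ae_notMem volume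
    filter_upwards [hnull] with u hne hu
    rw [Set.uIoc_of_le (by linarith : (0:ℝ) ≤ π/2)] at hu
    have hu0 : 0 < u := hu.1
    have hu2 : u < π/2 := lt_of_le_of_ne hu.2 hne
    have hsin : 0 < Real.sin u := Real.sin_pos_of_pos_of_lt_pi hu0 (by linarith)
    have hcosu : 0 < Real.cos u := Real.cos_pos_of_mem_Ioo ⟨by linarith, hu2⟩
    simp only [hfdef]
    rw [Real.sin_two_mul, abs_mul, abs_mul, Real.log_mul (by positivity)
      (by positivity : |Real.cos u| ≠ 0), Real.log_mul (by norm_num)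
      (by positivity : |Real.sin u| ≠ 0), abs_two]
  have hval : ∫ u in (0:ℝ)..(π/2), (Real.log 2 + f u + Real.log |Real.cos u|)
      = π/2 * Real.log 2 + I + I := by
    rw [intervalIntegral.integral_add (intervalIntegrable_const.add J1) hcos,
      intervalIntegral.integral_add intervalIntegrable_const J1,
      intervalIntegral.integral_const, hcosval, ← hIdef]
    simp only [sub_zero, smul_eq_mul]
  have hfinal : I = π/2 * Real.log 2 + I + I := hcomp.symm.trans (hsplit.trans hval)
  linarith

lemma E0 {a : ℝ} (ha : a ∈ Icc (-1:ℝ) 1) :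
    ∫ θ in (0:ℝ)..π, Real.log |a - Real.cos θ| = -(π * Real.log 2) := by
  have pi_pos := Real.pi_pos
  set φ := Real.arccos a with hφdef
  have hφ : φ ∈ Icc 0 π := ⟨Real.arccos_nonneg a, Real.arccos_le_pi a⟩
  have hφ1 := hφ.1
  have hφ2 := hφ.2
  set f := fun u : ℝ => Real.log |Real.sin u| with hfdef
  have feq1 : ∀ x : ℝ, f (π - x) = f x := by
    intro x; simp only [hfdef, Real.sin_pi_sub]
  have feq2 : ∀ x : ℝ, f (-x) = f x := by
    intro x; simp only [hfdef, Real.sin_neg, abs_neg]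
  rw [intervalIntegral.integral_congr_ae (kernel_ae a ha)]
  have I1 : IntervalIntegrable (fun _ : ℝ => Real.log 2) volume 0 π := intervalIntegrable_const
  have I2 := II_k_plus hφ
  have I3 := II_k_minus hφ
  rw [intervalIntegral.integral_add (I1.add I2) I3, intervalIntegral.integral_add I1 I2]
  have hplus : ∫ θ in (0:ℝ)..π, Real.log |Real.sin ((θ + φ)/2)|
      = 2 * ∫ u in (φ/2)..((π+φ)/2), f u := by
    have h := intervalIntegral.integral_comp_mul_add (a := 0) (b := π) f
      (show (1/2:ℝ) ≠ 0 by norm_num) (φ/2)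
    have heq : (fun x : ℝ => Real.log |Real.sin ((x + φ)/2)|)
        = fun x : ℝ => f (1/2*x + φ/2) := by
      funext x; simp only [hfdef]; ring_nf
    rw [heq, h]
    have e1 : (1/2:ℝ)*0 + φ/2 = φ/2 := by ring
    have e2 : (1/2:ℝ)*π + φ/2 = (π+φ)/2 := by ring
    rw [e1, e2]
    simp [smul_eq_mul]
  have hminus : ∫ θ in (0:ℝ)..π, Real.log |Real.sin ((θ - φ)/2)|
      = 2 * ∫ u in (-(φ/2))..((π-φ)/2), f u := by
    have h := intervalIntegral.integral_comp_mul_add (a := 0) (b := π) f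
      (show (1/2:ℝ) ≠ 0 by norm_num) (-(φ/2))
    have heq : (fun x : ℝ => Real.log |Real.sin ((x - φ)/2)|)
        = fun x : ℝ => f (1/2*x + -(φ/2)) := by
      funext x; simp only [hfdef]; ring_nf
    rw [heq, h]
    have e1 : (1/2:ℝ)*0 + -(φ/2) = -(φ/2) := by ring
    have e2 : (1/2:ℝ)*π + -(φ/2) = (π-φ)/2 := by ring
    rw [e1, e2]
    simp [smul_eq_mul]
  -- named pieces
  have W1 : IntervalIntegrable f volume 0 (φ/2) :=
    II_logsin_window (by linarith) (by linarith) (by linarith)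
  have W2 : IntervalIntegrable f volume (φ/2) (π/2) :=
    II_logsin_window (by linarith) (by linarith) (by linarith)
  have W3 : IntervalIntegrable f volume (π/2) ((π+φ)/2) :=
    II_logsin_window (by linarith) (by linarith) (by linarith)
  have W4 : IntervalIntegrable f volume (-(φ/2)) 0 :=
    II_logsin_window (by linarith) (by linarith) (by linarith)
  have W5 : IntervalIntegrable f volume 0 ((π-φ)/2) :=
    II_logsin_window (by linarith) (by linarith) (by linarith)
  have W6 : IntervalIntegrable f volume ((π-φ)/2) (π/2) :=
    II_logsin_window (by linarith) (by linarith) (by linarith)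
  -- reflections
  have hrefl3 : ∫ u in (π/2:ℝ)..((π+φ)/2), f u = ∫ u in ((π-φ)/2)..(π/2), f u := by
    have h := intervalIntegral.integral_comp_sub_left (a := (π-φ)/2) (b := π/2) f π
    simp only [feq1] at h
    have e1 : π - π/2 = π/2 := by ring
    have e2 : π - (π-φ)/2 = (π+φ)/2 := by ring
    rw [e1, e2] at h
    rw [← h]
  have hrefl4 : ∫ u in (-(φ/2):ℝ)..0, f u = ∫ u in (0:ℝ)..(φ/2), f u := by
    have h := intervalIntegral.integral_comp_neg (a := 0) (b := φ/2) f
    simp only [feq2] at h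
    have e1 : -(0:ℝ) = 0 := by ring
    rw [e1] at h
    rw [← h]
  -- adjacent splits
  have hAB : (∫ u in (0:ℝ)..(φ/2), f u) + (∫ u in (φ/2)..(π/2), f u)
      = ∫ u in (0:ℝ)..(π/2), f u := intervalIntegral.integral_add_adjacent_intervals W1 W2
  have hCD : (∫ u in (0:ℝ)..((π-φ)/2), f u) + (∫ u in ((π-φ)/2)..(π/2), f u)
      = ∫ u in (0:ℝ)..(π/2), f u := intervalIntegral.integral_add_adjacent_intervals W5 W6
  have hS1 : (∫ u in (φ/2:ℝ)..(π/2), f u) + (∫ u in (π/2:ℝ)..((π+φ)/2), f u)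
      = ∫ u in (φ/2)..((π+φ)/2), f u := intervalIntegral.integral_add_adjacent_intervals W2 W3
  have hS2 : (∫ u in (-(φ/2))..(0:ℝ), f u) + (∫ u in (0:ℝ)..((π-φ)/2), f u)
      = ∫ u in (-(φ/2))..((π-φ)/2), f u := intervalIntegral.integral_add_adjacent_intervals W4 W5
  have hK := integral_logsin_halfpi
  rw [intervalIntegral.integral_const]
  rw [hplus, hminus]
  rw [← hS1, ← hS2, hrefl3, hrefl4]
  have : (π - 0) • Real.log 2 = π * Real.log 2 := by simp [smul_eq_mul]
  rw [this]
  have hKf : ∫ u in (0:ℝ)..(π/2), f u = -(π/2) * Real.log 2 := hK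
  linarith

lemma psi_cont (n : ℕ) :
    Continuous fun v : ℝ => Real.sin (n*v) * Real.log |Real.sin v| := by
  induction n with
  | zero =>
    have : (fun v : ℝ => Real.sin ((0:ℕ)*v) * Real.log |Real.sin v|) = fun _ => 0 := by
      funext v; simp
    rw [this]; exact continuous_const
  | succ n ih =>
    have heq : (fun v : ℝ => Real.sin ((n+1:ℕ)*v) * Real.log |Real.sin v|)
        = fun v : ℝ => Real.cos v * (Real.sin (n*v) * Real.log |Real.sin v|)
          + Real.cos ((n:ℝ)*v) * (Real.sin v * Real.log (Real.sin v)) := by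
      funext v
      have e : ((n+1:ℕ):ℝ)*v = (n:ℝ)*v + v := by push_cast; ring
      rw [Real.log_abs, e, Real.sin_add]
      ring
    rw [heq]
    exact (Real.continuous_cos.mul ih).add
      ((Real.continuous_cos.comp (continuous_const.mul continuous_id)).mul
        (Real.continuous_mul_log.comp Real.continuous_sin))

noncomputable def Ptrig (φ : ℝ) (n : ℕ) (θ : ℝ) : ℝ :=
  2 * ∑ m ∈ Finset.Ico 1 n, Real.cos ((n:ℝ)*φ - m*φ) * Real.cos (m*θ)
    + Real.cos ((n:ℝ)*θ) + Real.cos ((n:ℝ)*φ)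

lemma Ptrig_cont (φ : ℝ) (n : ℕ) : Continuous (Ptrig φ n) := by
  unfold Ptrig
  apply Continuous.add
  apply Continuous.add
  · apply Continuous.mul continuous_const
    apply continuous_finset_sum
    intro m _
    exact continuous_const.mul (Real.continuous_cos.comp (continuous_const.mul continuous_id))
  · exact Real.continuous_cos.comp (continuous_const.mul continuous_id)
  · exact continuous_const

lemma Ptrig_id (φ : ℝ) (n : ℕ) (hn : 1 ≤ n) (θ : ℝ) :
    Real.sin θ * Real.sin ((n:ℝ)*θ) - Real.sin φ * Real.sin ((n:ℝ)*φ)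
      = (Real.cos φ - Real.cos θ) * Ptrig φ n θ := by
  set U : ℝ → ℝ := fun x =>
    Real.cos ((n:ℝ)*φ - x*φ + φ) * Real.cos (x*θ)
      - Real.cos ((n:ℝ)*φ - x*φ) * Real.cos (x*θ - θ) with hU
  have key : ∀ A B : ℝ, (Real.cos φ - Real.cos θ) * (2 * Real.cos A * Real.cos B)
      = (Real.cos (A+φ) * Real.cos B - Real.cos A * Real.cos (B-θ))
        - (Real.cos A * Real.cos (B+θ) - Real.cos (A-φ) * Real.cos B) := by
    intro A B
    simp only [Real.cos_add, Real.cos_sub]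
    ring
  have hterm : ∀ x : ℝ,
      (Real.cos φ - Real.cos θ) * (2 * Real.cos ((n:ℝ)*φ - x*φ) * Real.cos (x*θ))
        = U x - U (x+1) := by
    intro x
    have e2 : (x+1)*θ = x*θ + θ := by ring
    have e3 : (n:ℝ)*φ - (x+1)*φ = ((n:ℝ)*φ - x*φ) - φ := by ring
    have e4 : (x+1)*θ - θ = x*θ := by ring
    have e5 : (n:ℝ)*φ - x*φ - φ + φ = (n:ℝ)*φ - x*φ := by ring
    simp only [hU]
    rw [e4, e2, e3, e5]
    exact key ((n:ℝ)*φ - x*φ) (x*θ)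
  set F : ℕ → ℝ := fun m => U (m : ℝ) with hF
  have hcast : ∀ m : ℕ, F (m+1) = U ((m:ℝ)+1) := by
    intro m; simp only [hF]; congr 1; push_cast; ring
  have h1 : ∀ m : ℕ, (Real.cos φ - Real.cos θ)
      * (2 * Real.cos ((n:ℝ)*φ - m*φ) * Real.cos (m*θ)) = F m - F (m+1) := by
    intro m; rw [hcast]; exact hterm (m : ℝ)
  set T := ∑ m ∈ Finset.Ico 1 n, Real.cos ((n:ℝ)*φ - m*φ) * Real.cos (m*θ) with hT
  have htel : (Real.cos φ - Real.cos θ) * 2 * T = F 1 - F n := by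
    rw [hT, Finset.mul_sum]
    have : ∀ m ∈ Finset.Ico 1 n, (Real.cos φ - Real.cos θ) * 2
        * (Real.cos ((n:ℝ)*φ - m*φ) * Real.cos (m*θ)) = F m - F (m+1) := by
      intro m _
      rw [← h1 m]; ring
    rw [Finset.sum_congr rfl this, Finset.sum_Ico_eq_sum_range]
    have hsh : ∀ i : ℕ, F (1+i) - F (1+i+1)
        = (fun j : ℕ => F (1+j)) i - (fun j : ℕ => F (1+j)) (i+1) := by
      intro i; rfl
    simp only [hsh]
    rw [Finset.sum_range_sub' (fun j : ℕ => F (1+j)) (n-1)]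
    have : 1 + (n-1) = n := by omega
    rw [this]
  have expand : (Real.cos φ - Real.cos θ) * Ptrig φ n θ
      = (Real.cos φ - Real.cos θ) * 2 * T
        + (Real.cos φ - Real.cos θ) * (Real.cos ((n:ℝ)*θ) + Real.cos ((n:ℝ)*φ)) := by
    unfold Ptrig
    rw [← hT]; ring
  rw [expand, htel]
  simp only [hF, hU, Nat.cast_one]
  simp only [one_mul, sub_self, sub_add_cancel, zero_add, Real.cos_zero]
  rw [Real.cos_sub, Real.cos_sub]
  ring

lemma integral_cos_nat (m : ℕ) (hm : 1 ≤ m) :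
    ∫ θ in (0:ℝ)..π, Real.cos ((m:ℝ)*θ) = 0 := by
  have hm0 : (m:ℝ) ≠ 0 := by positivity
  have h := intervalIntegral.integral_comp_mul_left (a := 0) (b := π) Real.cos hm0
  rw [h, mul_zero, integral_cos, Real.sin_zero, Real.sin_nat_mul_pi]
  simp

lemma Ptrig_int (φ : ℝ) (n : ℕ) (hn : 1 ≤ n) :
    ∫ θ in (0:ℝ)..π, Ptrig φ n θ = π * Real.cos ((n:ℝ)*φ) := by
  unfold Ptrig
  have hsum : IntervalIntegrable (fun θ : ℝ =>
      2 * ∑ m ∈ Finset.Ico 1 n, Real.cos ((n:ℝ)*φ - m*φ) * Real.cos (m*θ)) volume 0 π := by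
    apply Continuous.intervalIntegrable
    apply continuous_const.mul
    apply continuous_finset_sum
    intro m _
    exact continuous_const.mul (Real.continuous_cos.comp (continuous_const.mul continuous_id))
  have hcosn : IntervalIntegrable (fun θ : ℝ => Real.cos ((n:ℝ)*θ)) volume 0 π :=
    (Real.continuous_cos.comp (continuous_const.mul continuous_id)).intervalIntegrable _ _
  rw [intervalIntegral.integral_add (hsum.add hcosn) intervalIntegrable_const,
      intervalIntegral.integral_add hsum hcosn]
  rw [integral_cos_nat n hn]
  rw [intervalIntegral.integral_const_mul]
  rw [intervalIntegral.integral_finset_sum]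
  swap
  · intro m _
    exact (continuous_const.mul
      (Real.continuous_cos.comp (continuous_const.mul continuous_id))).intervalIntegrable _ _
  have hz : ∀ m ∈ Finset.Ico 1 n,
      ∫ θ in (0:ℝ)..π, Real.cos ((n:ℝ)*φ - m*φ) * Real.cos ((m:ℝ)*θ) = 0 := by
    intro m hm
    rw [intervalIntegral.integral_const_mul, integral_cos_nat m (Finset.mem_Ico.mp hm).1,
      mul_zero]
  rw [Finset.sum_congr rfl hz]
  simp [Real.pi_pos.le]

lemma En {a : ℝ} (ha : a ∈ Icc (-1:ℝ) 1) (n : ℕ) (hn : 1 ≤ n) :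
    ∫ θ in (0:ℝ)..π, Real.cos ((n:ℝ)*θ) * Real.log |a - Real.cos θ|
      = -(π / n) * Real.cos ((n:ℝ) * Real.arccos a) := by
  have pi_pos := Real.pi_pos
  have hnR : (0:ℝ) < n := by exact_mod_cast hn
  have hnne : (n:ℝ) ≠ 0 := ne_of_gt hnR
  set φ := Real.arccos a with hφdef
  have hφ1 : 0 ≤ φ := Real.arccos_nonneg a
  have hφ2 : φ ≤ π := Real.arccos_le_pi a
  have hacos : Real.cos φ = a := Real.cos_arccos ha.1 ha.2
  set ψ : ℝ → ℝ := fun v => Real.sin ((n:ℝ)*v) * Real.log |Real.sin v| with hψ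
  have hψalt : ψ = fun v => Real.sin ((n:ℝ)*v) * Real.log (Real.sin v) := by
    funext v; simp only [hψ, Real.log_abs]
  set H : ℝ → ℝ := fun θ => Real.sin ((n:ℝ)*θ)/n * Real.log 2
      + 2/n * (Real.cos ((n:ℝ)*((θ+φ)/2)) * ψ ((θ-φ)/2)
             + Real.cos ((n:ℝ)*((θ-φ)/2)) * ψ ((θ+φ)/2)) with hH
  set g : ℝ → ℝ := fun θ => Real.cos ((n:ℝ)*θ) * Real.log |a - Real.cos θ|
      + (1/n) * Ptrig φ n θ with hg
  -- continuity of H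
  have Hcont : Continuous H := by
    rw [hH]
    have c1 : Continuous fun θ : ℝ => (n:ℝ)*θ := continuous_const.mul continuous_id
    have cq : Continuous fun θ : ℝ => (θ+φ)/2 := (continuous_id.add continuous_const).div_const 2
    have cw : Continuous fun θ : ℝ => (θ-φ)/2 := (continuous_id.sub continuous_const).div_const 2
    apply Continuous.add
    · exact ((Real.continuous_sin.comp c1).div_const _).mul continuous_const
    · apply continuous_const.mul
      apply Continuous.add
      · exact (Real.continuous_cos.comp (continuous_const.mul cq)).mul ((psi_cont n).comp cw)
      · exact (Real.continuous_cos.comp (continuous_const.mul cw)).mul ((psi_cont n).comp cq)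
  -- boundary values
  have H0 : H 0 = 0 := by
    have e1 : ((0:ℝ)+φ)/2 = φ/2 := by ring
    have e2 : ((0:ℝ)-φ)/2 = -(φ/2) := by ring
    simp only [hH, hψ, e1, e2, mul_zero, Real.sin_zero, mul_neg, Real.sin_neg,
      Real.cos_neg, abs_neg, zero_div]
    ring
  have Hpi : H π = 0 := by
    have hsnp : Real.sin ((n:ℝ)*π) = 0 := Real.sin_nat_mul_pi n
    have habs : |Real.sin ((π+φ)/2)| = |Real.sin ((π-φ)/2)| := by
      rw [← Real.sin_pi_sub ((π+φ)/2)]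
      congr 2
      ring
    have hkey : Real.sin ((n:ℝ)*((π-φ)/2)) * Real.cos ((n:ℝ)*((π+φ)/2))
        + Real.cos ((n:ℝ)*((π-φ)/2)) * Real.sin ((n:ℝ)*((π+φ)/2)) = 0 := by
      rw [← Real.sin_add, show (n:ℝ)*((π-φ)/2) + (n:ℝ)*((π+φ)/2) = (n:ℝ)*π by ring]
      exact hsnp
    simp only [hH, hψ, habs, hsnp, zero_div]
    linear_combination ((2:ℝ)/n * Real.log |Real.sin ((π-φ)/2)|) * hkey
  -- integrability of g
  have hcosn : Continuous fun θ : ℝ => Real.cos ((n:ℝ)*θ) :=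
    Real.continuous_cos.comp (continuous_const.mul continuous_id)
  have h1int : IntervalIntegrable (fun θ : ℝ => Real.cos ((n:ℝ)*θ) * Real.log |a - Real.cos θ|)
      volume 0 π := (II_kernel a ha).continuousOn_mul hcosn.continuousOn
  have h2int : IntervalIntegrable (fun θ : ℝ => (1/(n:ℝ)) * Ptrig φ n θ) volume 0 π :=
    (continuous_const.mul (Ptrig_cont φ n)).intervalIntegrable _ _
  have hgint : IntervalIntegrable g volume 0 π := h1int.add h2int
  -- derivative
  have hderiv : ∀ θ ∈ Ioo (0:ℝ) π, θ ≠ φ → HasDerivAt H (g θ) θ := by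
    intro θ hθ hne
    have hθ0 := hθ.1
    have hθπ := hθ.2
    -- nonvanishing
    have hq0 : 0 < (θ+φ)/2 := by linarith
    have hqπ : (θ+φ)/2 < π := by linarith
    have hsq : Real.sin ((θ+φ)/2) ≠ 0 := ne_of_gt (Real.sin_pos_of_pos_of_lt_pi hq0 hqπ)
    have hsw : Real.sin ((θ-φ)/2) ≠ 0 := by
      intro h
      have hb1 : -π < (θ-φ)/2 := by linarith
      have hb2 : (θ-φ)/2 < π := by linarith
      have := (Real.sin_eq_zero_iff_of_lt_of_lt hb1 hb2).mp h
      apply hne; linarith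
    -- derivative building blocks
    have dA : HasDerivAt (fun x : ℝ => (n:ℝ)*x) (n:ℝ) θ := by
      simpa using (hasDerivAt_id θ).const_mul (n:ℝ)
    have dsin : HasDerivAt (fun x : ℝ => Real.sin ((n:ℝ)*x)) (Real.cos ((n:ℝ)*θ) * n) θ := by
      have := (Real.hasDerivAt_sin ((n:ℝ)*θ)).comp θ dA
      exact this
    have d1 : HasDerivAt (fun x : ℝ => Real.sin ((n:ℝ)*x)/n * Real.log 2)
        (Real.cos ((n:ℝ)*θ) * n / n * Real.log 2) θ := (dsin.div_const _).mul_const _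
    have dq : HasDerivAt (fun x : ℝ => (x+φ)/2) (1/2 : ℝ) θ := by
      have := ((hasDerivAt_id θ).add_const φ).div_const 2
      simpa using this
    have dw : HasDerivAt (fun x : ℝ => (x-φ)/2) (1/2 : ℝ) θ := by
      have := ((hasDerivAt_id θ).sub_const φ).div_const 2
      simpa using this
    -- ψ derivative at a point v with sin v ≠ 0
    have dψ : ∀ v : ℝ, Real.sin v ≠ 0 → HasDerivAt ψ
        (Real.cos ((n:ℝ)*v) * n * Real.log (Real.sin v)
          + Real.sin ((n:ℝ)*v) * ((Real.sin v)⁻¹ * Real.cos v)) v := by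
      intro v hv
      rw [hψalt]
      have dAv : HasDerivAt (fun x : ℝ => (n:ℝ)*x) (n:ℝ) v := by
        simpa using (hasDerivAt_id v).const_mul (n:ℝ)
      have dsv : HasDerivAt (fun x : ℝ => Real.sin ((n:ℝ)*x)) (Real.cos ((n:ℝ)*v) * n) v := by
        have := (Real.hasDerivAt_sin ((n:ℝ)*v)).comp v dAv
        exact this
      have dlog : HasDerivAt (fun x : ℝ => Real.log (Real.sin x))
          ((Real.sin v)⁻¹ * Real.cos v) v := by
        have := (Real.hasDerivAt_log hv).comp v (Real.hasDerivAt_sin v)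
        exact this
      exact dsv.mul dlog
    have dψw : HasDerivAt (fun x : ℝ => ψ ((x-φ)/2))
        ((Real.cos ((n:ℝ)*((θ-φ)/2)) * n * Real.log (Real.sin ((θ-φ)/2))
          + Real.sin ((n:ℝ)*((θ-φ)/2)) * ((Real.sin ((θ-φ)/2))⁻¹ * Real.cos ((θ-φ)/2))) * (1/2)) θ := by
      have := (dψ ((θ-φ)/2) hsw).comp θ dw
      exact this
    have dψq : HasDerivAt (fun x : ℝ => ψ ((x+φ)/2))
        ((Real.cos ((n:ℝ)*((θ+φ)/2)) * n * Real.log (Real.sin ((θ+φ)/2))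
          + Real.sin ((n:ℝ)*((θ+φ)/2)) * ((Real.sin ((θ+φ)/2))⁻¹ * Real.cos ((θ+φ)/2))) * (1/2)) θ := by
      have := (dψ ((θ+φ)/2) hsq).comp θ dq
      exact this
    have dcq : HasDerivAt (fun x : ℝ => Real.cos ((n:ℝ)*((x+φ)/2)))
        (-Real.sin ((n:ℝ)*((θ+φ)/2)) * ((n:ℝ)*(1/2))) θ := by
      have dinner : HasDerivAt (fun x : ℝ => (n:ℝ)*((x+φ)/2)) ((n:ℝ)*(1/2)) θ := dq.const_mul _
      have := (Real.hasDerivAt_cos ((n:ℝ)*((θ+φ)/2))).comp θ dinner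
      exact this
    have dcw : HasDerivAt (fun x : ℝ => Real.cos ((n:ℝ)*((x-φ)/2)))
        (-Real.sin ((n:ℝ)*((θ-φ)/2)) * ((n:ℝ)*(1/2))) θ := by
      have dinner : HasDerivAt (fun x : ℝ => (n:ℝ)*((x-φ)/2)) ((n:ℝ)*(1/2)) θ := dw.const_mul _
      have := (Real.hasDerivAt_cos ((n:ℝ)*((θ-φ)/2))).comp θ dinner
      exact this
    have dterm : HasDerivAt (fun x : ℝ =>
        Real.cos ((n:ℝ)*((x+φ)/2)) * ψ ((x-φ)/2) + Real.cos ((n:ℝ)*((x-φ)/2)) * ψ ((x+φ)/2))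
        ((-Real.sin ((n:ℝ)*((θ+φ)/2)) * ((n:ℝ)*(1/2))) * ψ ((θ-φ)/2)
          + Real.cos ((n:ℝ)*((θ+φ)/2)) * ((Real.cos ((n:ℝ)*((θ-φ)/2)) * n * Real.log (Real.sin ((θ-φ)/2))
              + Real.sin ((n:ℝ)*((θ-φ)/2)) * ((Real.sin ((θ-φ)/2))⁻¹ * Real.cos ((θ-φ)/2))) * (1/2))
          + ((-Real.sin ((n:ℝ)*((θ-φ)/2)) * ((n:ℝ)*(1/2))) * ψ ((θ+φ)/2)
          + Real.cos ((n:ℝ)*((θ-φ)/2)) * ((Real.cos ((n:ℝ)*((θ+φ)/2)) * n * Real.log (Real.sin ((θ+φ)/2))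
              + Real.sin ((n:ℝ)*((θ+φ)/2)) * ((Real.sin ((θ+φ)/2))⁻¹ * Real.cos ((θ+φ)/2))) * (1/2)))) θ :=
      (dcq.mul dψw).add (dcw.mul dψq)
    have dH := d1.add ((dterm.const_mul ((2:ℝ)/n)))
    -- now convert
    have hgoal : HasDerivAt H _ θ := dH
    convert hgoal using 1
    -- algebraic identity : g θ = derivative expression
    have hθIoc : θ ∈ Ioc (0:ℝ) π := ⟨hθ0, le_of_lt hθπ⟩
    have hne2 : θ ≠ 2*π - φ := by intro h; rw [h] at hθπ; linarith
    have hlog : Real.log |a - Real.cos θ|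
        = Real.log 2 + Real.log |Real.sin ((θ + φ)/2)| + Real.log |Real.sin ((θ - φ)/2)| := by
      rw [← hacos]
      exact kernel_split ⟨hφ1, hφ2⟩ hθIoc hne hne2
    have hcc : Real.cos φ - Real.cos θ = 2 * Real.sin ((θ+φ)/2) * Real.sin ((θ-φ)/2) := by
      rw [Real.cos_sub_cos]
      rw [show (φ+θ)/2 = (θ+φ)/2 by ring, show (φ-θ)/2 = -((θ-φ)/2) by ring, Real.sin_neg]
      ring
    have hccne : Real.cos φ - Real.cos θ ≠ 0 := by
      rw [hcc]
      exact mul_ne_zero (mul_ne_zero two_ne_zero hsq) hsw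
    have hPt : Ptrig φ n θ = (Real.sin θ * Real.sin ((n:ℝ)*θ)
        - Real.sin φ * Real.sin ((n:ℝ)*φ)) / (Real.cos φ - Real.cos θ) := by
      rw [eq_div_iff hccne]
      linear_combination - Ptrig_id φ n hn θ
    -- expansions
    have rsθ : Real.sin θ = Real.sin ((θ+φ)/2) * Real.cos ((θ-φ)/2)
        + Real.cos ((θ+φ)/2) * Real.sin ((θ-φ)/2) := by
      rw [← Real.sin_add]; congr 1; ring
    have rsφ : Real.sin φ = Real.sin ((θ+φ)/2) * Real.cos ((θ-φ)/2)
        - Real.cos ((θ+φ)/2) * Real.sin ((θ-φ)/2) := by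
      rw [← Real.sin_sub]; congr 1; ring
    have rsnθ : Real.sin ((n:ℝ)*θ) = Real.sin ((n:ℝ)*((θ+φ)/2)) * Real.cos ((n:ℝ)*((θ-φ)/2))
        + Real.cos ((n:ℝ)*((θ+φ)/2)) * Real.sin ((n:ℝ)*((θ-φ)/2)) := by
      rw [← Real.sin_add]; congr 1; ring
    have rsnφ : Real.sin ((n:ℝ)*φ) = Real.sin ((n:ℝ)*((θ+φ)/2)) * Real.cos ((n:ℝ)*((θ-φ)/2))
        - Real.cos ((n:ℝ)*((θ+φ)/2)) * Real.sin ((n:ℝ)*((θ-φ)/2)) := by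
      rw [← Real.sin_sub]; congr 1; ring
    have rcnθ : Real.cos ((n:ℝ)*θ) = Real.cos ((n:ℝ)*((θ+φ)/2)) * Real.cos ((n:ℝ)*((θ-φ)/2))
        - Real.sin ((n:ℝ)*((θ+φ)/2)) * Real.sin ((n:ℝ)*((θ-φ)/2)) := by
      rw [← Real.cos_add]; congr 1; ring
    simp only [hg, hψ]
    rw [hlog, hPt, hcc, rsθ, rsφ, rsnθ, rsnφ, rcnθ]
    simp only [Real.log_abs]
    field_simp
    ring
  -- FTC on the two pieces
  have key : ∀ c d : ℝ, 0 ≤ c → d ≤ π → c ≤ d → (∀ θ ∈ Ioo c d, θ ≠ φ) →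
      ∫ θ in c..d, g θ = H d - H c := by
    intro c d hc hd hcd hneq
    apply intervalIntegral.integral_eq_sub_of_hasDeriv_right_of_le hcd
      Hcont.continuousOn ?_ (hgint.mono_set ?_)
    · intro θ hθ
      exact (hderiv θ ⟨lt_of_le_of_lt hc hθ.1, lt_of_lt_of_le hθ.2 hd⟩
        (hneq θ hθ)).hasDerivWithinAt
    · rw [Set.uIcc_of_le hcd, Set.uIcc_of_le (le_of_lt pi_pos)]
      exact Set.Icc_subset_Icc hc hd
  have part1 : ∫ θ in (0:ℝ)..φ, g θ = H φ - H 0 :=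
    key 0 φ le_rfl hφ2 hφ1 (fun θ hθ => ne_of_lt hθ.2)
  have part2 : ∫ θ in φ..π, g θ = H π - H φ :=
    key φ π hφ1 le_rfl hφ2 (fun θ hθ => ne_of_gt hθ.1)
  have hsub1 : IntervalIntegrable g volume 0 φ := by
    apply hgint.mono_set
    rw [Set.uIcc_of_le hφ1, Set.uIcc_of_le (le_of_lt pi_pos)]
    exact Set.Icc_subset_Icc le_rfl hφ2
  have hsub2 : IntervalIntegrable g volume φ π := by
    apply hgint.mono_set
    rw [Set.uIcc_of_le hφ2, Set.uIcc_of_le (le_of_lt pi_pos)]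
    exact Set.Icc_subset_Icc hφ1 le_rfl
  have htot : ∫ θ in (0:ℝ)..π, g θ = 0 := by
    rw [← intervalIntegral.integral_add_adjacent_intervals hsub1 hsub2, part1, part2, H0, Hpi]
    ring
  have hsplit : ∫ θ in (0:ℝ)..π, g θ
      = (∫ θ in (0:ℝ)..π, Real.cos ((n:ℝ)*θ) * Real.log |a - Real.cos θ|)
        + ∫ θ in (0:ℝ)..π, (1/(n:ℝ)) * Ptrig φ n θ := by
    rw [hg]
    exact intervalIntegral.integral_add h1int h2int
  have hPint : ∫ θ in (0:ℝ)..π, (1/(n:ℝ)) * Ptrig φ n θ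
      = (1/(n:ℝ)) * (π * Real.cos ((n:ℝ)*φ)) := by
    rw [intervalIntegral.integral_const_mul, Ptrig_int φ n hn]
  rw [htot, hPint] at hsplit
  have := hsplit
  field_simp at this ⊢
  linarith

lemma Dpos {r : ℝ} (hr : |r| < 1) (c : ℝ) (hc : |c| ≤ 1) :
    0 < 1 - 2*r*c + r^2 := by
  have h1 : 2*r*c ≤ 2*|r| := by
    have : r * c ≤ |r| * |c| := le_trans (le_abs_self _) (by rw [abs_mul])
    nlinarith [abs_nonneg r, abs_nonneg c]
  have h2 : |r|^2 = r^2 := sq_abs r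
  nlinarith [abs_nonneg r]

lemma normSq_one_sub {r θ : ℝ} :
    Complex.normSq (1 - (r : ℂ) * Complex.exp (θ * Complex.I))
      = 1 - 2*r*Real.cos θ + r^2 := by
  have hre : (1 - (r : ℂ) * Complex.exp (θ * Complex.I)).re = 1 - r * Real.cos θ := by
    simp [Complex.exp_ofReal_mul_I_re, Complex.exp_ofReal_mul_I_im]
  have him : (1 - (r : ℂ) * Complex.exp (θ * Complex.I)).im = -(r * Real.sin θ) := by
    simp [Complex.exp_ofReal_mul_I_re, Complex.exp_ofReal_mul_I_im]
  rw [Complex.normSq_apply, hre, him]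
  nlinarith [Real.sin_sq_add_cos_sq θ]

lemma zpow_re {r θ : ℝ} (k : ℕ) :
    (((r : ℂ) * Complex.exp (θ * Complex.I)) ^ k).re = r^k * Real.cos (k * θ) := by
  rw [mul_pow, ← Complex.exp_nat_mul]
  have e : (k : ℂ) * (θ * Complex.I) = ((k * θ : ℝ) : ℂ) * Complex.I := by
    push_cast; ring
  rw [e]
  rw [show ((r:ℂ))^k = ((r^k : ℝ) : ℂ) by push_cast; ring]
  rw [Complex.re_ofReal_mul, Complex.exp_ofReal_mul_I_re]

lemma poisson_hasSum {r : ℝ} (hr : |r| < 1) (θ : ℝ) :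
    HasSum (fun k : ℕ => 2*r^(k+1)*Real.cos ((k+1) * θ))
      ((1-r^2)/(1-2*r*Real.cos θ+r^2) - 1) := by
  set z : ℂ := (r : ℂ) * Complex.exp (θ * Complex.I) with hz
  have hnorm : ‖z‖ < 1 := by
    rw [hz]
    rw [norm_mul, Complex.norm_real]
    rw [show ‖Complex.exp (θ * Complex.I)‖ = 1 by
      rw [Complex.norm_exp_ofReal_mul_I] ]
    simpa using hr
  have hgeom := hasSum_geometric_of_norm_lt_one hnorm
  have hshift : HasSum (fun k : ℕ => z^(k+1)) ((1-z)⁻¹ - 1) := by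
    have := (hasSum_nat_add_iff' (f := fun k : ℕ => z^k) 1).mpr hgeom
    simpa using this
  have hre := Complex.hasSum_re hshift
  have hre2 := hre.mul_left 2
  have hD : Complex.normSq (1 - z) = 1 - 2*r*Real.cos θ + r^2 := normSq_one_sub
  have hDpos : (0:ℝ) < 1 - 2*r*Real.cos θ + r^2 := Dpos hr _ (Real.abs_cos_le_one θ)
  convert hre2 using 1
  · rfl
  · funext k
    rw [zpow_re (k+1)]
    push_cast
    ring
  · rw [Complex.sub_re, Complex.inv_re, hD, Complex.one_re]
    have hre1z : (1 - z).re = 1 - r * Real.cos θ := by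
      simp [hz, Complex.exp_ofReal_mul_I_re]
    rw [hre1z]
    rw [div_sub_one hDpos.ne', div_sub_one hDpos.ne', ← mul_div_assoc]; congr 1
    ring


lemma log_hasSum {r : ℝ} (hr : |r| < 1) (θ : ℝ) :
    HasSum (fun k : ℕ => r^(k+1)*Real.cos ((k+1) * θ)/(k+1))
      (-(1/2)*Real.log (1-2*r*Real.cos θ+r^2)) := by
  set z : ℂ := (r : ℂ) * Complex.exp (θ * Complex.I) with hz
  have hnorm : ‖z‖ < 1 := by
    rw [hz, norm_mul, Complex.norm_real]
    rw [show ‖Complex.exp (θ * Complex.I)‖ = 1 by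
      rw [Complex.norm_exp_ofReal_mul_I] ]
    simpa using hr
  have htay := Complex.hasSum_taylorSeries_neg_log hnorm
  have hshift : HasSum (fun k : ℕ => z^(k+1)/((k:ℂ)+1)) (-Complex.log (1-z)) := by
    have := (hasSum_nat_add_iff' (f := fun k : ℕ => z^k/(k:ℂ)) 1).mpr htay
    simp only [Finset.range_one, Finset.sum_singleton, Nat.cast_zero, div_zero,
      pow_zero, sub_zero] at this
    convert this using 2 with k
    · rfl
    push_cast
    ring
  have hre := Complex.hasSum_re hshift
  have hD : Complex.normSq (1 - z) = 1 - 2*r*Real.cos θ + r^2 := normSq_one_sub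
  have hDpos : (0:ℝ) < 1 - 2*r*Real.cos θ + r^2 := Dpos hr _ (Real.abs_cos_le_one θ)
  convert hre using 1
  · funext k
    have e : ((k:ℂ)+1) = (((k:ℝ)+1 : ℝ) : ℂ) := by push_cast; ring
    rw [e, Complex.div_ofReal_re, zpow_re (k+1)]
    push_cast
    ring
  · rw [Complex.neg_re, Complex.log_re, Complex.norm_def, hD, Real.log_sqrt hDpos.le]
    ring

lemma swap_int {r : ℝ} (hr : |r| < 1) {f : ℝ → ℝ}
    (hf : IntervalIntegrable f volume 0 π) :
    ∫ θ in Ioc (0:ℝ) π, f θ * ((1-r^2)/(1-2*r*Real.cos θ+r^2) - 1)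
      = ∑' k : ℕ, ∫ θ in Ioc (0:ℝ) π, f θ * (2*r^(k+1)*Real.cos ((k+1)*θ)) := by
  have hfm : AEStronglyMeasurable f (volume.restrict (Ioc 0 π)) := by
    have := (intervalIntegrable_iff_integrableOn_Ioc_of_le (le_of_lt Real.pi_pos)).mp hf
    exact this.aestronglyMeasurable
  have hptwise : ∀ θ : ℝ, f θ * ((1-r^2)/(1-2*r*Real.cos θ+r^2) - 1)
      = ∑' k : ℕ, f θ * (2*r^(k+1)*Real.cos ((k+1)*θ)) :=
    fun θ => ((poisson_hasSum hr θ).mul_left (f θ)).tsum_eq.symm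
  rw [MeasureTheory.integral_congr_ae (Filter.Eventually.of_forall hptwise)]
  have hfin : IntegrableOn f (Ioc 0 π) volume :=
    (intervalIntegrable_iff_integrableOn_Ioc_of_le (le_of_lt Real.pi_pos)).mp hf
  have hM : (∫⁻ θ in Ioc (0:ℝ) π, ‖f θ‖₊) ≠ ⊤ := hfin.2.ne
  apply MeasureTheory.integral_tsum
  · intro k
    apply hfm.mul
    exact (Continuous.aestronglyMeasurable (by continuity))
  · -- summability of lintegrals
    have hbound : ∀ k : ℕ, (∫⁻ θ in Ioc (0:ℝ) π, ‖f θ * (2*r^(k+1)*Real.cos ((k+1)*θ))‖₊)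
        ≤ ENNReal.ofReal (2*|r|^(k+1)) * ∫⁻ θ in Ioc (0:ℝ) π, ‖f θ‖₊ := by
      intro k
      rw [← MeasureTheory.lintegral_const_mul' _ _ ENNReal.ofReal_ne_top]
      apply MeasureTheory.lintegral_mono
      intro θ
      have h1 : ‖f θ * (2*r^(k+1)*Real.cos ((k+1)*θ))‖ ≤ 2*|r|^(k+1) * ‖f θ‖ := by
        rw [norm_mul]
        rw [mul_comm (2*|r|^(k+1)) ‖f θ‖]
        apply mul_le_mul_of_nonneg_left _ (norm_nonneg _)
        rw [Real.norm_eq_abs, abs_mul, abs_mul, abs_two, abs_pow]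
        have := Real.abs_cos_le_one ((k+1)*θ)
        nlinarith [abs_nonneg r, pow_nonneg (abs_nonneg r) (k+1)]
      calc (‖f θ * (2*r^(k+1)*Real.cos ((k+1)*θ))‖₊ : ℝ≥0∞)
          ≤ ENNReal.ofReal (2*|r|^(k+1) * ‖f θ‖) := by
            rw [← enorm_eq_nnnorm, ← ofReal_norm]
            exact ENNReal.ofReal_le_ofReal h1
        _ = ENNReal.ofReal (2*|r|^(k+1)) * (‖f θ‖₊ : ℝ≥0∞) := by
            rw [ENNReal.ofReal_mul (by positivity), ofReal_norm, enorm_eq_nnnorm]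
    apply ne_top_of_le_ne_top ?_ (ENNReal.tsum_le_tsum hbound)
    rw [ENNReal.tsum_mul_right]
    apply ENNReal.mul_ne_top ?_ hM
    have he : ∀ k : ℕ, ENNReal.ofReal (2*|r|^(k+1))
        = ENNReal.ofReal (2*|r|) * (ENNReal.ofReal |r|)^k := by
      intro k
      rw [← ENNReal.ofReal_pow (abs_nonneg r), ← ENNReal.ofReal_mul (by norm_num)]
      congr 1
      ring
    simp only [he]
    rw [ENNReal.tsum_mul_left]
    apply ENNReal.mul_ne_top ENNReal.ofReal_ne_top
    rw [ENNReal.tsum_geometric]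
    apply ENNReal.inv_ne_top.mpr
    intro h0
    rw [tsub_eq_zero_iff_le] at h0
    have : ENNReal.ofReal |r| < 1 := by
      rw [← ENNReal.ofReal_one]
      exact ENNReal.ofReal_lt_ofReal_iff_of_nonneg (abs_nonneg r) |>.mpr hr
    exact absurd h0 (not_le.mpr this)

lemma poisson_cont {r : ℝ} (hr : |r| < 1) :
    Continuous (fun θ : ℝ => (1-r^2)/(1-2*r*Real.cos θ+r^2)) := by
  apply continuous_const.div
  · continuity
  · intro θ; exact ne_of_gt (Dpos hr _ (Real.abs_cos_le_one θ))

lemma kl0 {r : ℝ} (hr : |r| < 1) :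
    ∫ θ in (0:ℝ)..π, (1-r^2)/(1-2*r*Real.cos θ+r^2) = π := by
  have hple := le_of_lt Real.pi_pos
  have hsw := swap_int hr (f := fun _ : ℝ => (1:ℝ)) intervalIntegrable_const
  have hz : ∀ k : ℕ, ∫ θ in Ioc (0:ℝ) π, (1:ℝ) * (2*r^(k+1)*Real.cos ((k+1)*θ)) = 0 := by
    intro k
    rw [← intervalIntegral.integral_of_le hple]
    have e : ∀ θ:ℝ, (1:ℝ)*(2*r^(k+1)*Real.cos ((k+1)*θ))
        = (2*r^(k+1)) * Real.cos ((k+1)*θ) := fun θ => by ring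
    simp only [e]
    rw [intervalIntegral.integral_const_mul,
      show ((k:ℝ)+1) = ((k+1 : ℕ):ℝ) from by push_cast; ring,
      integral_cos_nat (k+1) (by omega), mul_zero]
  have hts : ∑' k:ℕ, ∫ θ in Ioc (0:ℝ) π, (1:ℝ) * (2*r^(k+1)*Real.cos ((k+1)*θ)) = 0 :=
    (tsum_congr hz).trans tsum_zero
  rw [hts] at hsw
  have hPm1 : ∫ θ in (0:ℝ)..π, ((1-r^2)/(1-2*r*Real.cos θ+r^2) - 1) = 0 := by
    rw [intervalIntegral.integral_of_le hple]
    have e : ∀ θ:ℝ, (1-r^2)/(1-2*r*Real.cos θ+r^2) - 1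
        = (1:ℝ) * ((1-r^2)/(1-2*r*Real.cos θ+r^2) - 1) := fun θ => by ring
    rw [MeasureTheory.integral_congr_ae (Filter.Eventually.of_forall e)]
    exact hsw
  have hsub := intervalIntegral.integral_sub
    ((poisson_cont hr).intervalIntegrable 0 π)
    (show IntervalIntegrable (fun _ : ℝ => (1:ℝ)) volume 0 π from _root_.intervalIntegrable_const)
  rw [hsub] at hPm1
  rw [intervalIntegral.integral_const] at hPm1
  simp only [sub_zero, smul_eq_mul, mul_one] at hPm1
  linarith

lemma kl {r a : ℝ} (hr : |r| < 1) (ha : a ∈ Icc (-1:ℝ) 1) :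
    ∫ θ in (0:ℝ)..π, Real.log |a - Real.cos θ| * ((1-r^2)/(1-2*r*Real.cos θ+r^2))
      = π * Real.log ((1-2*a*r+r^2)/2) := by
  set φ := Real.arccos a with hφdef
  have hple := le_of_lt Real.pi_pos
  have hker := II_kernel a ha
  have hsw := swap_int hr (f := fun θ : ℝ => Real.log |a - Real.cos θ|) hker
  have hterm : ∀ k : ℕ, (∫ θ in Ioc (0:ℝ) π,
        Real.log |a - Real.cos θ| * (2*r^(k+1)*Real.cos ((k+1)*θ)))
      = -2*π*(r^(k+1) * Real.cos ((k+1)*φ)/(k+1)) := by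
    intro k
    rw [← intervalIntegral.integral_of_le hple]
    have e : ∀ θ:ℝ, Real.log |a - Real.cos θ| * (2*r^(k+1)*Real.cos ((k+1)*θ))
        = (2*r^(k+1)) * (Real.cos ((k+1)*θ) * Real.log |a - Real.cos θ|) := fun θ => by ring
    simp only [e]
    rw [intervalIntegral.integral_const_mul,
      show ((k:ℝ)+1) = ((k+1 : ℕ):ℝ) from by push_cast; ring,
      En ha (k+1) (by omega)]
    rw [← hφdef]
    push_cast
    ring
  have hsum : HasSum (fun k:ℕ => -2*π*(r^(k+1) * Real.cos ((k+1)*φ)/(k+1)))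
      (-2*π*(-(1/2)*Real.log (1-2*r*Real.cos φ+r^2))) := (log_hasSum hr φ).mul_left _
  have hcosφ : Real.cos φ = a := Real.cos_arccos ha.1 ha.2
  have htsum : ∑' k:ℕ, (∫ θ in Ioc (0:ℝ) π,
        Real.log |a - Real.cos θ| * (2*r^(k+1)*Real.cos ((k+1)*θ)))
      = π * Real.log (1-2*a*r+r^2) := by
    rw [tsum_congr hterm, hsum.tsum_eq, hcosφ]
    rw [show 1-2*r*a+r^2 = 1-2*a*r+r^2 from by ring]
    ring
  have hPm1 : ∫ θ in (0:ℝ)..π,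
      Real.log |a - Real.cos θ| * ((1-r^2)/(1-2*r*Real.cos θ+r^2) - 1)
      = π * Real.log (1-2*a*r+r^2) := by
    rw [intervalIntegral.integral_of_le hple, hsw, htsum]
  have hprod : IntervalIntegrable (fun θ : ℝ =>
      Real.log |a - Real.cos θ| * ((1-r^2)/(1-2*r*Real.cos θ+r^2) - 1)) volume 0 π :=
    hker.mul_continuousOn ((poisson_cont hr).sub continuous_const).continuousOn
  have hexp : ∫ θ in (0:ℝ)..π, Real.log |a - Real.cos θ| * ((1-r^2)/(1-2*r*Real.cos θ+r^2))
      = (∫ θ in (0:ℝ)..π, Real.log |a - Real.cos θ| * ((1-r^2)/(1-2*r*Real.cos θ+r^2) - 1))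
        + ∫ θ in (0:ℝ)..π, Real.log |a - Real.cos θ| := by
    rw [← intervalIntegral.integral_add hprod hker]
    apply intervalIntegral.integral_congr
    intro θ _
    ring
  rw [hexp, hPm1, E0 ha]
  have hDpos : (0:ℝ) < 1-2*a*r+r^2 := by
    have := Dpos hr a (abs_le.mpr ⟨ha.1, ha.2⟩)
    nlinarith
  rw [Real.log_div (ne_of_gt hDpos) two_ne_zero]
  ring

lemma subst_cos {s : ℝ} (hs : 0 < s) (G : ℝ → ℝ) :
    ∫ y in (-s)..s, G y = ∫ θ in Ioo (0:ℝ) π, (s*Real.sin θ) * G (s*Real.cos θ) := by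
  have pi_pos := Real.pi_pos
  rw [intervalIntegral.integral_of_le (by linarith), MeasureTheory.integral_Ioc_eq_integral_Ioo]
  have himg : (fun θ : ℝ => s*Real.cos θ) '' (Ioo 0 π) = Ioo (-s) s := by
    apply Set.eq_of_subset_of_subset
    · rintro y ⟨θ, hθ, rfl⟩
      have h1 : Real.cos θ < Real.cos 0 :=
        Real.strictAntiOn_cos ⟨le_rfl, pi_pos.le⟩ ⟨hθ.1.le, hθ.2.le⟩ hθ.1
      have h2 : Real.cos π < Real.cos θ :=
        Real.strictAntiOn_cos ⟨hθ.1.le, hθ.2.le⟩ ⟨pi_pos.le, le_rfl⟩ hθ.2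
      rw [Real.cos_zero] at h1
      rw [Real.cos_pi] at h2
      constructor
      · show -s < s * Real.cos θ
        nlinarith [mul_pos hs (show (0:ℝ) < Real.cos θ + 1 by linarith)]
      · show s * Real.cos θ < s
        nlinarith [mul_pos hs (show (0:ℝ) < 1 - Real.cos θ by linarith)]
    · intro y hy
      have hb1 : -1 < y/s := by rw [lt_div_iff₀ hs]; nlinarith [hy.1]
      have hb2 : y/s < 1 := by rw [div_lt_iff₀ hs]; nlinarith [hy.2]
      refine ⟨Real.arccos (y/s), ⟨?_, ?_⟩, ?_⟩
      · exact Real.arccos_pos.mpr hb2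
      · rcases lt_or_eq_of_le (Real.arccos_le_pi (y/s)) with h | h
        · exact h
        · exfalso
          have := Real.cos_arccos hb1.le hb2.le
          rw [h, Real.cos_pi] at this
          linarith
      · simp only []
        rw [Real.cos_arccos hb1.le hb2.le]
        field_simp
  rw [← himg, MeasureTheory.integral_image_eq_integral_abs_deriv_smul measurableSet_Ioo
    (f' := fun θ => s * -Real.sin θ)
    (fun θ _ => ((Real.hasDerivAt_cos θ).const_mul s).hasDerivWithinAt)
    ?_ G]
  · apply MeasureTheory.setIntegral_congr_fun measurableSet_Ioo
    intro θ hθ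
    have hsin : 0 < Real.sin θ := Real.sin_pos_of_pos_of_lt_pi hθ.1 hθ.2
    have : |s * -Real.sin θ| = s * Real.sin θ := by
      rw [abs_mul, abs_neg, abs_of_pos hs, abs_of_pos hsin]
    simp only [this, smul_eq_mul]
  · intro u hu v hv h
    have : Real.cos u = Real.cos v := by
      simp only [] at h
      exact mul_left_cancel₀ (ne_of_gt hs) h
    exact Real.injOn_cos ⟨hu.1.le, hu.2.le⟩ ⟨hv.1.le, hv.2.le⟩ this

theorem main_t0 (s : ℝ) (hs : s = Real.sqrt (1 - 0 ^ 2)) (x : ℝ) (hx : x ∈ Set.Icc (-s) s) :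
    (∫ y in (-s)..s,
        Real.log (1 / |x - y|) * (1 / Real.pi * Real.sqrt (1 - 0 ^ 2 - y ^ 2) / (1 - y ^ 2)))
      + (0:ℝ) / 2 * Real.log (1 / |x ^ 2 - 1|)
      = Real.log 2 - (1 + 0) / 2 * Real.log (1 + 0) - (1 - 0) / 2 * Real.log (1 - 0) := by
  have pi_pos := Real.pi_pos
  have hs1 : s = 1 := by rw [hs]; norm_num
  subst hs1
  rw [subst_cos one_pos]
  have hcong : ∀ θ ∈ Ioo (0:ℝ) π,
      (1*Real.sin θ) * (Real.log (1 / |x - 1*Real.cos θ|)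
        * (1 / Real.pi * Real.sqrt (1 - 0 ^ 2 - (1*Real.cos θ) ^ 2) / (1 - (1*Real.cos θ) ^ 2)))
      = (-(Real.pi⁻¹)) * Real.log |x - Real.cos θ| := by
    intro θ hθ
    have hsin : 0 < Real.sin θ := Real.sin_pos_of_pos_of_lt_pi hθ.1 hθ.2
    simp only [one_mul]
    have e : 1 - (0:ℝ) ^ 2 - Real.cos θ ^ 2 = Real.sin θ ^ 2 := by
      linear_combination - Real.sin_sq_add_cos_sq θ
    have e2 : 1 - Real.cos θ ^ 2 = Real.sin θ ^ 2 := by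
      linear_combination - Real.sin_sq_add_cos_sq θ
    rw [e, e2, Real.sqrt_sq hsin.le, one_div, Real.log_inv]
    field_simp
  rw [MeasureTheory.setIntegral_congr_fun measurableSet_Ioo hcong]
  rw [← MeasureTheory.integral_Ioc_eq_integral_Ioo,
    ← intervalIntegral.integral_of_le pi_pos.le]
  rw [intervalIntegral.integral_const_mul]
  have hxmem : x ∈ Icc (-1:ℝ) 1 := hx
  rw [E0 hxmem]
  have : Real.log 1 = 0 := Real.log_one
  rw [show (1:ℝ)+0 = 1 by ring, show (1:ℝ)-0 = 1 by ring, this]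
  field_simp
  ring

theorem main_tpos (t : ℝ) (ht0 : 0 < t) (ht1 : t < 1)
    (s : ℝ) (hs : s = Real.sqrt (1 - t ^ 2)) (x : ℝ) (hx : x ∈ Set.Icc (-s) s) :
    (∫ y in (-s)..s,
        Real.log (1 / |x - y|) * (1 / Real.pi * Real.sqrt (1 - t ^ 2 - y ^ 2) / (1 - y ^ 2)))
      + t / 2 * Real.log (1 / |x ^ 2 - 1|)
      = Real.log 2 - (1 + t) / 2 * Real.log (1 + t) - (1 - t) / 2 * Real.log (1 - t) := by
  have pi_pos := Real.pi_pos
  have h1t : (0:ℝ) < 1 - t^2 := by nlinarith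
  have hs2 : s^2 = 1 - t^2 := by rw [hs]; exact Real.sq_sqrt h1t.le
  have hs0 : 0 < s := by rw [hs]; exact Real.sqrt_pos.mpr h1t
  have hslt1 : s < 1 := by nlinarith
  have hxs : -s ≤ x := hx.1
  have hxs' : x ≤ s := hx.2
  have hxlt : x < 1 := by linarith
  have hxgt : -1 < x := by linarith
  -- a and r
  obtain ⟨a, hadef⟩ : ∃ a : ℝ, a = x/s := ⟨_, rfl⟩
  have ha : a ∈ Icc (-1:ℝ) 1 := by
    constructor
    · rw [hadef, le_div_iff₀ hs0]; linarith
    · rw [hadef, div_le_one hs0]; linarith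
  obtain ⟨r, hrdef⟩ : ∃ r : ℝ, r = (1-t)/s := ⟨_, rfl⟩
  have hr0 : 0 < r := by rw [hrdef]; exact div_pos (by linarith) hs0
  have hrs : r * s = 1 - t := by rw [hrdef]; field_simp
  have hrlt : r < 1 := by
    rw [hrdef, div_lt_one hs0]
    nlinarith
  have hrabs : |r| < 1 := abs_lt.mpr ⟨by linarith, hrlt⟩
  have hrabs' : |(-r)| < 1 := by rwa [abs_neg]
  -- algebraic relations
  have hr2 : r^2 * (1+t) = 1 - t := by
    have h1 : r^2 * ((1-t)*(1+t)) = (1-t)^2 := by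
      have : (r*s)^2 = (1-t)^2 := by rw [hrs]
      nlinarith [hs2]
    have h2 : (r^2*(1+t)) * (1-t) = (1-t) * (1-t) := by linarith [h1]
    exact mul_right_cancel₀ (by linarith : (1:ℝ)-t ≠ 0) (by linarith [h2])
  have hts : t*(1+r^2) = 1 - r^2 := by linear_combination hr2
  have hsr : s*(1+r^2) = 2*r := by
    have h2 : s*(1+r^2)*s = 2*r*s := by
      linear_combination (1+r^2)*hs2 + (1-t)*hr2 + (-2)*hrs
    exact mul_right_cancel₀ (ne_of_gt hs0) h2
  have hsr2 : s*(1-r^2) = 2*t*r := by linear_combination (-s)*hts + t*hsr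
  -- pointwise bounds
  have hBden1 : ∀ θ : ℝ, 0 < 1 - s*Real.cos θ := by
    intro θ
    have h1 := Real.neg_one_le_cos θ
    have h2 := Real.cos_le_one θ
    nlinarith
  have hBden2 : ∀ θ : ℝ, 0 < 1 + s*Real.cos θ := by
    intro θ
    have h1 := Real.neg_one_le_cos θ
    have h2 := Real.cos_le_one θ
    nlinarith
  have hB1 : ∀ θ : ℝ, t/(1-s*Real.cos θ) = (1-r^2)/(1-2*r*Real.cos θ+r^2) := by
    intro θ
    rw [div_eq_div_iff (ne_of_gt (hBden1 θ)) (ne_of_gt (Dpos hrabs _ (Real.abs_cos_le_one θ)))]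
    linear_combination hts + Real.cos θ * hsr2
  have hB2 : ∀ θ : ℝ, t/(1+s*Real.cos θ) = (1-r^2)/(1+2*r*Real.cos θ+r^2) := by
    intro θ
    have hD : 0 < 1+2*r*Real.cos θ+r^2 := by
      have := Dpos hrabs' (Real.cos θ) (Real.abs_cos_le_one θ)
      nlinarith
    rw [div_eq_div_iff (ne_of_gt (hBden2 θ)) (ne_of_gt hD)]
    linear_combination hts - Real.cos θ * hsr2
  -- substitution
  rw [subst_cos hs0]
  -- pointwise congruence on Ioo
  have hcong : ∀ θ ∈ Ioo (0:ℝ) π,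
      (s*Real.sin θ) * (Real.log (1 / |x - s*Real.cos θ|)
        * (1 / Real.pi * Real.sqrt (1 - t ^ 2 - (s*Real.cos θ) ^ 2) / (1 - (s*Real.cos θ) ^ 2)))
      = (-(Real.pi⁻¹)) * Real.log |x - s*Real.cos θ|
        + (t/(2*π)) * (Real.log |x - s*Real.cos θ| * ((1-r^2)/(1-2*r*Real.cos θ+r^2)))
        + (t/(2*π)) * (Real.log |x - s*Real.cos θ| * ((1-r^2)/(1+2*r*Real.cos θ+r^2))) := by
    intro θ hθ
    have hsin : 0 < Real.sin θ := Real.sin_pos_of_pos_of_lt_pi hθ.1 hθ.2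
    have hC : 0 < 1 - (s*Real.cos θ)^2 := by
      have := hBden1 θ; have := hBden2 θ; nlinarith
    have e : 1 - t^2 - (s*Real.cos θ)^2 = (s*Real.sin θ)^2 := by
      linear_combination (-1)*hs2 + (-(s^2))*(Real.sin_sq_add_cos_sq θ)
    have e3 : (s*Real.sin θ)^2 = (1 - (s*Real.cos θ)^2) - t^2 := by linear_combination (-1)*e
    rw [e, Real.sqrt_sq (by positivity), one_div, Real.log_inv]
    rw [← hB1 θ, ← hB2 θ]
    have w_id : (s*Real.sin θ)^2/(1-(s*Real.cos θ)^2)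
        = 1 - (t/2)*(t/(1-s*Real.cos θ)) - (t/2)*(t/(1+s*Real.cos θ)) := by
      rw [e3, sub_div, div_self (ne_of_gt hC)]
      have hsplit : t^2/(1-(s*Real.cos θ)^2)
          = (t/2)*(t/(1-s*Real.cos θ)) + (t/2)*(t/(1+s*Real.cos θ)) := by
        field_simp [(hBden1 θ).ne', (hBden2 θ).ne', hC.ne', (by rw [← mul_pow]; exact hC.ne' : 1 - s^2*Real.cos θ^2 ≠ 0)]
        ring
      rw [hsplit]
      ring
    have hπ : Real.pi ≠ 0 := ne_of_gt pi_pos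
    linear_combination (-(Real.log |x - s*Real.cos θ|)/Real.pi) * w_id
  rw [MeasureTheory.setIntegral_congr_fun measurableSet_Ioo hcong]
  rw [← MeasureTheory.integral_Ioc_eq_integral_Ioo, ← intervalIntegral.integral_of_le pi_pos.le]
  -- integrability of the scaled kernel
  have hae : ∀ᵐ θ ∂volume, θ ∈ Ι (0:ℝ) π →
      Real.log |x - s*Real.cos θ| = Real.log s + Real.log |a - Real.cos θ| := by
    have hnull : ∀ᵐ θ : ℝ ∂volume, θ ≠ Real.arccos a :=
      (Set.countable_singleton _).ae_notMem volume
    filter_upwards [hnull] with θ hne hθ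
    rw [Set.uIoc_of_le pi_pos.le] at hθ
    have hca : Real.cos θ ≠ a := by
      intro h
      apply hne
      have h1 : Real.cos θ = Real.cos (Real.arccos a) := by
        rw [h, Real.cos_arccos ha.1 ha.2]
      exact Real.injOn_cos ⟨hθ.1.le, hθ.2⟩ ⟨Real.arccos_nonneg a, Real.arccos_le_pi a⟩ h1
    have hxe : x - s*Real.cos θ = s*(a - Real.cos θ) := by
      rw [hadef]; field_simp
    rw [hxe, abs_mul, abs_of_pos hs0,
      Real.log_mul (ne_of_gt hs0) (abs_ne_zero.mpr (sub_ne_zero.mpr (Ne.symm hca)))]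
  have hIIa : IntervalIntegrable (fun θ : ℝ => Real.log |x - s*Real.cos θ|) volume 0 π := by
    have hG : IntervalIntegrable (fun θ : ℝ => Real.log s + Real.log |a - Real.cos θ|)
        volume 0 π := intervalIntegrable_const.add (II_kernel a ha)
    rw [intervalIntegrable_iff] at hG ⊢
    apply hG.congr
    rw [Filter.EventuallyEq, ae_restrict_iff' measurableSet_uIoc]
    filter_upwards [hae] with θ hθ hmem
    exact (hθ hmem).symm
  have hcP2 : Continuous (fun θ : ℝ => (1-r^2)/(1+2*r*Real.cos θ+r^2)) := by
    apply continuous_const.div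
    · continuity
    · intro θ
      have := Dpos hrabs' (Real.cos θ) (Real.abs_cos_le_one θ)
      intro h; rw [← h] at this; nlinarith [this]
  have hIIb : IntervalIntegrable (fun θ : ℝ =>
      Real.log |x - s*Real.cos θ| * ((1-r^2)/(1-2*r*Real.cos θ+r^2))) volume 0 π :=
    hIIa.mul_continuousOn (poisson_cont hrabs).continuousOn
  have hIIc : IntervalIntegrable (fun θ : ℝ =>
      Real.log |x - s*Real.cos θ| * ((1-r^2)/(1+2*r*Real.cos θ+r^2))) volume 0 π :=
    hIIa.mul_continuousOn hcP2.continuousOn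
  -- split the integral
  rw [intervalIntegral.integral_add (((hIIa.const_mul _).add (hIIb.const_mul _))) (hIIc.const_mul _),
      intervalIntegral.integral_add (hIIa.const_mul _) (hIIb.const_mul _),
      intervalIntegral.integral_const_mul, intervalIntegral.integral_const_mul,
      intervalIntegral.integral_const_mul]
  -- values of the three integrals
  have hval1 : ∫ θ in (0:ℝ)..π, Real.log |x - s*Real.cos θ|
      = π * Real.log s - π * Real.log 2 := by
    rw [intervalIntegral.integral_congr_ae hae,
      intervalIntegral.integral_add intervalIntegrable_const (II_kernel a ha),
      intervalIntegral.integral_const, E0 ha]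
    simp [smul_eq_mul]
    ring
  have haeP1 : ∀ᵐ θ ∂volume, θ ∈ Ι (0:ℝ) π →
      Real.log |x - s*Real.cos θ| * ((1-r^2)/(1-2*r*Real.cos θ+r^2))
      = Real.log s * ((1-r^2)/(1-2*r*Real.cos θ+r^2))
        + Real.log |a - Real.cos θ| * ((1-r^2)/(1-2*r*Real.cos θ+r^2)) := by
    filter_upwards [hae] with θ hθ hmem
    rw [hθ hmem]; ring
  have haeP2 : ∀ᵐ θ ∂volume, θ ∈ Ι (0:ℝ) π →
      Real.log |x - s*Real.cos θ| * ((1-r^2)/(1+2*r*Real.cos θ+r^2))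
      = Real.log s * ((1-r^2)/(1+2*r*Real.cos θ+r^2))
        + Real.log |a - Real.cos θ| * ((1-r^2)/(1+2*r*Real.cos θ+r^2)) := by
    filter_upwards [hae] with θ hθ hmem
    rw [hθ hmem]; ring
  have hval2 : ∫ θ in (0:ℝ)..π,
      Real.log |x - s*Real.cos θ| * ((1-r^2)/(1-2*r*Real.cos θ+r^2))
      = π * Real.log s + π * Real.log ((1-2*a*r+r^2)/2) := by
    rw [intervalIntegral.integral_congr_ae haeP1,
      intervalIntegral.integral_add
        (((poisson_cont hrabs).intervalIntegrable 0 π).const_mul _)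
        ((II_kernel a ha).mul_continuousOn (poisson_cont hrabs).continuousOn),
      intervalIntegral.integral_const_mul, kl0 hrabs, kl hrabs ha]
    ring
  have hval3 : ∫ θ in (0:ℝ)..π,
      Real.log |x - s*Real.cos θ| * ((1-r^2)/(1+2*r*Real.cos θ+r^2))
      = π * Real.log s + π * Real.log ((1+2*a*r+r^2)/2) := by
    rw [intervalIntegral.integral_congr_ae haeP2,
      intervalIntegral.integral_add
        ((hcP2.intervalIntegrable 0 π).const_mul _)
        ((II_kernel a ha).mul_continuousOn hcP2.continuousOn),
      intervalIntegral.integral_const_mul]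
    have hkl0' : ∫ θ in (0:ℝ)..π, (1-r^2)/(1+2*r*Real.cos θ+r^2) = π := by
      refine Eq.trans ?_ (kl0 hrabs')
      apply intervalIntegral.integral_congr
      intro θ _
      ring_nf
    have hkl' : ∫ θ in (0:ℝ)..π, Real.log |a - Real.cos θ| * ((1-r^2)/(1+2*r*Real.cos θ+r^2))
        = π * Real.log ((1+2*a*r+r^2)/2) := by
      have hthis := kl hrabs' ha
      rw [show 1-2*a*(-r)+(-r)^2 = 1+2*a*r+r^2 by ring] at hthis
      refine Eq.trans ?_ hthis
      apply intervalIntegral.integral_congr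
      intro θ _
      ring_nf
    rw [hkl0', hkl']
    ring
  rw [hval1, hval2, hval3]
  -- final algebra with logarithms
  have harg1 : (1-2*a*r+r^2)/2 = (1-t)*(1-x)/s^2 := by
    rw [hadef, hrdef]
    field_simp
    linear_combination hs2
  have harg2 : (1+2*a*r+r^2)/2 = (1-t)*(1+x)/s^2 := by
    rw [hadef, hrdef]
    field_simp
    linear_combination hs2
  have hlogs : Real.log s = (Real.log (1-t) + Real.log (1+t))/2 := by
    rw [hs, show 1-t^2 = (1-t)*(1+t) by ring, Real.sqrt_mul (by linarith) _,
      Real.log_mul, Real.log_sqrt (by linarith), Real.log_sqrt (by linarith)]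
    · ring
    · exact ne_of_gt (Real.sqrt_pos.mpr (by linarith))
    · exact ne_of_gt (Real.sqrt_pos.mpr (by linarith))
  have hlog1 : Real.log ((1-2*a*r+r^2)/2)
      = Real.log (1-t) + Real.log (1-x) - 2*Real.log s := by
    rw [harg1, Real.log_div (ne_of_gt (by nlinarith : (0:ℝ) < (1-t)*(1-x))) (pow_ne_zero 2 (ne_of_gt hs0)), Real.log_mul (by linarith) (by linarith),
      show s^2 = s*s by ring, Real.log_mul (ne_of_gt hs0) (ne_of_gt hs0)]
    ring
  have hlog2 : Real.log ((1+2*a*r+r^2)/2)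
      = Real.log (1-t) + Real.log (1+x) - 2*Real.log s := by
    rw [harg2, Real.log_div (ne_of_gt (by nlinarith : (0:ℝ) < (1-t)*(1+x))) (pow_ne_zero 2 (ne_of_gt hs0)), Real.log_mul (by linarith) (by linarith),
      show s^2 = s*s by ring, Real.log_mul (ne_of_gt hs0) (ne_of_gt hs0)]
    ring
  have hφ : t/2 * Real.log (1/|x^2-1|) = -(t/2)*(Real.log (1-x) + Real.log (1+x)) := by
    rw [show |x^2-1| = 1-x^2 by rw [abs_of_neg (by nlinarith)]; ring,
      one_div, Real.log_inv, show 1-x^2 = (1-x)*(1+x) by ring,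
      Real.log_mul (by linarith) (by linarith)]
    ring
  rw [hlog1, hlog2, hφ, hlogs]
  field_simp
  ring
/-- **Equilibrium condition on the support.** For `t ∈ [0,1)` and `s = √(1-t²)`, the weighted
potential `U^{μ_t} + φ_t` is identically equal to
`m_t = log 2 − ((1+t)/2)·log(1+t) − ((1−t)/2)·log(1−t)` on the support `[-s,s]` of `μ_t`. -/
theorem weighted_potential_eq_on_support (t : ℝ) (ht : t ∈ Set.Ico (0 : ℝ) 1)
    (s : ℝ) (hs : s = Real.sqrt (1 - t ^ 2)) (x : ℝ) (hx : x ∈ Set.Icc (-s) s) :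
    (∫ y in (-s)..s,
        Real.log (1 / |x - y|) * (1 / Real.pi * Real.sqrt (1 - t ^ 2 - y ^ 2) / (1 - y ^ 2)))
      + t / 2 * Real.log (1 / |x ^ 2 - 1|)
      = Real.log 2 - (1 + t) / 2 * Real.log (1 + t) - (1 - t) / 2 * Real.log (1 - t) := by
  obtain ⟨ht0, ht1⟩ := ht
  rcases eq_or_lt_of_le ht0 with h0 | h0
  · subst h0
    exact main_t0 s hs x hx
  · exact main_tpos t h0 ht1 s hs x hx
end

section
/- Fix t ∈ (0,1) and set s = √(1−t²). Then (1/π)·∫_{−s}^{s} (t/2)·log(1/(1−x²)) / √(s²−x²) dx = t·( log(2/s) − (1/2)·log(1+t) + (1/2)·log(1−t) ). In other words, the mean value of the external field φ_t against the Robin (arcsine) measure of [−s,s] equals t·( log(2/s) − ½log(1+t) + ½log(1−t) ). -/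
open Real MeasureTheory Set

lemma hasSum_pt (r : ℝ) (hr0 : 0 ≤ r) (hr1 : r < 1) (θ : ℝ) :
    HasSum (fun n : ℕ => ((-1) ^ (n + 1) * r ^ n / n) * Real.cos (2 * n * θ))
      (Real.log (1 + 2 * r * Real.cos (2 * θ) + r ^ 2) / 2) := by
  set z : ℂ := (r : ℂ) * Complex.exp ((2 * θ : ℝ) * Complex.I) with hz
  have hnz : ‖z‖ < 1 := by
    rw [hz]
    rw [norm_mul, Complex.norm_exp_ofReal_mul_I,
      Complex.norm_real, Real.norm_of_nonneg hr0, mul_one]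
    exact hr1
  have h := (Complex.hasSum_taylorSeries_log hnz).mapL Complex.reCLM
  have habs : ‖1 + z‖ ^ 2 = 1 + 2 * r * Real.cos (2 * θ) + r ^ 2 := by
    rw [Complex.sq_norm, Complex.normSq_apply]
    have h1 : (1 + z).re = 1 + r * Real.cos (2 * θ) := by
      rw [Complex.add_re, Complex.one_re, hz, Complex.re_ofReal_mul,
        Complex.exp_ofReal_mul_I_re]
    have h2 : (1 + z).im = r * Real.sin (2 * θ) := by
      rw [Complex.add_im, Complex.one_im, hz, Complex.im_ofReal_mul,
        Complex.exp_ofReal_mul_I_im, zero_add]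
    rw [h1, h2]
    have := Real.sin_sq_add_cos_sq (2 * θ)
    nlinarith [this]
  have hterm : ∀ n : ℕ,
      Complex.reCLM ((-1) ^ (n + 1) * z ^ n / n) = ((-1) ^ (n + 1) * r ^ n / n) * Real.cos (2 * n * θ) := by
    intro n
    have hzn : z ^ n = ((r ^ n : ℝ) : ℂ) * Complex.exp ((2 * n * θ : ℝ) * Complex.I) := by
      rw [hz, mul_pow, ← Complex.exp_nat_mul]
      push_cast
      ring_nf
    have : ((-1 : ℂ)) ^ (n + 1) * z ^ n / n
        = (((((-1 : ℝ)) ^ (n + 1) * r ^ n / n : ℝ)) : ℂ) * Complex.exp ((2 * n * θ : ℝ) * Complex.I) := by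
      rw [hzn]; push_cast; ring
    rw [Complex.reCLM_apply, this, Complex.re_ofReal_mul, Complex.exp_ofReal_mul_I_re]
  have hlog : Complex.reCLM (Complex.log (1 + z))
      = Real.log (1 + 2 * r * Real.cos (2 * θ) + r ^ 2) / 2 := by
    rw [Complex.reCLM_apply, Complex.log_re, ← habs, Real.log_pow]
    push_cast; ring
  rw [← hlog]
  exact h.congr_fun fun n => (hterm n).symm

lemma integral_log_g (r : ℝ) (hr0 : 0 ≤ r) (hr1 : r < 1) :
    ∫ θ in Ioc (-(π/2)) (π/2), Real.log (1 + 2 * r * Real.cos (2 * θ) + r ^ 2) = 0 := by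
  set F : ℕ → ℝ → ℝ := fun n θ => ((-1) ^ (n + 1) * r ^ n / n) * Real.cos (2 * n * θ) with hF
  have hmeas : MeasurableSet (Ioc (-(π/2)) (π/2)) := measurableSet_Ioc
  have hcont : ∀ n, Continuous (F n) := by
    intro n
    exact continuous_const.mul (Real.continuous_cos.comp (by continuity))
  have hint : ∀ n, Integrable (F n) (volume.restrict (Ioc (-(π/2)) (π/2))) := fun n =>
    ((hcont n).integrableOn_Ioc).integrable
  have hbound : ∀ n θ, ‖F n θ‖ ≤ r ^ n := by
    intro n θ
    rcases Nat.eq_zero_or_pos n with rfl | hn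
    · simp [hF]
    · have h1 : ‖F n θ‖ = r ^ n / n * |Real.cos (2 * n * θ)| := by
        rw [hF]
        simp only [norm_mul, Real.norm_eq_abs, abs_div, abs_mul, abs_pow, abs_neg, abs_one,
          one_pow, one_mul, abs_of_nonneg hr0, Nat.abs_cast]
      rw [h1]
      calc r ^ n / n * |Real.cos (2 * n * θ)| ≤ r ^ n / n * 1 := by
            apply mul_le_mul_of_nonneg_left (Real.abs_cos_le_one _)
            positivity
        _ ≤ r ^ n := by
            rw [mul_one]
            apply div_le_self (by positivity)
            exact_mod_cast hn
  have hsum : Summable fun n => ∫ θ in Ioc (-(π/2)) (π/2), ‖F n θ‖ := by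
    apply Summable.of_nonneg_of_le (fun n => integral_nonneg fun θ => norm_nonneg _)
      (fun n => ?_) (summable_geometric_of_lt_one hr0 hr1 |>.mul_left π)
    calc (∫ θ in Ioc (-(π/2)) (π/2), ‖F n θ‖)
        ≤ ∫ _ in Ioc (-(π/2)) (π/2), r ^ n := by
          apply integral_mono (hint n).norm (integrable_const _)
          intro θ; exact hbound n θ
      _ = π * r ^ n := by
          rw [setIntegral_const, measureReal_def, Real.volume_Ioc, smul_eq_mul]
          congr 1
          rw [ENNReal.toReal_ofReal (by linarith [Real.pi_pos])]
          ring
  have hzero : ∀ n, (∫ θ in Ioc (-(π/2)) (π/2), F n θ) = 0 := by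
    intro n
    rcases Nat.eq_zero_or_pos n with rfl | hn
    · simp [hF]
    · have hnR : (0 : ℝ) < n := by exact_mod_cast hn
      have hc : (2 * n : ℝ) ≠ 0 := by nlinarith
      have : (∫ θ in Ioc (-(π/2)) (π/2), Real.cos (2 * n * θ)) = 0 := by
        rw [← intervalIntegral.integral_of_le (by linarith [Real.pi_pos] : -(π/2) ≤ π/2)]
        have := intervalIntegral.integral_comp_mul_left (fun x => Real.cos x) hc
          (a := -(π/2)) (b := π/2)
        rw [this, integral_cos]
        have h1 : (2 * n : ℝ) * (π/2) = n * π := by ring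
        have h2 : (2 * n : ℝ) * (-(π/2)) = -(n * π) := by ring
        rw [h1, h2, Real.sin_nat_mul_pi, Real.sin_neg, Real.sin_nat_mul_pi]
        simp
      simp only [hF]
      rw [MeasureTheory.integral_const_mul, this, mul_zero]
  have key := hasSum_integral_of_summable_integral_norm hint hsum
  have hks : HasSum (fun _ : ℕ => (0:ℝ)) (∫ θ in Ioc (-(π/2)) (π/2), ∑' n, F n θ) := by
    simpa [hzero] using key
  have h0 : (∫ θ in Ioc (-(π/2)) (π/2), ∑' n, F n θ) = 0 := (hasSum_zero.unique hks).symm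
  have hrew : (fun θ => Real.log (1 + 2 * r * Real.cos (2 * θ) + r ^ 2))
      = fun θ => 2 * ∑' n, F n θ := by
    funext θ
    rw [(hasSum_pt r hr0 hr1 θ).tsum_eq]
    ring
  rw [hrew, MeasureTheory.integral_const_mul, h0, mul_zero]

lemma integral_J (t : ℝ) (ht : t ∈ Set.Ioo (0:ℝ) 1) :
    ∫ θ in Ioc (-(π/2)) (π/2), Real.log (Real.cos θ ^ 2 + t ^ 2 * Real.sin θ ^ 2)
      = π * (2 * Real.log ((1 + t) / 2)) := by
  obtain ⟨ht0, ht1⟩ := ht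
  set r : ℝ := (1 - t) / (1 + t) with hr
  have h1t : (0:ℝ) < 1 + t := by linarith
  have hr0 : 0 ≤ r := div_nonneg (by linarith) (by linarith)
  have hr1 : r < 1 := by rw [hr, div_lt_one h1t]; linarith
  have hgpos : ∀ θ : ℝ, 0 < 1 + 2 * r * Real.cos (2 * θ) + r ^ 2 := by
    intro θ
    have h1 := Real.neg_one_le_cos (2 * θ)
    nlinarith [sq_nonneg (1 - r), sq_nonneg (1 + r)]
  have hkey : ∀ θ : ℝ, Real.cos θ ^ 2 + t ^ 2 * Real.sin θ ^ 2
      = ((1 + t) / 2) ^ 2 * (1 + 2 * r * Real.cos (2 * θ) + r ^ 2) := by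
    intro θ
    have hc2 : Real.cos (2 * θ) = 1 - 2 * Real.sin θ ^ 2 := Real.cos_two_mul' θ ▸ by
      rw [Real.cos_sq' θ]; ring
    have hsc := Real.sin_sq_add_cos_sq θ
    have hcos : Real.cos θ ^ 2 = 1 - Real.sin θ ^ 2 := by linarith
    rw [hcos, hc2, hr]
    field_simp
    ring
  have hsplit : ∀ θ : ℝ, Real.log (Real.cos θ ^ 2 + t ^ 2 * Real.sin θ ^ 2)
      = 2 * Real.log ((1 + t) / 2) + Real.log (1 + 2 * r * Real.cos (2 * θ) + r ^ 2) := by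
    intro θ
    rw [hkey θ, Real.log_mul (by positivity) (ne_of_gt (hgpos θ)), Real.log_pow]
    push_cast; ring
  calc ∫ θ in Ioc (-(π/2)) (π/2), Real.log (Real.cos θ ^ 2 + t ^ 2 * Real.sin θ ^ 2)
      = ∫ θ in Ioc (-(π/2)) (π/2),
          (2 * Real.log ((1 + t) / 2) + Real.log (1 + 2 * r * Real.cos (2 * θ) + r ^ 2)) := by
        exact integral_congr_ae (Filter.Eventually.of_forall fun θ => hsplit θ)
    _ = (∫ _ in Ioc (-(π/2)) (π/2), 2 * Real.log ((1 + t) / 2))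
        + ∫ θ in Ioc (-(π/2)) (π/2), Real.log (1 + 2 * r * Real.cos (2 * θ) + r ^ 2) := by
        apply integral_add (integrable_const _)
        apply Continuous.integrableOn_Ioc
        exact Continuous.log (by continuity) fun θ => ne_of_gt (hgpos θ)
    _ = π * (2 * Real.log ((1 + t) / 2)) := by
        rw [integral_log_g r hr0 hr1, add_zero, setIntegral_const, measureReal_def, Real.volume_Ioc,
          ENNReal.toReal_ofReal (by linarith [Real.pi_pos]), smul_eq_mul]
        ring_nf

/-- **Mean value of the external field against the Robin measure of `[-s,s]`.** For
`t ∈ (0,1)` and `s = √(1-t²)`,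
`(1/π)·∫_{-s}^{s} (t/2)·log(1/(1-x²))/√(s²-x²) dx
  = t·(log(2/s) − ½·log(1+t) + ½·log(1−t))`. -/
theorem external_field_mean_value (t : ℝ) (ht : t ∈ Set.Ioo (0 : ℝ) 1)
    (s : ℝ) (hs : s = Real.sqrt (1 - t ^ 2)) :
    1 / Real.pi *
        ∫ x in (-s)..s, t / 2 * Real.log (1 / (1 - x ^ 2)) / Real.sqrt (s ^ 2 - x ^ 2)
      = t * (Real.log (2 / s) - 1 / 2 * Real.log (1 + t) + 1 / 2 * Real.log (1 - t)) := by
  obtain ⟨ht0, ht1⟩ := ht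
  have h1t2 : (0:ℝ) < 1 - t ^ 2 := by nlinarith
  have hs0 : 0 < s := hs ▸ Real.sqrt_pos.mpr h1t2
  have hs2 : s ^ 2 = 1 - t ^ 2 := hs ▸ Real.sq_sqrt h1t2.le
  have hpi := Real.pi_pos
  set G : ℝ → ℝ := fun x => t / 2 * Real.log (1 / (1 - x ^ 2)) / Real.sqrt (s ^ 2 - x ^ 2)
    with hG
  set f : ℝ → ℝ := fun θ => s * Real.sin θ with hf
  have hsub : Ioo (-(π/2)) (π/2) ⊆ Icc (-(π/2)) (π/2) := Ioo_subset_Icc_self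
  have hmono : StrictMonoOn f (Ioo (-(π/2)) (π/2)) := fun a ha b hb hab =>
    mul_lt_mul_of_pos_left (Real.strictMonoOn_sin (hsub ha) (hsub hb) hab) hs0
  have himg : f '' Ioo (-(π/2)) (π/2) = Ioo (-s) s := by
    apply Set.eq_of_subset_of_subset
    · rintro x ⟨θ, hθ, rfl⟩
      obtain ⟨hθ1, hθ2⟩ := hθ
      have h1 : Real.sin θ < 1 := by
        have := Real.strictMonoOn_sin (hsub ⟨hθ1, hθ2⟩)
          (right_mem_Icc.mpr (by linarith)) hθ2
        simpa [Real.sin_pi_div_two] using this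
      have h2 : -1 < Real.sin θ := by
        have := Real.strictMonoOn_sin (left_mem_Icc.mpr (by linarith))
          (hsub ⟨hθ1, hθ2⟩) hθ1
        simpa [Real.sin_pi_div_two] using this
      constructor
      · simp only [hf]; nlinarith
      · simp only [hf]; nlinarith
    · rintro x ⟨hx1, hx2⟩
      refine ⟨Real.arcsin (x / s), ⟨?_, ?_⟩, ?_⟩
      · exact Real.neg_pi_div_two_lt_arcsin.mpr (by rw [neg_lt, ← neg_div]; exact (div_lt_one hs0).mpr (by linarith))
      · exact Real.arcsin_lt_pi_div_two.mpr ((div_lt_one hs0).mpr hx2)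
      · simp only [hf]
        rw [Real.sin_arcsin (by rw [neg_le, ← neg_div]; exact (div_le_one hs0).mpr (by linarith))
          ((div_le_one hs0).mpr hx2.le)]
        field_simp
  have hderiv : ∀ θ ∈ Ioo (-(π/2)) (π/2),
      HasDerivWithinAt f (s * Real.cos θ) (Ioo (-(π/2)) (π/2)) θ := fun θ _ =>
    ((Real.hasDerivAt_sin θ).const_mul s).hasDerivWithinAt
  have hchg := integral_image_eq_integral_abs_deriv_smul measurableSet_Ioo hderiv
    hmono.injOn G
  rw [himg] at hchg
  have hEq : Set.EqOn (fun θ => |s * Real.cos θ| • G (f θ))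
      (fun θ => -(t/2) * Real.log (Real.cos θ ^ 2 + t ^ 2 * Real.sin θ ^ 2))
      (Ioo (-(π/2)) (π/2)) := by
    intro θ hθ
    have hcos : 0 < Real.cos θ := Real.cos_pos_of_mem_Ioo hθ
    have hsc := Real.sin_sq_add_cos_sq θ
    have h1 : s ^ 2 - (s * Real.sin θ) ^ 2 = (s * Real.cos θ) ^ 2 := by nlinarith
    have h2 : (1:ℝ) - (s * Real.sin θ) ^ 2 = Real.cos θ ^ 2 + t ^ 2 * Real.sin θ ^ 2 := by
      nlinarith
    have hP : 0 < Real.cos θ ^ 2 + t ^ 2 * Real.sin θ ^ 2 := by nlinarith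
    have hscos : 0 < s * Real.cos θ := by positivity
    simp only [hG, hf]
    rw [h1, Real.sqrt_sq hscos.le, h2, one_div, Real.log_inv, abs_of_pos hscos,
      smul_eq_mul]
    field_simp
  rw [setIntegral_congr_fun measurableSet_Ioo hEq] at hchg
  have hIoo : (∫ θ in Ioo (-(π/2)) (π/2),
      -(t/2) * Real.log (Real.cos θ ^ 2 + t ^ 2 * Real.sin θ ^ 2))
      = -(t/2) * (π * (2 * Real.log ((1 + t) / 2))) := by
    rw [← integral_Ioc_eq_integral_Ioo, MeasureTheory.integral_const_mul,
      integral_J t ⟨ht0, ht1⟩]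
  have hLHS : (∫ x in (-s)..s, G x) = -(t/2) * (π * (2 * Real.log ((1 + t) / 2))) := by
    rw [intervalIntegral.integral_of_le (by linarith), integral_Ioc_eq_integral_Ioo,
      hchg, hIoo]
  rw [hLHS]
  -- algebra
  have h1t : (0:ℝ) < 1 + t := by linarith
  have h2t : (0:ℝ) < 1 - t := by linarith
  have hlogs : Real.log s = (Real.log (1 + t) + Real.log (1 - t)) / 2 := by
    rw [hs, show (1 : ℝ) - t ^ 2 = (1 + t) * (1 - t) by ring, Real.log_sqrt (by positivity),
      Real.log_mul (ne_of_gt h1t) (ne_of_gt h2t)]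
  have hlog2s : Real.log (2 / s) = Real.log 2 - Real.log s :=
    Real.log_div two_ne_zero (ne_of_gt hs0)
  have hlogdiv : Real.log ((1 + t) / 2) = Real.log (1 + t) - Real.log 2 :=
    Real.log_div (ne_of_gt h1t) two_ne_zero
  rw [hlog2s, hlogs, hlogdiv]
  field_simp
  ring
end

section
/- Let s > 0 and let a be a real number with a > s. Then (1/π)·∫_{−s}^{s} log(1/|a−x|) / √(s²−x²) dx = log(2/s) − log( (a + √(a²−s²))/s ). In other words, the logarithmic potential of the Robin (arcsine) measure of [−s,s] evaluated at a equals log(2/s) − log Φ(a/s), where Φ(w) = w + √(w²−1). -/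
open Real MeasureTheory intervalIntegral Set

-- pointwise expansion
lemma hasSum_log_aux {r : ℝ} (hr0 : 0 ≤ r) (hr1 : r < 1) (θ : ℝ) :
    HasSum (fun n : ℕ => -2 * (r ^ n * Real.cos (n * θ) / n))
      (Real.log (1 - 2 * r * Real.cos θ + r ^ 2)) := by
  set z : ℂ := (r : ℂ) * Complex.exp (θ * Complex.I) with hz_def
  have hznorm : ‖z‖ < 1 := by
    rw [hz_def, norm_mul,
      Complex.norm_exp_ofReal_mul_I, mul_one, Complex.norm_real,
      Real.norm_of_nonneg hr0]
    exact hr1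
  have h := Complex.hasSum_taylorSeries_neg_log hznorm
  have h2 := Complex.reCLM.hasSum h
  have h3 := h2.mul_left (-2)
  have hterm : ∀ n : ℕ, -2 * Complex.reCLM (z ^ n / n) = -2 * (r ^ n * Real.cos (n * θ) / n) := by
    intro n
    have hzpow : z ^ n = ((r ^ n : ℝ) : ℂ) * Complex.exp ((n * θ : ℝ) * Complex.I) := by
      rw [hz_def, mul_pow, ← Complex.exp_nat_mul]
      push_cast
      ring_nf
    have : z ^ n / (n : ℂ) = ((r ^ n / n : ℝ) : ℂ) * Complex.exp ((n * θ : ℝ) * Complex.I) := by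
      rw [hzpow, Complex.ofReal_div]
      push_cast
      ring
    rw [Complex.reCLM_apply, this, Complex.re_ofReal_mul, Complex.exp_ofReal_mul_I_re]
    ring
  have htarget : -2 * Complex.reCLM (-Complex.log (1 - z)) =
      Real.log (1 - 2 * r * Real.cos θ + r ^ 2) := by
    rw [Complex.reCLM_apply, Complex.neg_re, Complex.log_re]
    have habs : ‖1 - z‖ ^ 2 = 1 - 2 * r * Real.cos θ + r ^ 2 := by
      rw [Complex.sq_norm, Complex.normSq_apply]
      have hre : (1 - z).re = 1 - r * Real.cos θ := by
        simp [hz_def, Complex.re_ofReal_mul, Complex.exp_ofReal_mul_I_re]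
      have him : (1 - z).im = -(r * Real.sin θ) := by
        simp [hz_def, Complex.im_ofReal_mul, Complex.exp_ofReal_mul_I_im]
      rw [hre, him]
      nlinarith [Real.sin_sq_add_cos_sq θ]
    rw [← habs, Real.log_pow]
    push_cast
    ring
  rw [← htarget]
  exact (funext hterm ▸ h3 : _)

lemma integral_cos_nat_mul_zero (n : ℕ) (hn : n ≠ 0) :
    ∫ θ in (0:ℝ)..π, Real.cos (n * θ) = 0 := by
  have hc : (n : ℝ) ≠ 0 := Nat.cast_ne_zero.mpr hn
  rw [intervalIntegral.integral_comp_mul_left (fun x => Real.cos x) hc]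
  simp [Real.sin_nat_mul_pi]

lemma integral_log_one_sub_two_cos (r : ℝ) (hr0 : 0 ≤ r) (hr1 : r < 1) :
    ∫ θ in (0:ℝ)..π, Real.log (1 - 2 * r * Real.cos θ + r ^ 2) = 0 := by
  set F : ℕ → ℝ → ℝ := fun n θ => -2 * (r ^ n * Real.cos (n * θ) / n) with hF
  have hμ : (volume (Ioc (0:ℝ) π)).toReal = π := by
    rw [Real.volume_Ioc, ENNReal.toReal_ofReal (by simp [Real.pi_pos.le] : (0:ℝ) ≤ π - 0)]
    ring
  have hFcont : ∀ n, Continuous (F n) := by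
    intro n; fun_prop
  have hFint : ∀ n, Integrable (F n) (volume.restrict (Ioc (0:ℝ) π)) := by
    intro n
    exact (hFcont n).integrableOn_Ioc
  have hFbound : ∀ n, ∀ θ ∈ Ioc (0:ℝ) π, ‖F n θ‖ ≤ 2 * r ^ n := by
    intro n θ _
    rcases Nat.eq_zero_or_pos n with rfl | hn
    · simp [hF]
    · have h1 : |Real.cos (n * θ)| ≤ 1 := Real.abs_cos_le_one _
      have hrn : (0:ℝ) ≤ r ^ n := by positivity
      have hn1 : (1:ℝ) ≤ n := by exact_mod_cast hn
      rw [hF]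
      simp only [norm_mul, norm_neg, norm_div, Real.norm_ofNat, Real.norm_natCast]
      rw [Real.norm_of_nonneg hrn]
      calc 2 * (r ^ n * ‖Real.cos (n * θ)‖ / (n:ℝ))
          ≤ 2 * (r ^ n * 1 / 1) := by
            apply mul_le_mul_of_nonneg_left _ (by norm_num)
            apply div_le_div₀ (by positivity) _ one_pos hn1
            exact mul_le_mul_of_nonneg_left (by rw [Real.norm_eq_abs]; exact h1) hrn
        _ = 2 * r ^ n := by ring
  have hsum : Summable fun n => ∫ θ in Ioc (0:ℝ) π, ‖F n θ‖ := by
    apply Summable.of_nonneg_of_le (fun n => integral_nonneg fun θ => norm_nonneg _)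
      (fun n => ?_) (((summable_geometric_of_lt_one hr0 hr1).mul_left (2 * π)))
    have key : ‖∫ θ in Ioc (0:ℝ) π, ‖F n θ‖‖ ≤ 2 * r ^ n * (volume (Ioc (0:ℝ) π)).toReal := by
      apply norm_setIntegral_le_of_norm_le_const
      · rw [Real.volume_Ioc]; exact ENNReal.ofReal_lt_top
      · intro θ hθ
        rw [Real.norm_of_nonneg (norm_nonneg _)]
        exact hFbound n θ hθ
    rw [Real.norm_of_nonneg (integral_nonneg fun θ => norm_nonneg _)] at key
    rw [hμ] at key
    linarith [key]
  have hswap := MeasureTheory.integral_tsum_of_summable_integral_norm hFint hsum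
  have heach : ∀ n, ∫ θ in Ioc (0:ℝ) π, F n θ = 0 := by
    intro n
    rw [← intervalIntegral.integral_of_le Real.pi_pos.le]
    rcases Nat.eq_zero_or_pos n with rfl | hn
    · simp [hF]
    · have : ∀ θ, F n θ = (-2 * r ^ n / n) * Real.cos (n * θ) := by
        intro θ; rw [hF]; ring
      simp_rw [this]
      rw [intervalIntegral.integral_const_mul, integral_cos_nat_mul_zero n hn.ne', mul_zero]
  rw [intervalIntegral.integral_of_le Real.pi_pos.le]
  have hpt : ∀ θ : ℝ, Real.log (1 - 2 * r * Real.cos θ + r ^ 2) = ∑' n, F n θ :=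
    fun θ => (hasSum_log_aux hr0 hr1 θ).tsum_eq.symm
  calc ∫ θ in Ioc (0:ℝ) π, Real.log (1 - 2 * r * Real.cos θ + r ^ 2)
      = ∫ θ in Ioc (0:ℝ) π, ∑' n, F n θ := by simp_rw [hpt]
    _ = ∑' n, ∫ θ in Ioc (0:ℝ) π, F n θ := hswap.symm
    _ = 0 := by simp_rw [heach]; exact tsum_zero

lemma integral_log_sub_cos {s a : ℝ} (hs : 0 < s) (ha : s < a) :
    ∫ θ in (0:ℝ)..π, Real.log (a - s * Real.cos θ)
      = π * Real.log ((a + Real.sqrt (a ^ 2 - s ^ 2)) / 2) := by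
  set u := Real.sqrt (a ^ 2 - s ^ 2) with hu_def
  have hdiff : (0:ℝ) ≤ a ^ 2 - s ^ 2 := by nlinarith
  have hu2 : u ^ 2 = a ^ 2 - s ^ 2 := Real.sq_sqrt hdiff
  have hu0 : 0 ≤ u := Real.sqrt_nonneg _
  have hau : 0 < a + u := by linarith
  set r := s / (a + u) with hr_def
  set c := (a + u) / 2 with hc_def
  have hr0 : 0 < r := div_pos hs hau
  have hr1 : r < 1 := (div_lt_one hau).mpr (by linarith)
  have hc0 : 0 < c := by positivity
  have key : ∀ t : ℝ, a - s * t = c * (1 - 2 * r * t + r ^ 2) := by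
    intro t
    rw [hr_def, hc_def]
    field_simp
    nlinarith [hu2]
  have hquad : ∀ θ : ℝ, 0 < 1 - 2 * r * Real.cos θ + r ^ 2 := by
    intro θ
    nlinarith [Real.neg_one_le_cos θ, Real.cos_le_one θ, hr0.le, hr1]
  have hlog : ∀ θ : ℝ, Real.log (a - s * Real.cos θ)
      = Real.log c + Real.log (1 - 2 * r * Real.cos θ + r ^ 2) := by
    intro θ
    rw [key (Real.cos θ), Real.log_mul hc0.ne' (hquad θ).ne']
  simp_rw [hlog]
  have hcont : Continuous fun θ : ℝ => Real.log (1 - 2 * r * Real.cos θ + r ^ 2) := by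
    apply Continuous.log (by fun_prop)
    intro θ; exact (hquad θ).ne'
  rw [intervalIntegral.integral_add (intervalIntegrable_const)
    (hcont.intervalIntegrable _ _), integral_log_one_sub_two_cos r hr0.le hr1]
  simp [mul_comm]

-- integrability of 1-sided dominating function
lemma dom_integrable (s : ℝ) : IntervalIntegrable (fun x : ℝ => (s - x) ^ (-(1/2) : ℝ))
    volume 0 s := by
  have h := intervalIntegral.intervalIntegrable_rpow' (a := 0) (b := s)
    (r := -(1/2)) (by norm_num)
  have := h.comp_sub_left s
  simpa using this.symm

lemma dom_integrable' (s : ℝ) : IntervalIntegrable (fun x : ℝ => (s + x) ^ (-(1/2) : ℝ))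
    volume (-s) 0 := by
  have h := intervalIntegral.intervalIntegrable_rpow' (a := 0) (b := s)
    (r := -(1/2)) (by norm_num)
  have := h.comp_add_right s
  simpa [add_comm] using this

lemma g_integrable {s a : ℝ} (hs : 0 < s) (ha : s < a) :
    IntervalIntegrable (fun x => Real.log (1 / |a - x|) / Real.sqrt (s ^ 2 - x ^ 2))
      volume (-s) s := by
  set f : ℝ → ℝ := fun x => Real.log (1 / |a - x|) / Real.sqrt (s ^ 2 - x ^ 2) with hf_def
  set M : ℝ := max |Real.log (a - s)| |Real.log (a + s)| with hM_def
  have hfm : Measurable f := by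
    apply Measurable.div
    · exact Real.measurable_log.comp (by fun_prop)
    · fun_prop
  have hM : ∀ x ∈ Icc (-s) s, |Real.log (1 / |a - x|)| ≤ M := by
    intro x hx
    have h1 : 0 < a - x := by simp at hx; linarith [hx.2]
    rw [one_div, Real.log_inv, abs_neg, abs_eq_abs.mpr (Or.inl (by rw [abs_of_pos h1]))]
    apply abs_le_max_abs_abs
    · exact Real.log_le_log (by linarith) (by simp at hx; linarith [hx.2])
    · exact Real.log_le_log (by positivity) (by simp at hx; linarith [hx.1])
  have hMnn : 0 ≤ M := le_max_iff.mpr (Or.inl (abs_nonneg _))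
  -- bound on (0, s]
  have hbound1 : ∀ x ∈ Set.Ioc (0:ℝ) s, ‖f x‖ ≤ (M / Real.sqrt s) * (s - x) ^ (-(1/2) : ℝ) := by
    intro x hx
    rcases eq_or_lt_of_le hx.2 with rfl | hxs
    · rw [hf_def]
      simp [Real.zero_rpow (by norm_num : (-(1/2) : ℝ) ≠ 0)]
    · have hsx : 0 < s - x := by linarith
      have hsqrt_pos : 0 < Real.sqrt (s ^ 2 - x ^ 2) := Real.sqrt_pos.mpr (by nlinarith [hx.1])
      have hfac : Real.sqrt (s - x) * Real.sqrt s ≤ Real.sqrt (s ^ 2 - x ^ 2) := by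
        rw [← Real.sqrt_mul hsx.le]
        apply Real.sqrt_le_sqrt
        nlinarith [hx.1]
      have hrp : (s - x) ^ (-(1/2) : ℝ) = (Real.sqrt (s - x))⁻¹ := by
        rw [Real.rpow_neg hsx.le, Real.sqrt_eq_rpow]
      have hnum := hM x ⟨by linarith [hx.1], hx.2⟩
      rw [hf_def, norm_div, Real.norm_eq_abs, Real.norm_eq_abs,
        abs_of_nonneg (Real.sqrt_nonneg _), hrp]
      have h1 : 0 < Real.sqrt (s - x) := Real.sqrt_pos.mpr hsx
      have h2 : 0 < Real.sqrt s := Real.sqrt_pos.mpr hs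
      rw [div_le_iff₀ hsqrt_pos]
      have : (M / Real.sqrt s) * (Real.sqrt (s - x))⁻¹ * (Real.sqrt (s - x) * Real.sqrt s) = M := by
        field_simp
      calc |Real.log (1 / |a - x|)| ≤ M := hnum
        _ = (M / Real.sqrt s) * (Real.sqrt (s - x))⁻¹ * (Real.sqrt (s - x) * Real.sqrt s) :=
            this.symm
        _ ≤ (M / Real.sqrt s) * (Real.sqrt (s - x))⁻¹ * Real.sqrt (s ^ 2 - x ^ 2) := by
            apply mul_le_mul_of_nonneg_left hfac (by positivity)
  -- bound on (-s, 0]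
  have hbound2 : ∀ x ∈ Set.Ioc (-s) (0:ℝ), ‖f x‖ ≤ (M / Real.sqrt s) * (s + x) ^ (-(1/2) : ℝ) := by
    intro x hx
    have hsx : 0 < s + x := by linarith [hx.1]
    · have hsqrt_pos : 0 < Real.sqrt (s ^ 2 - x ^ 2) := Real.sqrt_pos.mpr (by nlinarith [hx.2])
      have hfac : Real.sqrt (s + x) * Real.sqrt s ≤ Real.sqrt (s ^ 2 - x ^ 2) := by
        rw [← Real.sqrt_mul hsx.le]
        apply Real.sqrt_le_sqrt
        nlinarith [hx.2]
      have hrp : (s + x) ^ (-(1/2) : ℝ) = (Real.sqrt (s + x))⁻¹ := by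
        rw [Real.rpow_neg hsx.le, Real.sqrt_eq_rpow]
      have hnum := hM x ⟨by linarith [hx.1], by linarith [hx.2]⟩
      rw [hf_def, norm_div, Real.norm_eq_abs, Real.norm_eq_abs,
        abs_of_nonneg (Real.sqrt_nonneg _), hrp]
      have h1 : 0 < Real.sqrt (s + x) := Real.sqrt_pos.mpr hsx
      have h2 : 0 < Real.sqrt s := Real.sqrt_pos.mpr hs
      rw [div_le_iff₀ hsqrt_pos]
      have : (M / Real.sqrt s) * (Real.sqrt (s + x))⁻¹ * (Real.sqrt (s + x) * Real.sqrt s) = M := by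
        field_simp
      calc |Real.log (1 / |a - x|)| ≤ M := hnum
        _ = (M / Real.sqrt s) * (Real.sqrt (s + x))⁻¹ * (Real.sqrt (s + x) * Real.sqrt s) :=
            this.symm
        _ ≤ (M / Real.sqrt s) * (Real.sqrt (s + x))⁻¹ * Real.sqrt (s ^ 2 - x ^ 2) := by
            apply mul_le_mul_of_nonneg_left hfac (by positivity)
  have hI1 : IntervalIntegrable f volume 0 s := by
    apply IntervalIntegrable.mono_fun' ((dom_integrable s).const_mul (M / Real.sqrt s))
      hfm.aestronglyMeasurable
    rw [Set.uIoc_of_le hs.le]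
    exact (MeasureTheory.ae_restrict_iff' measurableSet_Ioc).mpr
      (Filter.Eventually.of_forall hbound1)
  have hI2 : IntervalIntegrable f volume (-s) 0 := by
    apply IntervalIntegrable.mono_fun' ((dom_integrable' s).const_mul (M / Real.sqrt s))
      hfm.aestronglyMeasurable
    rw [Set.uIoc_of_le (by linarith : (-s) ≤ 0)]
    exact (MeasureTheory.ae_restrict_iff' measurableSet_Ioc).mpr
      (Filter.Eventually.of_forall hbound2)
  exact hI2.trans hI1

lemma substitution {s a : ℝ} (hs : 0 < s) (ha : s < a) :
    ∫ x in (-s)..s, Real.log (1 / |a - x|) / Real.sqrt (s ^ 2 - x ^ 2)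
      = - ∫ θ in (0:ℝ)..π, Real.log (a - s * Real.cos θ) := by
  set g : ℝ → ℝ := fun x => Real.log (1 / |a - x|) / Real.sqrt (s ^ 2 - x ^ 2) with hg_def
  set f : ℝ → ℝ := fun θ => s * Real.cos θ with hf_def
  set f' : ℝ → ℝ := fun θ => -(s * Real.sin θ) with hf'_def
  have hmin : min (0:ℝ) π = 0 := min_eq_left Real.pi_pos.le
  have hmax : max (0:ℝ) π = π := max_eq_right Real.pi_pos.le
  have hapos : ∀ θ : ℝ, 0 < a - s * Real.cos θ := by
    intro θ
    nlinarith [Real.cos_le_one θ, Real.neg_one_le_cos θ]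
  have hcomp : ∀ θ ∈ Set.Ioo (0:ℝ) π, f' θ • g (f θ) = Real.log (a - s * Real.cos θ) := by
    intro θ hθ
    have hsin : 0 < Real.sin θ := Real.sin_pos_of_pos_of_lt_pi hθ.1 hθ.2
    have hsq : s ^ 2 - (s * Real.cos θ) ^ 2 = (s * Real.sin θ) ^ 2 := by
      nlinarith [Real.sin_sq_add_cos_sq θ]
    have hsqrt : Real.sqrt (s ^ 2 - (s * Real.cos θ) ^ 2) = s * Real.sin θ := by
      rw [hsq, Real.sqrt_sq (by positivity)]
    have hax : 0 < a - s * Real.cos θ := hapos θ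
    rw [hf'_def, hg_def, hf_def]
    simp only [smul_eq_mul]
    rw [hsqrt, abs_of_pos hax, one_div, Real.log_inv]
    field_simp
  have hnull : volume ({0, π} : Set ℝ) = 0 :=
    ((Set.finite_singleton π).insert 0).measure_zero volume
  have hae2 : ∀ᵐ θ : ℝ, θ ≠ 0 ∧ θ ≠ π := by
    rw [MeasureTheory.ae_iff]
    refine measure_mono_null ?_ hnull
    intro θ hθ
    simp only [Set.mem_setOf_eq, not_and_or, not_ne_iff] at hθ
    simp only [Set.mem_insert_iff, Set.mem_singleton_iff]
    tauto
  have hφc : Continuous fun θ : ℝ => Real.log (a - s * Real.cos θ) :=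
    Continuous.log (by fun_prop) (fun θ => (hapos θ).ne')
  have hsub : (∫ θ in (0:ℝ)..π, f' θ • g (f θ)) = ∫ x in (f 0)..(f π), g x := by
    apply intervalIntegral.integral_comp_smul_deriv''' (f := f) (f' := f') (g := g)
    · exact (continuous_const.mul Real.continuous_cos).continuousOn
    · rw [hmin, hmax]
      intro θ _
      have hd : HasDerivAt f (f' θ) θ := by
        have := (Real.hasDerivAt_cos θ).const_mul s
        simpa [hf'_def, hf_def, mul_comm] using this
      exact hd.hasDerivWithinAt.mono (Set.subset_univ _ |>.trans (le_refl _)) |>.mono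
        (Set.Subset.refl _)
    · rw [hmin, hmax]
      have himg : f '' Set.Ioo 0 π ⊆ Set.Ioo (-s) s := by
        rintro _ ⟨θ, hθ, rfl⟩
        simp only [hf_def, Set.mem_Ioo]
        have h1 := Real.cos_lt_cos_of_nonneg_of_le_pi hθ.1.le le_rfl hθ.2
        rw [Real.cos_pi] at h1
        have h2 := Real.cos_lt_cos_of_nonneg_of_le_pi le_rfl hθ.2.le hθ.1
        rw [Real.cos_zero] at h2
        constructor <;> nlinarith
      apply ContinuousOn.mono _ himg
      apply ContinuousOn.div
      · apply ContinuousOn.comp Real.continuousOn_log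
        · exact ContinuousOn.div continuousOn_const
            ((continuous_const.sub continuous_id).abs.continuousOn)
            (fun x hx => by
              simp only [Set.mem_Ioo] at hx
              have : 0 < a - x := by linarith [hx.2]
              simp only [ne_eq, abs_eq_zero]
              intro h; rw [sub_eq_zero] at h; linarith)
        · intro x hx
          simp only [Set.mem_Ioo] at hx
          have h1 : 0 < a - x := by linarith [hx.2]
          simp only [Set.mem_compl_iff, Set.mem_singleton_iff]
          positivity
      · fun_prop
      · intro x hx
        simp only [Set.mem_Ioo] at hx
        have : 0 < s ^ 2 - x ^ 2 := by nlinarith [hx.1, hx.2]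
        positivity
    · have himg : f '' Set.uIcc 0 π ⊆ Set.Icc (-s) s := by
        rintro _ ⟨θ, _, rfl⟩
        simp only [hf_def, Set.mem_Icc]
        constructor
        · nlinarith [Real.neg_one_le_cos θ]
        · nlinarith [Real.cos_le_one θ]
      exact ((intervalIntegrable_iff_integrableOn_Icc_of_le (by linarith)).mp
        (g_integrable hs ha)).mono_set himg
    · rw [Set.uIcc_of_le Real.pi_pos.le]
      refine MeasureTheory.Integrable.congr hφc.integrableOn_Icc ?_
      have h0 : ∀ᵐ θ : ℝ ∂volume.restrict (Set.Icc 0 π), θ ∈ Set.Icc (0:ℝ) π :=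
        MeasureTheory.ae_restrict_mem measurableSet_Icc
      have h1 : ∀ᵐ θ : ℝ ∂volume.restrict (Set.Icc 0 π), θ ≠ 0 ∧ θ ≠ π :=
        MeasureTheory.ae_mono Measure.restrict_le_self hae2
      filter_upwards [h0, h1] with θ hθ hne
      exact (hcomp θ ⟨lt_of_le_of_ne hθ.1 (Ne.symm hne.1), lt_of_le_of_ne hθ.2 hne.2⟩).symm
  have hcongr : ∫ θ in (0:ℝ)..π, f' θ • g (f θ)
      = ∫ θ in (0:ℝ)..π, Real.log (a - s * Real.cos θ) := by
    apply intervalIntegral.integral_congr_ae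
    filter_upwards [hae2] with θ hne hmem
    rw [Set.uIoc_of_le Real.pi_pos.le] at hmem
    exact hcomp θ ⟨hmem.1, lt_of_le_of_ne hmem.2 hne.2⟩
  have hf0 : f 0 = s := by simp [hf_def]
  have hfπ : f π = -s := by simp [hf_def]
  rw [hf0, hfπ] at hsub
  rw [← hcongr, hsub, intervalIntegral.integral_symm (-s) s, neg_neg]




/-- **Potential of the Robin (arcsine) measure of `[-s,s]` at an exterior point.** For
`0 < s < a`, `(1/π)·∫_{-s}^{s} log(1/|a−x|)/√(s²−x²) dx = log(2/s) − log Φ(a/s)`, where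
`Φ(w) = w + √(w²−1)`. -/
theorem robin_potential_exterior (s a : ℝ) (hs : 0 < s) (ha : s < a) :
    1 / Real.pi * ∫ x in (-s)..s, Real.log (1 / |a - x|) / Real.sqrt (s ^ 2 - x ^ 2)
      = Real.log (2 / s) - Real.log ((a + Real.sqrt (a ^ 2 - s ^ 2)) / s) := by
  rw [substitution hs ha, integral_log_sub_cos hs ha]
  have hu0 : 0 ≤ Real.sqrt (a ^ 2 - s ^ 2) := Real.sqrt_nonneg _
  have hau : 0 < a + Real.sqrt (a ^ 2 - s ^ 2) := by linarith
  rw [Real.log_div two_ne_zero hs.ne', Real.log_div hau.ne' hs.ne',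
    Real.log_div hau.ne' two_ne_zero]
  field_simp
  ring
end

section
/- Let A > 1, t ∈ [0,1], ζ ∈ [−1,1], and let z = A·cos θ + i·√(A²−1)·sin θ (θ ∈ [0,2π)) be any point of the ellipse E_A. Then ∫_{−1}^{1} log(1/|z−y|)·(1/(π√(1−y²))) dy + t·log|z−ζ| ≥ log 2 − log(A + √(A²−1)) + (t/2)·log(A²−1) + (t/2)·log(1−ζ²). (The left-hand side is U^{μ₀}(z) + t·log|z−ζ| with μ₀ the arcsine measure.) -/
/-- Extended-real logarithm of a nonnegative real number: `elog 0 = ⊥ = -∞`, and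
`elog x = log x` for `x ≠ 0`. -/
noncomputable def elog (x : ℝ) : EReal := if x = 0 then ⊥ else ((Real.log x : ℝ) : EReal)

section ArcsineAux

open Real MeasureTheory intervalIntegral Set

noncomputable def Jint (r : ℝ) : ℝ := ∫ ψ in (-π)..π, Real.log (1 - 2*r*Real.cos ψ + r^2)

lemma arg_pos' {r c : ℝ} (h0 : 0 ≤ r) (h1 : r < 1) (hc : c ≤ 1) :
    0 < 1 - 2*r*c + r^2 := by nlinarith [sq_nonneg (1 - r)]

lemma arg_pos {r : ℝ} (h0 : 0 ≤ r) (h1 : r < 1) (ψ : ℝ) :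
    0 < 1 - 2*r*Real.cos ψ + r^2 := arg_pos' h0 h1 (Real.cos_le_one ψ)

lemma cont_J {r : ℝ} (h0 : 0 ≤ r) (h1 : r < 1) :
    Continuous (fun ψ => Real.log (1 - 2*r*Real.cos ψ + r^2)) := by
  apply Continuous.log (by continuity)
  exact fun ψ => (arg_pos h0 h1 ψ).ne'

lemma per_J (r : ℝ) :
    Function.Periodic (fun ψ => Real.log (1 - 2*r*Real.cos ψ + r^2)) (2*π) := by
  intro x; simp [Real.cos_add_two_pi]

lemma Jint_full (r : ℝ) (a : ℝ) :
    ∫ ψ in a..(a + 2*π), Real.log (1 - 2*r*Real.cos ψ + r^2) = Jint r := by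
  have h := (per_J r).intervalIntegral_add_eq a (-π)
  rw [h]
  have : -π + 2*π = π := by ring
  rw [this]; rfl

lemma Jint_sq {r : ℝ} (h0 : 0 ≤ r) (h1 : r < 1) : Jint (r^2) = 2 * Jint r := by
  have hr2 : r^2 < 1 := by nlinarith
  have h02 : (0:ℝ) ≤ r^2 := sq_nonneg r
  have cont2 : Continuous (fun ψ => Real.log (1 - 2*r*(-Real.cos ψ) + r^2)) := by
    apply Continuous.log (by continuity)
    exact fun ψ => (arg_pos' h0 h1 (by nlinarith [Real.neg_one_le_cos ψ])).ne'
  have key : (∫ ψ in (-π)..π, Real.log (1 - 2*r^2*Real.cos (2*ψ) + (r^2)^2))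
      = Jint r + Jint r := by
    have hpt : ∀ ψ : ℝ, Real.log (1 - 2*r^2*Real.cos (2*ψ) + (r^2)^2)
        = Real.log (1 - 2*r*Real.cos ψ + r^2) + Real.log (1 - 2*r*(-Real.cos ψ) + r^2) := by
      intro ψ
      rw [← Real.log_mul (arg_pos h0 h1 ψ).ne'
        (arg_pos' h0 h1 (by nlinarith [Real.neg_one_le_cos ψ])).ne']
      congr 1
      rw [Real.cos_two_mul]; ring
    rw [intervalIntegral.integral_congr (fun ψ _ => hpt ψ)]
    rw [intervalIntegral.integral_add ((cont_J h0 h1).intervalIntegrable _ _)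
      (cont2.intervalIntegrable _ _)]
    have second : (∫ ψ in (-π)..π, Real.log (1 - 2*r*(-Real.cos ψ) + r^2)) = Jint r := by
      have hshift : ∀ ψ : ℝ, Real.log (1 - 2*r*(-Real.cos ψ) + r^2)
          = (fun x => Real.log (1 - 2*r*Real.cos x + r^2)) (ψ + π) := by
        intro ψ; simp [Real.cos_add_pi]
      rw [intervalIntegral.integral_congr (fun ψ _ => hshift ψ),
        intervalIntegral.integral_comp_add_right (fun x => Real.log (1 - 2*r*Real.cos x + r^2)) π]
      have e1 : -π + π = (0:ℝ) := by ring
      have e2 : π + π = (0:ℝ) + 2*π := by ring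
      rw [e1, e2, Jint_full]
    rw [second]; rfl
  -- now substitute χ = 2 ψ on the left
  have lhs : (∫ ψ in (-π)..π, Real.log (1 - 2*r^2*Real.cos (2*ψ) + (r^2)^2))
      = Jint (r^2) := by
    rw [intervalIntegral.integral_comp_mul_left
      (fun χ => Real.log (1 - 2*r^2*Real.cos χ + (r^2)^2)) (two_ne_zero)]
    have e1 : (2:ℝ) * -π = -(2*π) := by ring
    have e2 : (2:ℝ) * π = 2*π := by ring
    rw [e1, e2]
    have split : (∫ χ in (-(2*π))..(2*π), Real.log (1 - 2*r^2*Real.cos χ + (r^2)^2))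
        = (∫ χ in (-(2*π))..(0:ℝ), Real.log (1 - 2*r^2*Real.cos χ + (r^2)^2))
          + ∫ χ in (0:ℝ)..(2*π), Real.log (1 - 2*r^2*Real.cos χ + (r^2)^2) := by
      rw [intervalIntegral.integral_add_adjacent_intervals
        ((cont_J h02 hr2).intervalIntegrable _ _) ((cont_J h02 hr2).intervalIntegrable _ _)]
    have p1 : (∫ χ in (-(2*π))..(0:ℝ), Real.log (1 - 2*r^2*Real.cos χ + (r^2)^2)) = Jint (r^2) := by
      have : (0:ℝ) = -(2*π) + 2*π := by ring
      rw [this, Jint_full]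
    have p2 : (∫ χ in (0:ℝ)..(2*π), Real.log (1 - 2*r^2*Real.cos χ + (r^2)^2)) = Jint (r^2) := by
      have : (2*π : ℝ) = 0 + 2*π := by ring
      rw [this, Jint_full]
    rw [split, p1, p2]
    simp
    ring
  rw [lhs] at key
  rw [key]; ring

lemma Jint_pow {r : ℝ} (h0 : 0 ≤ r) (h1 : r < 1) :
    ∀ n : ℕ, Jint (r^(2^n)) = 2^n * Jint r := by
  intro n
  induction n with
  | zero => simp
  | succ n ih =>
    have e : r^(2^(n+1)) = (r^(2^n))^2 := by rw [← pow_mul, pow_succ]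
    rw [e, Jint_sq (pow_nonneg h0 _) (pow_lt_one₀ h0 h1 (pow_ne_zero n two_ne_zero)), ih]
    ring

lemma Jint_bound {s : ℝ} (h0 : 0 ≤ s) (h1 : s < 1) :
    |Jint s| ≤ (-2 * Real.log (1 - s)) * (2*π) := by
  have hC : 0 ≤ -2 * Real.log (1 - s) := by
    have : Real.log (1 - s) ≤ 0 := Real.log_nonpos (by linarith) (by linarith)
    linarith
  have := intervalIntegral.norm_integral_le_of_norm_le_const
    (C := -2 * Real.log (1 - s)) (f := fun ψ => Real.log (1 - 2*s*Real.cos ψ + s^2))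
    (a := -π) (b := π) ?_
  · calc |Jint s| ≤ (-2 * Real.log (1 - s)) * |π - (-π)| := this
      _ = (-2 * Real.log (1 - s)) * (2*π) := by
          rw [abs_of_nonneg (by linarith [Real.pi_pos] : (0:ℝ) ≤ π - (-π))]; ring_nf
  · intro ψ _
    rw [Real.norm_eq_abs, abs_le]
    have hlow : (1 - s)^2 ≤ 1 - 2*s*Real.cos ψ + s^2 := by
      nlinarith [Real.cos_le_one ψ]
    have hup : 1 - 2*s*Real.cos ψ + s^2 ≤ (1 + s)^2 := by
      nlinarith [Real.neg_one_le_cos ψ]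
    have hpos := arg_pos h0 h1 ψ
    constructor
    · have := Real.log_le_log (pow_pos (by linarith) 2) hlow
      rw [Real.log_pow] at this
      push_cast at this ⊢
      linarith
    · have h2 := Real.log_le_log hpos hup
      rw [Real.log_pow] at h2
      have h3 : Real.log (1 + s) ≤ -Real.log (1 - s) := by
        rw [← Real.log_inv]
        apply Real.log_le_log (by linarith)
        have hm : (1+s) * (1-s) ≤ 1 := by nlinarith
        calc (1+s) = (1+s)*(1-s) * (1-s)⁻¹ :=
              (mul_inv_cancel_right₀ (sub_ne_zero.mpr h1.ne') _).symm
          _ ≤ 1 * (1-s)⁻¹ := mul_le_mul_of_nonneg_right hm (inv_nonneg.mpr (by linarith))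
          _ = (1-s)⁻¹ := one_mul _
      push_cast at h2
      linarith

lemma Jint_eq_zero {r : ℝ} (h0 : 0 ≤ r) (h1 : r < 1) : Jint r = 0 := by
  by_contra h
  have habs : 0 < |Jint r| := abs_pos.mpr h
  set M : ℝ := (-2 * Real.log (1 - r)) * (2*π) with hM
  have hMn : ∀ n : ℕ, (2:ℝ)^n * |Jint r| ≤ M := by
    intro n
    have h0n : 0 ≤ r^(2^n) := pow_nonneg h0 _
    have hle : r^(2^n) ≤ r := by
      calc r^(2^n) ≤ r^1 := pow_le_pow_of_le_one h0 h1.le Nat.one_le_two_pow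
        _ = r := pow_one r
    have h1n : r^(2^n) < 1 := lt_of_le_of_lt hle h1
    have hb := Jint_bound h0n h1n
    have e : |Jint (r^(2^n))| = 2^n * |Jint r| := by
      rw [Jint_pow h0 h1 n, abs_mul, abs_of_nonneg (by positivity : (0:ℝ) ≤ (2:ℝ)^n)]
    rw [e] at hb
    refine hb.trans ?_
    apply mul_le_mul_of_nonneg_right _ (by positivity)
    have : Real.log (1 - r) ≤ Real.log (1 - r^(2^n)) :=
      Real.log_le_log (by linarith) (by linarith)
    linarith
  obtain ⟨n, hn⟩ := pow_unbounded_of_one_lt (M / |Jint r|) (one_lt_two (α := ℝ))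
  have := hMn n
  rw [div_lt_iff₀ habs] at hn
  linarith

lemma w_arg_pos {w : ℝ} (hw : 1 < w) (c : ℝ) (hc : -1 ≤ c) (hc' : c ≤ 1) :
    0 < w^2 - 2*w*c + 1 := by nlinarith [sq_nonneg (w - 1)]

lemma cont_w {w : ℝ} (hw : 1 < w) :
    Continuous (fun ψ => Real.log (w^2 - 2*w*Real.cos ψ + 1)) := by
  apply Continuous.log (by continuity)
  exact fun ψ => (w_arg_pos hw _ (Real.neg_one_le_cos ψ) (Real.cos_le_one ψ)).ne'

lemma w_integral {w : ℝ} (hw : 1 < w) (a : ℝ) :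
    ∫ ψ in a..(a+2*π), Real.log (w^2 - 2*w*Real.cos ψ + 1) = 4*π*Real.log w := by
  have hw0 : (0:ℝ) < w := by linarith
  have hr0 : (0:ℝ) ≤ 1/w := by positivity
  have hr1 : 1/w < 1 := by rw [div_lt_one hw0]; exact hw
  have hpt : ∀ ψ : ℝ, Real.log (w^2 - 2*w*Real.cos ψ + 1)
      = Real.log (w^2) + Real.log (1 - 2*(1/w)*Real.cos ψ + (1/w)^2) := by
    intro ψ
    rw [← Real.log_mul (by positivity) (arg_pos hr0 hr1 ψ).ne']
    congr 1
    field_simp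
  rw [intervalIntegral.integral_congr (fun ψ _ => hpt ψ),
    intervalIntegral.integral_add (intervalIntegrable_const)
      ((cont_J hr0 hr1).intervalIntegrable _ _),
    Jint_full, Jint_eq_zero hr0 hr1, intervalIntegral.integral_const]
  have : a + 2*π - a = 2*π := by ring
  rw [this, smul_eq_mul, Real.log_pow]
  push_cast
  ring

lemma half_integrals {w : ℝ} (hw : 1 < w) (θ : ℝ) :
    (∫ φ in (0:ℝ)..π, Real.log (w^2 - 2*w*Real.cos (θ-φ) + 1))
      + (∫ φ in (0:ℝ)..π, Real.log (w^2 - 2*w*Real.cos (θ+φ) + 1)) = 4*π*Real.log w := by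
  have e1 : (∫ φ in (0:ℝ)..π, Real.log (w^2 - 2*w*Real.cos (θ-φ) + 1))
      = ∫ ψ in (θ-π)..θ, Real.log (w^2 - 2*w*Real.cos ψ + 1) := by
    rw [intervalIntegral.integral_comp_sub_left
      (fun ψ => Real.log (w^2 - 2*w*Real.cos ψ + 1)) θ, sub_zero]
  have e2 : (∫ φ in (0:ℝ)..π, Real.log (w^2 - 2*w*Real.cos (θ+φ) + 1))
      = ∫ ψ in θ..(θ+π), Real.log (w^2 - 2*w*Real.cos ψ + 1) := by
    rw [intervalIntegral.integral_comp_add_left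
      (fun ψ => Real.log (w^2 - 2*w*Real.cos ψ + 1)) θ, add_zero]
  rw [e1, e2, intervalIntegral.integral_add_adjacent_intervals
    ((cont_w hw).intervalIntegrable _ _) ((cont_w hw).intervalIntegrable _ _)]
  have : θ + π = (θ - π) + 2*π := by ring
  rw [this, w_integral hw]

lemma ellipse_factor {A : ℝ} (hA : 1 < A) (θ φ : ℝ) :
    (A*Real.cos θ - Real.cos φ)^2 + (Real.sqrt (A^2-1) * Real.sin θ)^2
      = ((A+Real.sqrt (A^2-1))^2 - 2*(A+Real.sqrt (A^2-1))*Real.cos (θ-φ) + 1)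
        * ((A+Real.sqrt (A^2-1))^2 - 2*(A+Real.sqrt (A^2-1))*Real.cos (θ+φ) + 1)
          / (4*(A+Real.sqrt (A^2-1))^2) := by
  set B := Real.sqrt (A^2-1) with hBdef
  have hB : B^2 = A^2 - 1 := Real.sq_sqrt (by nlinarith)
  have hB0 : 0 ≤ B := Real.sqrt_nonneg _
  have hw0 : (0:ℝ) < A + B := by linarith
  have h2Aw : (A+B)^2 + 1 = 2*A*(A+B) := by linear_combination hB
  have hs : Real.sin θ ^ 2 = 1 - Real.cos θ ^ 2 := Real.sin_sq θ
  have hs' : Real.sin φ ^ 2 = 1 - Real.cos φ ^ 2 := Real.sin_sq φ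
  rw [Real.cos_sub, Real.cos_add, eq_div_iff (by positivity)]
  linear_combination (4*(A+B)^2*(Real.sin θ^2)) * hB
    + (4*(A+B)^2*(A^2 - 1 + Real.sin φ^2)) * hs
    + (4*(A+B)^2*(1 - Real.cos θ^2)) * hs'
    - ((A+B)^2 + 1 + 2*A*(A+B) - 4*(A+B)*Real.cos θ*Real.cos φ) * h2Aw

lemma abs_z_sub (A1 B1 θ y : ℝ) :
    ‖((A1 * Real.cos θ : ℝ) : ℂ)
        + Complex.I * ((B1 * Real.sin θ : ℝ) : ℂ) - (y : ℂ)‖^2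
      = (A1*Real.cos θ - y)^2 + (B1*Real.sin θ)^2 := by
  rw [Complex.sq_norm, Complex.normSq_apply]
  simp [Complex.add_re, Complex.add_im, Complex.mul_re, Complex.mul_im,
    Complex.cos_ofReal_re, Complex.sin_ofReal_re]
  ring

lemma cos_image_Ioo : Real.cos '' (Set.Ioo 0 π) = Set.Ioo (-1 : ℝ) 1 := by
  ext y
  constructor
  · rintro ⟨φ, ⟨h0, hπ⟩, rfl⟩
    constructor
    · have := Real.strictAntiOn_cos (Set.mem_Icc.mpr ⟨le_of_lt h0, le_of_lt hπ⟩)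
        (Set.mem_Icc.mpr ⟨Real.pi_pos.le, le_refl π⟩) hπ
      simpa [Real.cos_pi] using this
    · have := Real.strictAntiOn_cos (Set.mem_Icc.mpr ⟨le_refl 0, Real.pi_pos.le⟩)
        (Set.mem_Icc.mpr ⟨le_of_lt h0, le_of_lt hπ⟩) h0
      simpa [Real.cos_zero] using this
  · rintro ⟨hy1, hy2⟩
    refine ⟨Real.arccos y, ⟨Real.arccos_pos.mpr hy2, ?_⟩, Real.cos_arccos hy1.le hy2.le⟩
    refine lt_of_le_of_ne (Real.arccos_le_pi y) (fun h => ?_)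
    have : Real.cos (Real.arccos y) = y := Real.cos_arccos hy1.le hy2.le
    rw [h, Real.cos_pi] at this
    linarith

lemma potential_eval {A : ℝ} (hA : 1 < A) (θ : ℝ) (z : ℂ)
    (hz : z = (A * Real.cos θ : ℝ) + Complex.I * (Real.sqrt (A ^ 2 - 1) * Real.sin θ : ℝ)) :
    (∫ y in (-1 : ℝ)..1,
        Real.log (1 / ‖z - (y : ℂ)‖) * (1 / (Real.pi * Real.sqrt (1 - y ^ 2))))
      = Real.log 2 - Real.log (A + Real.sqrt (A ^ 2 - 1)) := by
  set B := Real.sqrt (A^2-1) with hBdef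
  have hB0 : 0 ≤ B := Real.sqrt_nonneg _
  set w := A + B with hwdef
  have hw : 1 < w := by simp only [hwdef]; linarith
  have hw0 : (0:ℝ) < w := by linarith
  set F : ℝ → ℝ := fun y =>
    Real.log (1 / ‖z - (y : ℂ)‖) * (1 / (Real.pi * Real.sqrt (1 - y ^ 2))) with hF
  -- pointwise squared-abs identity
  have habs2 : ∀ φ : ℝ, (‖z - (Real.cos φ : ℂ)‖)^2
      = (w^2 - 2*w*Real.cos (θ-φ) + 1) * (w^2 - 2*w*Real.cos (θ+φ) + 1) / (4*w^2) := by
    intro φ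
    rw [hz, abs_z_sub]
    exact ellipse_factor hA θ φ
  have hPpos : ∀ ψ : ℝ, 0 < w^2 - 2*w*Real.cos ψ + 1 :=
    fun ψ => w_arg_pos hw _ (Real.neg_one_le_cos ψ) (Real.cos_le_one ψ)
  have habspos : ∀ φ : ℝ, 0 < ‖z - (Real.cos φ : ℂ)‖ := by
    intro φ
    rcases (norm_nonneg (z - (Real.cos φ : ℂ))).lt_or_eq with h | h
    · exact h
    · exfalso
      have h2 := habs2 φ
      rw [← h] at h2
      have h5 : 0 < (w^2 - 2*w*Real.cos (θ-φ) + 1) * (w^2 - 2*w*Real.cos (θ+φ) + 1) / (4*w^2) :=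
        div_pos (mul_pos (hPpos (θ-φ)) (hPpos (θ+φ))) (by positivity)
      simp at h2
      rw [← h2] at h5
      simp at h5
  -- pointwise log identity
  have hlog : ∀ φ : ℝ, Real.log (1 / ‖z - (Real.cos φ : ℂ)‖)
      = Real.log (2*w) - (1/2) * Real.log (w^2 - 2*w*Real.cos (θ-φ) + 1)
          - (1/2) * Real.log (w^2 - 2*w*Real.cos (θ+φ) + 1) := by
    intro φ
    have ha := habspos φ
    have h2 : Real.log ((‖z - (Real.cos φ : ℂ)‖)^2)
        = 2 * Real.log (‖z - (Real.cos φ : ℂ)‖) := by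
      rw [Real.log_pow]; push_cast; ring
    have h3 : Real.log ((‖z - (Real.cos φ : ℂ)‖)^2)
        = Real.log (w^2 - 2*w*Real.cos (θ-φ) + 1) + Real.log (w^2 - 2*w*Real.cos (θ+φ) + 1)
          - 2 * Real.log (2*w) := by
      rw [habs2 φ, Real.log_div (mul_pos (hPpos (θ-φ)) (hPpos (θ+φ))).ne' (by positivity : (0:ℝ) < 4*w^2).ne',
        Real.log_mul (hPpos (θ-φ)).ne' (hPpos (θ+φ)).ne']
      have : (4*w^2 : ℝ) = (2*w)^2 := by ring
      rw [this, Real.log_pow]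
      push_cast; ring
    rw [one_div, Real.log_inv]
    linarith [h2.symm.trans h3]
  -- substitution y = cos φ
  have hinj : Set.InjOn Real.cos (Set.Ioo 0 π) :=
    Real.injOn_cos.mono Set.Ioo_subset_Icc_self
  have hsub : (∫ y in (-1:ℝ)..1, F y)
      = ∫ φ in Set.Ioo (0:ℝ) π, |(-Real.sin φ)| • F (Real.cos φ) := by
    rw [intervalIntegral.integral_of_le (by norm_num), MeasureTheory.integral_Ioc_eq_integral_Ioo,
      ← cos_image_Ioo]
    exact MeasureTheory.integral_image_eq_integral_abs_deriv_smul measurableSet_Ioo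
      (fun φ _ => (Real.hasDerivAt_cos φ).hasDerivWithinAt) hinj F
  have hcongr : ∀ φ ∈ Set.Ioo (0:ℝ) π, |(-Real.sin φ)| • F (Real.cos φ)
      = π⁻¹ * Real.log (1 / ‖z - (Real.cos φ : ℂ)‖) := by
    intro φ ⟨h0, hπ⟩
    have hsin : 0 < Real.sin φ := Real.sin_pos_of_pos_of_lt_pi h0 hπ
    have hsqrt : Real.sqrt (1 - Real.cos φ ^ 2) = Real.sin φ := by
      rw [← Real.sin_sq, Real.sqrt_sq hsin.le]
    simp only [hF, hsqrt, smul_eq_mul, abs_neg, abs_of_pos hsin]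
    field_simp
  rw [hF] at hsub
  rw [hsub, MeasureTheory.setIntegral_congr_fun measurableSet_Ioo hcongr,
    ← MeasureTheory.integral_Ioc_eq_integral_Ioo,
    ← intervalIntegral.integral_of_le Real.pi_pos.le]
  -- now evaluate ∫ φ in 0..π, π⁻¹ * log (1/|z - cos φ|)
  have hcP : Continuous (fun φ => Real.log (w^2 - 2*w*Real.cos (θ-φ) + 1)) := by
    have : (fun φ => Real.log (w^2 - 2*w*Real.cos (θ-φ) + 1))
        = (fun ψ => Real.log (w^2 - 2*w*Real.cos ψ + 1)) ∘ (fun φ => θ - φ) := rfl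
    rw [this]; exact (cont_w hw).comp (by continuity)
  have hcQ : Continuous (fun φ => Real.log (w^2 - 2*w*Real.cos (θ+φ) + 1)) := by
    have : (fun φ => Real.log (w^2 - 2*w*Real.cos (θ+φ) + 1))
        = (fun ψ => Real.log (w^2 - 2*w*Real.cos ψ + 1)) ∘ (fun φ => θ + φ) := rfl
    rw [this]; exact (cont_w hw).comp (by continuity)
  rw [intervalIntegral.integral_const_mul]
  rw [intervalIntegral.integral_congr (fun φ _ => hlog φ)]
  rw [intervalIntegral.integral_sub ((intervalIntegrable_const.sub
      ((hcP.intervalIntegrable _ _).const_mul _)))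
      ((hcQ.intervalIntegrable _ _).const_mul _),
    intervalIntegral.integral_sub intervalIntegrable_const
      ((hcP.intervalIntegrable _ _).const_mul _),
    intervalIntegral.integral_const,
    intervalIntegral.integral_const_mul, intervalIntegral.integral_const_mul]
  have hsum := half_integrals hw θ
  have hlog2w : Real.log (2*w) = Real.log 2 + Real.log w :=
    Real.log_mul two_ne_zero hw0.ne'
  have hπ : (π:ℝ) ≠ 0 := Real.pi_ne_zero
  have hπi : π⁻¹ * π = 1 := inv_mul_cancel₀ hπ
  rw [smul_eq_mul]
  linear_combination (-(1/2) * π⁻¹) * hsum + (Real.log 2 - Real.log w) * hπi + π⁻¹ * (π - 0) * hlog2w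

end ArcsineAux

open Real in
/-- **Lower bound for `U^{μ₀}(z) + t·log|z−ζ|` on the ellipse `E_A`.** For `A > 1`,
`t ∈ [0,1]`, `ζ ∈ [-1,1]` and `z = A·cos θ + i·√(A²−1)·sin θ` on the ellipse `E_A`,
`U^{μ₀}(z) + t·log|z−ζ| ≥ log 2 − log(A+√(A²−1)) + (t/2)·log(A²−1) + (t/2)·log(1−ζ²)`,
where `μ₀` is the arcsine measure and the last term is interpreted as `-∞` when `ζ = ±1`
(hence the inequality is stated in the extended reals). -/
theorem arcsine_potential_plus_log_ge_on_ellipse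
    (A t ζ θ : ℝ) (hA : 1 < A) (ht : t ∈ Set.Icc (0 : ℝ) 1) (hζ : ζ ∈ Set.Icc (-1 : ℝ) 1)
    (z : ℂ)
    (hz : z = (A * Real.cos θ : ℝ) + Complex.I * (Real.sqrt (A ^ 2 - 1) * Real.sin θ : ℝ)) :
    (((∫ y in (-1 : ℝ)..1,
          Real.log (1 / ‖z - (y : ℂ)‖) * (1 / (Real.pi * Real.sqrt (1 - y ^ 2))))
        + t * Real.log ‖z - (ζ : ℂ)‖ : ℝ) : EReal)
      ≥ ((Real.log 2 - Real.log (A + Real.sqrt (A ^ 2 - 1))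
            + t / 2 * Real.log (A ^ 2 - 1) : ℝ) : EReal)
          + ((t / 2 : ℝ) : EReal) * elog (1 - ζ ^ 2) := by
  obtain ⟨ht0, ht1⟩ := ht
  obtain ⟨hζ1, hζ2⟩ := hζ
  rw [potential_eval hA θ z hz]
  rcases eq_or_lt_of_le (by nlinarith : (0:ℝ) ≤ 1 - ζ^2) with hdeg | hpos
  · rw [elog, if_pos hdeg.symm]
    rcases eq_or_lt_of_le ht0 with ht0' | htpos
    · rw [← ht0']
      norm_num
    · rw [EReal.mul_bot_of_pos (by exact_mod_cast (by positivity : (0:ℝ) < t/2)), EReal.add_bot]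
      exact bot_le
  · rw [elog, if_neg hpos.ne']
    rw [← EReal.coe_mul, ← EReal.coe_add, ge_iff_le, EReal.coe_le_coe_iff]
    have hA2 : (0:ℝ) < A^2 - 1 := by nlinarith
    set B := Real.sqrt (A^2-1) with hBdef
    have hB : B^2 = A^2 - 1 := Real.sq_sqrt hA2.le
    have habs : ‖z - (ζ : ℂ)‖^2 = (A*Real.cos θ - ζ)^2 + (B*Real.sin θ)^2 := by
      rw [hz]; exact abs_z_sub A B θ ζ
    have hs : Real.sin θ ^ 2 = 1 - Real.cos θ ^ 2 := Real.sin_sq θ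
    have hge : (A^2-1) * (1-ζ^2) ≤ ‖z - (ζ : ℂ)‖^2 := by
      rw [habs]
      nlinarith [sq_nonneg (Real.cos θ - A*ζ)]
    have hlog2 : Real.log ((A^2-1) * (1-ζ^2)) ≤ 2 * Real.log (‖z - (ζ : ℂ)‖) := by
      have h1 := Real.log_le_log (mul_pos hA2 hpos) hge
      rwa [Real.log_pow, Nat.cast_ofNat] at h1
    rw [Real.log_mul hA2.ne' hpos.ne'] at hlog2
    have hmul : t/2 * (Real.log (A^2-1) + Real.log (1-ζ^2))
        ≤ t/2 * (2 * Real.log (‖z - (ζ : ℂ)‖)) :=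
      mul_le_mul_of_nonneg_left hlog2 (by positivity)
    linarith
end

section
/- Fix t ∈ (0,1) and set c_t = t·log t + (1−t)·log(1−t) and m_t = log 2 − ((1+t)/2)·log(1+t) − ((1−t)/2)·log(1−t). Then for every A > 1, −c_t + log 2 − log(A + √(A²−1)) + (t/2)·log(A²−1) ≤ m_t, with equality if and only if A = 1/√(1−t²). -/
private lemma log_concave_step {x t : ℝ} (hx : 0 < x) (ht0 : 0 < t) (ht1 : t < 1) :
    t * Real.log x ≤ Real.log (t * x + (1 - t)) := by
  have hm : 0 < t * x + (1 - t) := by nlinarith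
  have h1 := Real.log_le_sub_one_of_pos (div_pos hx hm)
  have h2 := Real.log_le_sub_one_of_pos (div_pos one_pos hm)
  rw [Real.log_div hx.ne' hm.ne'] at h1
  rw [Real.log_div one_ne_zero hm.ne', Real.log_one] at h2
  have e : t * (x / (t * x + (1 - t))) + (1 - t) * (1 / (t * x + (1 - t))) = 1 := by
    field_simp
  nlinarith [mul_le_mul_of_nonneg_left h1 ht0.le,
    mul_le_mul_of_nonneg_left h2 (by linarith : (0:ℝ) ≤ 1 - t)]

private lemma core_strict {t u s A : ℝ} (ht0 : 0 < t) (ht1 : t < 1)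
    (hu : 0 < u) (hu2 : u ^ 2 = 1 - t ^ 2)
    (hA : 1 < A) (hs : 0 < s) (hs2 : s ^ 2 = A ^ 2 - 1)
    (hne : A ≠ 1 / u) :
    t * Real.log s - Real.log (A + s) < t * Real.log (t / u) - Real.log ((1 + t) / u) := by
  have hA0 : 0 < A := by linarith
  have htus : t ≠ u * s := by
    intro h
    apply hne
    have hA2 : u ^ 2 * A ^ 2 = 1 := by
      linear_combination (-(u^2)) * hs2 + hu2 + (-(t + u*s)) * h
    have h3 : (u * A - 1) * (u * A + 1) = 0 := by linear_combination hA2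
    rcases mul_eq_zero.1 h3 with h4 | h4
    · have : A * u = 1 := by linarith
      exact eq_one_div_of_mul_eq_one_left this
    · nlinarith [mul_pos hu hA0]
  have hsq : 0 < (t - u * s) ^ 2 :=
    lt_of_le_of_ne (sq_nonneg _) ((pow_ne_zero 2 (sub_ne_zero.2 htus)).symm)
  -- Cauchy-Schwarz: t*s + u < A
  have hcs : t * s + u < A := by
    nlinarith [hsq, mul_pos ht0 hs, mul_pos (add_pos (mul_pos ht0 hs) hu) hA0]
  -- concavity step with x = s*u/t
  set x : ℝ := s * u / t with hxdef
  have hx : 0 < x := div_pos (mul_pos hs hu) ht0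
  have hstep := log_concave_step hx ht0 ht1
  have htx : t * x = s * u := by rw [hxdef]; field_simp
  rw [htx] at hstep
  have hm : 0 < s * u + (1 - t) := by nlinarith [mul_pos hs hu]
  -- strict middle inequality
  have hmid : s * u + (1 - t) < (A + s) * u / (1 + t) := by
    rw [lt_div_iff₀ (by linarith : (0:ℝ) < 1 + t)]
    nlinarith [mul_lt_mul_of_pos_left hcs hu]
  have hlog := Real.log_lt_log hm hmid
  -- expand logs
  have hAs : 0 < A + s := by linarith
  have hx_log : Real.log x = Real.log s + Real.log u - Real.log t := by
    rw [hxdef, Real.log_div (mul_pos hs hu).ne' ht0.ne', Real.log_mul hs.ne' hu.ne']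
  have hrhs_log : Real.log ((A + s) * u / (1 + t))
      = Real.log (A + s) + Real.log u - Real.log (1 + t) := by
    rw [Real.log_div (mul_pos hAs hu).ne' (by linarith : (1:ℝ) + t ≠ 0),
      Real.log_mul hAs.ne' hu.ne']
  have htu_log : Real.log (t / u) = Real.log t - Real.log u :=
    Real.log_div ht0.ne' hu.ne'
  have h1tu_log : Real.log ((1 + t) / u) = Real.log (1 + t) - Real.log u :=
    Real.log_div (by linarith : (1:ℝ) + t ≠ 0) hu.ne'
  rw [hx_log] at hstep
  rw [hrhs_log] at hlog
  rw [htu_log, h1tu_log]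
  nlinarith [hstep, hlog]

private lemma core_eq {t u s A : ℝ} (ht0 : 0 < t) (ht1 : t < 1)
    (hu : 0 < u) (hu2 : u ^ 2 = 1 - t ^ 2)
    (hA : 1 < A) (hs : 0 < s) (hs2 : s ^ 2 = A ^ 2 - 1)
    (heq : A = 1 / u) :
    t * Real.log s - Real.log (A + s) = t * Real.log (t / u) - Real.log ((1 + t) / u) := by
  have huA : u * A = 1 := by rw [heq]; field_simp
  have h4 : (u * s - t) * (u * s + t) = 0 := by
    linear_combination u ^ 2 * hs2 - hu2 + (u * A + 1) * huA
  have hus : u * s = t := by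
    rcases mul_eq_zero.1 h4 with h2 | h2
    · linarith
    · nlinarith [mul_pos hu hs]
  have hstu : s = t / u := by
    rw [eq_div_iff hu.ne']; linear_combination hus
  have hAseq : A + s = (1 + t) / u := by
    rw [heq, hstu]; ring
  rw [hAseq, hstu]

/-- **Optimization over the ellipse parameter.** For `t ∈ (0,1)`, the function
`A ↦ −c_t + log 2 − log(A+√(A²−1)) + (t/2)·log(A²−1)` on `(1,∞)` is bounded above by
`m_t = log 2 − ((1+t)/2)·log(1+t) − ((1−t)/2)·log(1−t)`, with equality exactly at
`A = 1/√(1−t²)`; here `c_t = t·log t + (1−t)·log(1−t)`. -/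
theorem ellipse_bound_optimal (t : ℝ) (ht : t ∈ Set.Ioo (0 : ℝ) 1) (A : ℝ) (hA : 1 < A) :
    -(t * Real.log t + (1 - t) * Real.log (1 - t)) + Real.log 2
        - Real.log (A + Real.sqrt (A ^ 2 - 1)) + t / 2 * Real.log (A ^ 2 - 1)
      ≤ Real.log 2 - (1 + t) / 2 * Real.log (1 + t) - (1 - t) / 2 * Real.log (1 - t)
    ∧ (-(t * Real.log t + (1 - t) * Real.log (1 - t)) + Real.log 2
          - Real.log (A + Real.sqrt (A ^ 2 - 1)) + t / 2 * Real.log (A ^ 2 - 1)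
        = Real.log 2 - (1 + t) / 2 * Real.log (1 + t) - (1 - t) / 2 * Real.log (1 - t)
      ↔ A = 1 / Real.sqrt (1 - t ^ 2)) := by
  obtain ⟨ht0, ht1⟩ := ht
  have h1t2 : (0:ℝ) < 1 - t ^ 2 := by nlinarith
  set u : ℝ := Real.sqrt (1 - t ^ 2) with hudef
  have hu : 0 < u := Real.sqrt_pos.2 h1t2
  have hu2 : u ^ 2 = 1 - t ^ 2 := Real.sq_sqrt h1t2.le
  have hA21 : (0:ℝ) < A ^ 2 - 1 := by nlinarith
  set s : ℝ := Real.sqrt (A ^ 2 - 1) with hsdef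
  have hs : 0 < s := Real.sqrt_pos.2 hA21
  have hs2 : s ^ 2 = A ^ 2 - 1 := Real.sq_sqrt hA21.le
  -- log identities
  have e1 : t / 2 * Real.log (A ^ 2 - 1) = t * Real.log s := by
    rw [← hs2, Real.log_pow]; push_cast; ring
  have e2 : Real.log u = (Real.log (1 + t) + Real.log (1 - t)) / 2 := by
    rw [hudef, Real.log_sqrt h1t2.le,
      show (1:ℝ) - t ^ 2 = (1 + t) * (1 - t) by ring,
      Real.log_mul (by linarith) (by linarith)]
  have htu_log : Real.log (t / u) = Real.log t - Real.log u :=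
    Real.log_div ht0.ne' hu.ne'
  have h1tu_log : Real.log ((1 + t) / u) = Real.log (1 + t) - Real.log u :=
    Real.log_div (by linarith : (1:ℝ) + t ≠ 0) hu.ne'
  have hgap : (Real.log 2 - (1 + t) / 2 * Real.log (1 + t) - (1 - t) / 2 * Real.log (1 - t))
      - (-(t * Real.log t + (1 - t) * Real.log (1 - t)) + Real.log 2
          - Real.log (A + s) + t / 2 * Real.log (A ^ 2 - 1))
      = (t * Real.log (t / u) - Real.log ((1 + t) / u))
        - (t * Real.log s - Real.log (A + s)) := by
    rw [e1, htu_log, h1tu_log, e2]; ring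
  rcases eq_or_ne A (1 / u) with heq | hne
  · have hc := core_eq ht0 ht1 hu hu2 hA hs hs2 heq
    constructor
    · linarith
    · constructor
      · intro _; exact heq
      · intro _; linarith
  · have hc := core_strict ht0 ht1 hu hu2 hA hs hs2 hne
    constructor
    · linarith
    · constructor
      · intro h; exfalso; linarith
      · intro h; exact absurd h hne
end
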